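/- arXiv:2605.26107 — 11 statements merged into one kernel-verified Lean document; each statement's English description precedes it below -/
import Mathlib

section
/- Let N ≥ 2 and 1 ≤ C < N. For every nonuniform p ∈ Δ_N°, H_C(p) > H_C(u) = C/N. Thus the uniform vector u is the unique global minimizer of the LRU hit rate H_C on Δ_N°, and equivalently the LRU miss rate 1 − H_C(p) is uniquely maximized at u on Δ_N°. -/
open Finset

/-- The exact stationary LRU hit rate of a cache of capacity `C` under the
independent reference model with popularity vector `p`, given by the
residual-subset formula. -/
noncomputable def hitRate (N C : ℕ) (p : Fin N → ℝ) : ℝ :=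
  ∑ m ∈ Finset.Icc (N - C + 1) N,
    (-1 : ℝ) ^ (m - (N - C + 1)) * ((m - 2).choose (m - (N - C + 1)) : ℝ) *
      ∑ R ∈ (Finset.univ : Finset (Fin N)).powersetCard m,
        (∑ i ∈ R, p i ^ 2) / (∑ i ∈ R, p i)

/-!
An LRU cache of capacity `C` holds the `C` items at the top of the move-to-front list. Let `e j`
be the stationary expected popularity of the item at depth `j` of that list. A truncated Möbius
inversion over subsets turns the residual-subset formula into `H_C(p) = e 0 + ⋯ + e (C - 1)`,
while `e 0 + ⋯ + e (N - 1) = ∑ i, p i = 1`. Given the set `A` of the top `j` items, the items at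
depths `j` and `j + 1` are the first and second size-biased draws without replacement from `Aᶜ`,
and the second draw is lighter on average, strictly unless `p` is constant on `Aᶜ`. So `e` is
non-increasing, strictly decreasing at every step when `p` is nonuniform, and the first `C` of its
`N` values average strictly more than all of them: `H_C(p) > C / N`. For uniform `p` every
`e j` equals `1 / N`.
-/

section Subsets

variable {α M R : Type*} [AddCommMonoid M]

lemma sum_range_sum_powersetCard (s : Finset α) (C : ℕ) (f : ℕ → Finset α → M) :
    ∑ j ∈ range C, ∑ A ∈ powersetCard j s, f j A = ∑ A ∈ s.powerset with #A < C, f #A A := by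
  rw [← sum_fiberwise_of_maps_to (g := card) fun A hA => mem_range.2 (mem_filter.1 hA).2]
  refine sum_congr rfl fun j hj => ?_
  rw [powersetCard_eq_filter, filter_filter]
  refine sum_congr (filter_congr fun A _ => by rw [mem_range] at hj; omega) fun A hA => ?_
  rw [(mem_filter.1 hA).2.2]

variable [DecidableEq α]

lemma sum_powerset_sum_powerset_comm (s : Finset α) (f : Finset α → Finset α → M) :
    ∑ A ∈ s.powerset, ∑ B ∈ A.powerset, f A B = ∑ B ∈ s.powerset, ∑ A ∈ Icc B s, f A B :=
  sum_comm' fun A B => by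
    simp only [mem_powerset, mem_Icc]
    exact ⟨fun ⟨hAs, hBA⟩ => ⟨⟨hBA, hAs⟩, hBA.trans hAs⟩, fun ⟨⟨hBA, hAs⟩, _⟩ => ⟨hAs, hBA⟩⟩

lemma sum_Icc_sdiff_eq_sum_powerset {B s : Finset α} (h : B ⊆ s) (f : Finset α → M) :
    ∑ A ∈ Icc B s, f (A \ B) = ∑ D ∈ (s \ B).powerset, f D := by
  have hdisj : ∀ D ∈ (s \ B).powerset, Disjoint B D := fun D hD =>
    (subset_sdiff.1 (mem_powerset.1 hD)).2.symm
  rw [Icc_eq_image_powerset h, sum_image fun D hD D' hD' hDD' => by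
    rw [← union_sdiff_cancel_left (hdisj D hD), ← union_sdiff_cancel_left (hdisj D' hD')]
    exact congrArg (· \ B) hDD']
  exact sum_congr rfl fun D hD => by rw [union_sdiff_cancel_left (hdisj D hD)]

lemma sum_erase_sum_powerset_comm (A : Finset α) (f : α → Finset α → M) :
    ∑ a ∈ A, ∑ B ∈ (A.erase a).powerset, f a B = ∑ B ∈ A.powerset, ∑ a ∈ A \ B, f a B :=
  sum_comm' fun a B => by
    simp only [mem_powerset, mem_sdiff, subset_erase]
    tauto

lemma sum_powersetCard_succ_sum_erase [Fintype α] (j : ℕ) (f : Finset α → α → M) :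
    ∑ B ∈ powersetCard (j + 1) univ, ∑ a ∈ B, f (B.erase a) a
      = ∑ A ∈ powersetCard j univ, ∑ a ∈ Aᶜ, f A a := by
  rw [sum_sigma', sum_sigma']
  refine sum_nbij' (fun x => ⟨x.1.erase x.2, x.2⟩) (fun y => ⟨insert y.2 y.1, y.2⟩)
    ?_ ?_ ?_ ?_ fun _ _ => rfl
  · rintro ⟨B, a⟩ hx
    simp only [mem_sigma, mem_powersetCard_univ, mem_compl, mem_erase] at hx ⊢
    exact ⟨by rw [card_erase_of_mem hx.2, hx.1]; omega, fun h => h.1 rfl⟩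
  · rintro ⟨A, a⟩ hy
    simp only [mem_sigma, mem_powersetCard_univ, mem_compl] at hy ⊢
    exact ⟨by rw [card_insert_of_notMem hy.2, hy.1], mem_insert_self a A⟩
  · rintro ⟨B, a⟩ hx
    simp only [mem_sigma, mem_powersetCard_univ] at hx
    simp [insert_erase hx.2]
  · rintro ⟨A, a⟩ hy
    simp only [mem_sigma, mem_powersetCard_univ, mem_compl] at hy
    simp [erase_insert hy.2]

lemma sum_powersetCard_sum_compl_comm [Fintype α] (j : ℕ) (f : Finset α → α → M) :
    ∑ A ∈ powersetCard j univ, ∑ i ∈ Aᶜ, f A i = ∑ i, ∑ A ∈ powersetCard j {i}ᶜ, f A i :=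
  sum_comm' fun A i => by
    simp only [mem_powersetCard, mem_compl, subset_compl_singleton, subset_univ, mem_univ]
    tauto

variable [CommRing R]

lemma sum_powerset_neg_one_pow_card_sdiff {A : Finset α} (hA : A.Nonempty) :
    ∑ B ∈ A.powerset, (-1 : R) ^ #(A \ B) = 0 := by
  have key := congrArg (Int.cast : ℤ → R) (sum_powerset_neg_one_pow_card_of_nonempty hA)
  push_cast at key
  rw [← key]
  exact sum_nbij' (A \ ·) (A \ ·) (fun B _ => by simp) (fun B _ => by simp)
    (fun B hB => Finset.sdiff_sdiff_eq_self (mem_powerset.1 hB))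
    (fun B hB => Finset.sdiff_sdiff_eq_self (mem_powerset.1 hB)) fun B _ => rfl

lemma sum_Icc_neg_one_pow_card_sdiff {B s : Finset α} (h : B ⊆ s) :
    ∑ A ∈ Icc B s, (-1 : R) ^ #(A \ B) = if B = s then 1 else 0 := by
  have key := congrArg (Int.cast : ℤ → R) (sum_powerset_neg_one_pow_card (x := s \ B))
  push_cast at key
  rw [sum_Icc_sdiff_eq_sum_powerset h fun D => (-1 : R) ^ #D, key]
  exact if_congr (sdiff_eq_empty_iff_subset.trans ⟨h.antisymm, fun hBs => hBs ▸ subset_rfl⟩)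
    rfl rfl

lemma sum_Icc_card_lt_neg_one_pow_card_sdiff {B s : Finset α} {C : ℕ} (h : B ⊆ s)
    (hC : C ≤ #s) :
    ∑ A ∈ Icc B s with #A < C, (-1 : R) ^ #(A \ B)
      = if #B < C then (-1) ^ (C - 1 - #B) * ((#s - 1 - #B).choose (C - 1 - #B) : R) else 0 := by
  have hcard : ∀ A ∈ Icc B s, #A = #B + #(A \ B) := fun A hA => by
    rw [card_sdiff_of_subset (mem_Icc.1 hA).1]
    have := card_le_card (mem_Icc.1 hA).1
    omega
  rw [sum_filter, sum_congr rfl fun A hA => by rw [hcard A hA],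
    sum_Icc_sdiff_eq_sum_powerset h fun D => if #B + #D < C then (-1 : R) ^ #D else 0,
    sum_powerset_apply_card fun t => if #B + t < C then (-1 : R) ^ t else 0,
    card_sdiff_of_subset h]
  simp only [smul_ite, smul_zero, ← sum_filter]
  split_ifs with hBC
  · obtain ⟨m, hm⟩ : ∃ m, C = #B + m + 1 := ⟨C - 1 - #B, by omega⟩
    obtain ⟨k, hk⟩ : ∃ k, #s - #B = k + 1 := ⟨#s - 1 - #B, by omega⟩
    have hrange : {t ∈ range (#s - #B + 1) | #B + t < C} = range (m + 1) := by
      ext t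
      simp only [mem_filter, mem_range]
      omega
    have key := congrArg (Int.cast : ℤ → R)
      (Int.alternating_sum_range_choose_eq_choose (n := k) (m := m))
    push_cast at key
    rw [hrange, hk, show C - 1 - #B = m by omega, show #s - 1 - #B = k by omega, ← key]
    exact sum_congr rfl fun t _ => by rw [nsmul_eq_mul, mul_comm]
  · exact sum_eq_zero fun t ht => by simp only [mem_filter] at ht; omega

lemma sum_powerset_sum_powerset_neg_one_pow_mul (s : Finset α) (g : Finset α → R) :
    ∑ A ∈ s.powerset, ∑ B ∈ A.powerset, (-1) ^ #(A \ B) * g B = g s := by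
  simp only [sum_powerset_sum_powerset_comm s, ← sum_mul]
  rw [sum_congr rfl fun B hB => by rw [sum_Icc_neg_one_pow_card_sdiff (mem_powerset.1 hB)]]
  simp

lemma sum_powerset_card_lt_sum_powerset_neg_one_pow_mul {s : Finset α} {C : ℕ} (hC : C ≤ #s)
    (g : Finset α → R) :
    ∑ A ∈ s.powerset with #A < C, ∑ B ∈ A.powerset, (-1) ^ #(A \ B) * g B
      = ∑ B ∈ s.powerset with #B < C,
          (-1) ^ (C - 1 - #B) * ((#s - 1 - #B).choose (C - 1 - #B) : R) * g B := by
  have hcut : ∀ A : Finset α, (if #A < C then ∑ B ∈ A.powerset, (-1) ^ #(A \ B) * g B else 0)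
      = ∑ B ∈ A.powerset, (if #A < C then (-1 : R) ^ #(A \ B) else 0) * g B := fun A => by
    split_ifs <;> simp
  rw [sum_filter, sum_congr rfl fun A _ => hcut A, sum_powerset_sum_powerset_comm, sum_filter]
  refine sum_congr rfl fun B hB => ?_
  rw [← sum_mul, ← sum_filter, sum_Icc_card_lt_neg_one_pow_card_sdiff (mem_powerset.1 hB) hC,
    ite_mul, zero_mul]

end Subsets

section SizeBiasedDraws

variable {α : Type*} [DecidableEq α] {T : Finset α} {p : α → ℝ}

lemma sum_erase_pos (hp : ∀ i ∈ T, 0 < p i) (hT : 1 < #T) (a : α) :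
    0 < ∑ b ∈ T.erase a, p b := by
  refine sum_pos (fun b hb => hp b (mem_of_mem_erase hb)) ?_
  rw [← card_pos]
  have := pred_card_le_card_erase (s := T) (a := a)
  omega

/-- `∑ a ∈ T, p a ^ 2` and the subtracted sum are, after dividing by `∑ a ∈ T, p a`, the mean
weights of the first and of the second size-biased draw without replacement from `T`. -/
lemma two_mul_sum_sq_sub_sum_mul_div_erase (hp : ∀ i ∈ T, 0 < p i) (hT : 1 < #T) :
    2 * (∑ a ∈ T, p a ^ 2 - ∑ a ∈ T, p a * ((∑ b ∈ T.erase a, p b ^ 2) / ∑ b ∈ T.erase a, p b))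
      = ∑ a ∈ T, ∑ b ∈ T, p a * p b * (p a - p b) ^ 2
          / ((∑ c ∈ T.erase a, p c) * ∑ c ∈ T.erase b, p c) := by
  set d : α → ℝ := fun a => ∑ c ∈ T.erase a, p c
  have hd_pos : ∀ a, 0 < d a := sum_erase_pos hp hT
  have hd_sub : ∀ a ∈ T, d a = ∑ c ∈ T, p c - p a := fun a ha => sum_erase_eq_sub ha
  have hfirst : ∑ a ∈ T, p a ^ 2 - ∑ a ∈ T, p a * ((∑ b ∈ T.erase a, p b ^ 2) / d a)
      = ∑ a ∈ T, ∑ b ∈ T, p a * p b * (p a - p b) / d a := by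
    rw [← sum_sub_distrib]
    refine sum_congr rfl fun a ha => ?_
    have hpair : ∑ b ∈ T, p a * p b * (p a - p b)
        = p a * (p a * ∑ b ∈ T, p b - ∑ b ∈ T, p b ^ 2) := by
      rw [mul_sub, mul_sum, mul_sum, mul_sum, ← sum_sub_distrib]
      exact sum_congr rfl fun b _ => by ring
    have hda := hd_pos a
    rw [hd_sub a ha] at hda ⊢
    rw [sum_erase_eq_sub ha, ← sum_div, hpair]
    field_simp
    ring
  have hsymm : ∀ a ∈ T, ∀ b ∈ T, p a * p b * (p a - p b) / d a + p b * p a * (p b - p a) / d b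
      = p a * p b * (p a - p b) ^ 2 / (d a * d b) := by
    intro a ha b hb
    have hab : d b - d a = p a - p b := by rw [hd_sub a ha, hd_sub b hb]; ring
    field_simp [(hd_pos a).ne', (hd_pos b).ne']
    linear_combination (p a * p b * (p a - p b)) * hab
  rw [hfirst, two_mul]
  nth_rewrite 2 [sum_comm]
  rw [← sum_add_distrib]
  exact sum_congr rfl fun a ha => by
    rw [← sum_add_distrib]
    exact sum_congr rfl fun b hb => hsymm a ha b hb

lemma sum_mul_div_erase_eq (hp : ∀ i ∈ T, 0 < p i) (hT : 1 < #T)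
    (hc : ∀ a ∈ T, ∀ b ∈ T, p a = p b) :
    ∑ a ∈ T, p a * ((∑ b ∈ T.erase a, p b ^ 2) / ∑ b ∈ T.erase a, p b) = ∑ a ∈ T, p a ^ 2 := by
  have hgap := two_mul_sum_sq_sub_sum_mul_div_erase hp hT
  rw [sum_eq_zero fun a ha => sum_eq_zero fun b hb => by simp [hc a ha b hb]] at hgap
  linarith

lemma sum_mul_div_erase_lt (hp : ∀ i ∈ T, 0 < p i) {a b : α} (ha : a ∈ T) (hb : b ∈ T)
    (hab : p a ≠ p b) :
    ∑ a ∈ T, p a * ((∑ b ∈ T.erase a, p b ^ 2) / ∑ b ∈ T.erase a, p b) < ∑ a ∈ T, p a ^ 2 := by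
  have hT : 1 < #T := one_lt_card.2 ⟨a, ha, b, hb, fun h => hab (h ▸ rfl)⟩
  have hterm : ∀ x ∈ T, ∀ y ∈ T, 0 ≤ p x * p y * (p x - p y) ^ 2
      / ((∑ c ∈ T.erase x, p c) * ∑ c ∈ T.erase y, p c) := fun x hx y hy => by
    have := hp x hx; have := hp y hy
    have := sum_erase_pos hp hT x; have := sum_erase_pos hp hT y
    positivity
  have hpos : 0 < ∑ x ∈ T, ∑ y ∈ T, p x * p y * (p x - p y) ^ 2
      / ((∑ c ∈ T.erase x, p c) * ∑ c ∈ T.erase y, p c) := by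
    refine sum_pos' (fun x hx => sum_nonneg (hterm x hx)) ⟨a, ha, ?_⟩
    refine sum_pos' (hterm a ha) ⟨b, hb, ?_⟩
    have := hp a ha; have := hp b hb
    have := sum_erase_pos hp hT a; have := sum_erase_pos hp hT b
    have := sub_ne_zero.2 hab
    positivity
  linarith [two_mul_sum_sq_sub_sum_mul_div_erase hp hT]

lemma sum_mul_div_erase_le (hp : ∀ i ∈ T, 0 < p i) (hT : 1 < #T) :
    ∑ a ∈ T, p a * ((∑ b ∈ T.erase a, p b ^ 2) / ∑ b ∈ T.erase a, p b) ≤ ∑ a ∈ T, p a ^ 2 := by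
  by_cases hc : ∀ a ∈ T, ∀ b ∈ T, p a = p b
  · exact (sum_mul_div_erase_eq hp hT hc).le
  · push Not at hc
    obtain ⟨a, ha, b, hb, hab⟩ := hc
    exact (sum_mul_div_erase_lt hp ha hb hab).le

end SizeBiasedDraws

lemma eq_inv_card_of_forall_eq {ι : Type*} [Fintype ι] {p : ι → ℝ} (hc : ∀ a b, p a = p b)
    (hsum : ∑ i, p i = 1) : p = fun _ => (Fintype.card ι : ℝ)⁻¹ := by
  funext i
  rw [sum_congr rfl fun j _ => hc j i, sum_const, card_univ, nsmul_eq_mul] at hsum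
  exact eq_inv_of_mul_eq_one_right hsum

section StackModel

variable {ι : Type*} [Fintype ι] [DecidableEq ι] {p : ι → ℝ}

/-- For positive `p` summing to `1`, `stackCoeff p A * ∑ i ∈ Aᶜ, p i` is the stationary
probability that the `#A` most recently requested items are exactly those of `A`, and
`stackMean p j` is the expected popularity of the item at depth `j` of the LRU stack. -/
noncomputable def stackCoeff (p : ι → ℝ) (A : Finset ι) : ℝ :=
  ∑ B ∈ A.powerset, (-1) ^ #(A \ B) * (∑ i ∈ Bᶜ, p i)⁻¹

noncomputable def stackMean (p : ι → ℝ) (j : ℕ) : ℝ :=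
  ∑ A ∈ powersetCard j univ, stackCoeff p A * ∑ i ∈ Aᶜ, p i ^ 2

lemma sum_compl_pos (hp : ∀ i, 0 < p i) {A : Finset ι} (hA : A ≠ univ) :
    0 < ∑ i ∈ Aᶜ, p i :=
  sum_pos (fun i _ => hp i) (nonempty_iff_ne_empty.2 ((compl_eq_empty_iff A).not.2 hA))

lemma stackCoeff_mul_sum_compl (hp : ∀ i, 0 < p i) {A : Finset ι} (hne : A.Nonempty)
    (hA : A ≠ univ) :
    stackCoeff p A * ∑ i ∈ Aᶜ, p i = ∑ a ∈ A, stackCoeff p (A.erase a) * p a := by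
  have hsplit : ∀ B ∈ A.powerset, (-1 : ℝ) ^ #(A \ B) * (∑ i ∈ Bᶜ, p i)⁻¹ * ∑ i ∈ Aᶜ, p i
      = (-1) ^ #(A \ B) - (-1) ^ #(A \ B) * (∑ i ∈ Bᶜ, p i)⁻¹ * ∑ a ∈ A \ B, p a := by
    intro B hB
    have hBA := mem_powerset.1 hB
    have hpos := sum_compl_pos hp (ne_top_of_le_ne_top hA hBA)
    have hcompl : ∑ i ∈ Aᶜ, p i = ∑ i ∈ Bᶜ, p i - ∑ a ∈ A \ B, p a := by
      rw [← compl_sdiff_compl, sum_sdiff_eq_sub (compl_subset_compl.2 hBA)]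
      ring
    rw [hcompl]
    field_simp
  have hterm : ∀ B ∈ A.powerset,
      ∑ a ∈ A \ B, (-1 : ℝ) ^ #((A.erase a) \ B) * (∑ i ∈ Bᶜ, p i)⁻¹ * p a
        = -((-1) ^ #(A \ B) * (∑ i ∈ Bᶜ, p i)⁻¹ * ∑ a ∈ A \ B, p a) := by
    intro B _
    rw [mul_sum, ← sum_neg_distrib]
    refine sum_congr rfl fun a ha => ?_
    rw [erase_sdiff_comm, ← card_erase_add_one ha, pow_succ]
    ring
  rw [stackCoeff, sum_mul, sum_congr rfl hsplit, sum_sub_distrib,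
    sum_powerset_neg_one_pow_card_sdiff hne, zero_sub]
  simp only [stackCoeff, sum_mul]
  rw [sum_erase_sum_powerset_comm, ← sum_neg_distrib]
  exact sum_congr rfl fun B hB => (hterm B hB).symm

lemma stackCoeff_pos (hp : ∀ i, 0 < p i) {A : Finset ι} (hA : A ≠ univ) :
    0 < stackCoeff p A := by
  induction A using Finset.strongInduction with
  | H A ih =>
    rcases A.eq_empty_or_nonempty with rfl | hne
    · simpa [stackCoeff] using sum_pos (fun i _ => hp i) (nonempty_iff_ne_empty.2 hA.symm)
    · have hsum : 0 < ∑ a ∈ A, stackCoeff p (A.erase a) * p a :=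
        sum_pos (fun a ha => mul_pos (ih _ (erase_ssubset ha)
          (ne_top_of_le_ne_top hA (erase_subset a A))) (hp a)) hne
      rw [← stackCoeff_mul_sum_compl hp hne hA] at hsum
      exact pos_of_mul_pos_left hsum (sum_compl_pos hp hA).le

lemma stackMean_succ (hp : ∀ i, 0 < p i) {j : ℕ} (hj : j + 1 < Fintype.card ι) :
    stackMean p (j + 1) = ∑ A ∈ powersetCard j univ, stackCoeff p A *
      ∑ a ∈ Aᶜ, p a * ((∑ b ∈ Aᶜ.erase a, p b ^ 2) / ∑ b ∈ Aᶜ.erase a, p b) := by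
  have hstep : ∀ B ∈ powersetCard (j + 1) univ, stackCoeff p B * ∑ i ∈ Bᶜ, p i ^ 2
      = ∑ a ∈ B, stackCoeff p (B.erase a) * (p a *
          ((∑ b ∈ (B.erase a)ᶜ.erase a, p b ^ 2) / ∑ b ∈ (B.erase a)ᶜ.erase a, p b)) := by
    intro B hB
    have hcard := mem_powersetCard_univ.1 hB
    have hB_ne : B ≠ univ := fun h => by rw [h, card_univ] at hcard; omega
    have hpos := sum_compl_pos hp hB_ne
    calc stackCoeff p B * ∑ i ∈ Bᶜ, p i ^ 2
        = stackCoeff p B * (∑ i ∈ Bᶜ, p i) * ((∑ i ∈ Bᶜ, p i ^ 2) / ∑ i ∈ Bᶜ, p i) := by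
          field_simp
      _ = _ := by
          rw [stackCoeff_mul_sum_compl hp (card_pos.1 (by omega)) hB_ne, sum_mul]
          refine sum_congr rfl fun a ha => ?_
          rw [← compl_insert, insert_erase ha, mul_assoc]
  rw [stackMean, sum_congr rfl hstep, sum_powersetCard_succ_sum_erase j
    fun A a => stackCoeff p A * (p a * ((∑ b ∈ Aᶜ.erase a, p b ^ 2) / ∑ b ∈ Aᶜ.erase a, p b))]
  simp only [mul_sum]

lemma one_lt_card_compl {j : ℕ} {A : Finset ι} (hA : A ∈ powersetCard j univ)
    (hj : j + 1 < Fintype.card ι) : 1 < #Aᶜ := by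
  rw [card_compl, mem_powersetCard_univ.1 hA]
  omega

lemma ne_univ_of_one_lt_card_compl {A : Finset ι} (hA : 1 < #Aᶜ) : A ≠ univ := by
  rintro rfl
  simp at hA

lemma stackMean_succ_le (hp : ∀ i, 0 < p i) {j : ℕ} (hj : j + 1 < Fintype.card ι) :
    stackMean p (j + 1) ≤ stackMean p j := by
  rw [stackMean_succ hp hj, stackMean]
  refine sum_le_sum fun A hA => ?_
  have hA' := one_lt_card_compl hA hj
  exact mul_le_mul_of_nonneg_left (sum_mul_div_erase_le (fun i _ => hp i) hA')
    (stackCoeff_pos hp (ne_univ_of_one_lt_card_compl hA')).le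

lemma stackMean_succ_lt (hp : ∀ i, 0 < p i) {j : ℕ} (hj : j + 1 < Fintype.card ι) {a b : ι}
    (hab : p a ≠ p b) : stackMean p (j + 1) < stackMean p j := by
  have hab' : a ≠ b := fun h => hab (h ▸ rfl)
  obtain ⟨A, hAsub, hAcard⟩ := exists_subset_card_eq (s := univ \ {a, b}) (n := j) (by
    rw [card_sdiff_of_subset (subset_univ _), card_univ, card_pair hab']
    omega)
  have hA : A ∈ powersetCard j univ := mem_powersetCard_univ.2 hAcard
  have ha : a ∈ Aᶜ := mem_compl.2 fun h => by simpa using hAsub h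
  have hb : b ∈ Aᶜ := mem_compl.2 fun h => by simpa using hAsub h
  rw [stackMean_succ hp hj, stackMean]
  refine sum_lt_sum (fun B hB => ?_) ⟨A, hA, ?_⟩
  · have hB' := one_lt_card_compl hB hj
    exact mul_le_mul_of_nonneg_left (sum_mul_div_erase_le (fun i _ => hp i) hB')
      (stackCoeff_pos hp (ne_univ_of_one_lt_card_compl hB')).le
  · exact mul_lt_mul_of_pos_left (sum_mul_div_erase_lt (fun i _ => hp i) ha hb hab)
      (stackCoeff_pos hp (ne_univ_of_one_lt_card_compl (one_lt_card_compl hA hj)))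

lemma stackMean_succ_eq (hp : ∀ i, 0 < p i) {j : ℕ} (hj : j + 1 < Fintype.card ι)
    (hc : ∀ a b, p a = p b) : stackMean p (j + 1) = stackMean p j := by
  rw [stackMean_succ hp hj, stackMean]
  exact sum_congr rfl fun A hA => by
    rw [sum_mul_div_erase_eq (fun i _ => hp i) (one_lt_card_compl hA hj) fun a _ b _ => hc a b]

lemma sum_powersetCard_mul_sum_compl_sq (j : ℕ) (f : Finset ι → ℝ) :
    ∑ A ∈ powersetCard j univ, f A * ∑ i ∈ Aᶜ, p i ^ 2
      = ∑ i, p i ^ 2 * ∑ A ∈ powersetCard j {i}ᶜ, f A := by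
  simp only [mul_sum]
  rw [sum_powersetCard_sum_compl_comm j fun A i => f A * p i ^ 2]
  exact sum_congr rfl fun i _ => sum_congr rfl fun A _ => mul_comm _ _

lemma sum_range_stackMean (hp : ∀ i, p i ≠ 0) :
    ∑ j ∈ range (Fintype.card ι), stackMean p j = ∑ i, p i := by
  simp only [stackMean, sum_powersetCard_mul_sum_compl_sq]
  rw [sum_comm]
  refine sum_congr rfl fun i _ => ?_
  have hsmall : ∀ A ∈ ({i}ᶜ : Finset ι).powerset, #A < Fintype.card ι := fun A hA => by
    have := card_le_card (mem_powerset.1 hA)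
    rw [card_compl, card_singleton] at this
    have := Fintype.card_pos_iff.2 ⟨i⟩
    omega
  rw [← mul_sum, sum_range_sum_powersetCard _ _ fun _ => stackCoeff p,
    filter_true_of_mem hsmall]
  simp only [stackCoeff]
  rw [sum_powerset_sum_powerset_neg_one_pow_mul, compl_compl, sum_singleton]
  field_simp [hp i]

lemma stackMean_const {c : ℝ} (hc : 0 < c) {j : ℕ} (hj : j < Fintype.card ι) :
    stackMean (fun _ : ι => c) j = c := by
  have hflat : ∀ k < Fintype.card ι,
      stackMean (fun _ : ι => c) k = stackMean (fun _ : ι => c) 0 := by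
    intro k hk
    induction k with
    | zero => rfl
    | succ k ih => rw [stackMean_succ_eq (fun _ => hc) hk fun _ _ => rfl, ih (by omega)]
  have htotal := sum_range_stackMean (p := fun _ : ι => c) fun _ => hc.ne'
  rw [sum_congr rfl fun k hk => hflat k (mem_range.1 hk), sum_const, sum_const, card_range,
    card_univ, nsmul_eq_mul, nsmul_eq_mul] at htotal
  rw [hflat j hj]
  exact mul_left_cancel₀ (Nat.cast_pos.2 (by omega)).ne' htotal

end StackModel

lemma hitRate_eq_sum_range {N C : ℕ} (hCN : C ≤ N) (p : Fin N → ℝ) :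
    hitRate N C p = ∑ j ∈ range C, (-1) ^ (C - 1 - j) * ((N - 2 - j).choose (C - 1 - j) : ℝ) *
      ∑ B ∈ powersetCard j univ, (∑ i ∈ Bᶜ, p i)⁻¹ * ∑ i ∈ Bᶜ, p i ^ 2 := by
  refine sum_nbij' (N - ·) (N - ·) ?_ ?_ ?_ ?_ fun m hm => ?_
  · intro m hm; simp only [mem_Icc, mem_range] at hm ⊢; omega
  · intro j hj; simp only [mem_Icc, mem_range] at hj ⊢; omega
  · intro m hm; rw [mem_Icc] at hm; omega
  · intro j hj; rw [mem_range] at hj; omega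
  rw [mem_Icc] at hm
  rw [show m - (N - C + 1) = C - 1 - (N - m) by omega, show m - 2 = N - 2 - (N - m) by omega]
  congr 1
  refine sum_nbij' (·ᶜ) (·ᶜ) ?_ ?_ (fun R _ => compl_compl R) (fun B _ => compl_compl B)
    fun R _ => by rw [compl_compl, div_eq_inv_mul]
  all_goals
    intro R hR
    rw [mem_powersetCard_univ] at hR ⊢
    rw [card_compl, Fintype.card_fin]
    omega

theorem hitRate_eq_sum_range_stackMean {N C : ℕ} (hCN : C < N) (p : Fin N → ℝ) :
    hitRate N C p = ∑ j ∈ range C, stackMean p j := by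
  have hmoebius : ∀ i : Fin N, ∑ j ∈ range C, ∑ A ∈ powersetCard j {i}ᶜ, stackCoeff p A
      = ∑ j ∈ range C, (-1) ^ (C - 1 - j) * ((N - 2 - j).choose (C - 1 - j) : ℝ) *
          ∑ B ∈ powersetCard j {i}ᶜ, (∑ x ∈ Bᶜ, p x)⁻¹ := fun i => by
    have hs : #({i}ᶜ : Finset (Fin N)) = N - 1 := by
      rw [card_compl, card_singleton, Fintype.card_fin]
    simp only [mul_sum]
    rw [sum_range_sum_powersetCard _ _ fun _ => stackCoeff p,
      sum_range_sum_powersetCard _ _ fun j B =>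
        (-1) ^ (C - 1 - j) * ((N - 2 - j).choose (C - 1 - j) : ℝ) * (∑ x ∈ Bᶜ, p x)⁻¹]
    simp only [stackCoeff]
    rw [sum_powerset_card_lt_sum_powerset_neg_one_pow_mul (by omega), hs,
      show N - 1 - 1 = N - 2 by omega]
  calc hitRate N C p
      = ∑ j ∈ range C, (-1) ^ (C - 1 - j) * ((N - 2 - j).choose (C - 1 - j) : ℝ) *
          ∑ i, p i ^ 2 * ∑ B ∈ powersetCard j {i}ᶜ, (∑ x ∈ Bᶜ, p x)⁻¹ := by
        simp only [hitRate_eq_sum_range hCN.le, sum_powersetCard_mul_sum_compl_sq]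
    _ = ∑ i, p i ^ 2 * ∑ j ∈ range C, ∑ A ∈ powersetCard j {i}ᶜ, stackCoeff p A := by
        simp only [hmoebius, mul_sum]
        rw [sum_comm]
        exact sum_congr rfl fun i _ => sum_congr rfl fun j _ => sum_congr rfl fun B _ => by ring
    _ = ∑ j ∈ range C, stackMean p j := by
        simp only [stackMean, sum_powersetCard_mul_sum_compl_sq]
        simp only [mul_sum]
        exact sum_comm

lemma hitRate_uniform {N C : ℕ} (hCN : C < N) :
    hitRate N C (fun _ => (N : ℝ)⁻¹) = C / N := by
  have hN : (0 : ℝ) < N := Nat.cast_pos.2 (by omega)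
  rw [hitRate_eq_sum_range_stackMean hCN, sum_congr rfl fun j hj =>
    stackMean_const (inv_pos.2 hN) (by rw [Fintype.card_fin]; exact (mem_range.1 hj).trans hCN),
    sum_const, card_range, nsmul_eq_mul, div_eq_mul_inv]

lemma mul_sum_range_lt_mul_sum_range {e : ℕ → ℝ} {C N : ℕ} (hC : 1 ≤ C) (hCN : C < N)
    (he : AntitoneOn e (Set.Iio N)) (hlt : e C < e (C - 1)) :
    (C : ℝ) * ∑ j ∈ range N, e j < N * ∑ j ∈ range C, e j := by
  have hhead : ∑ _j ∈ range C, e (C - 1) ≤ ∑ j ∈ range C, e j :=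
    sum_le_sum fun j hj => by
      rw [mem_range] at hj
      exact he (Set.mem_Iio.2 (by omega)) (Set.mem_Iio.2 (by omega)) (by omega)
  have htail : ∑ j ∈ Ico C N, e j ≤ ∑ _j ∈ Ico C N, e C :=
    sum_le_sum fun j hj => he (Set.mem_Iio.2 hCN) (Set.mem_Iio.2 (mem_Ico.1 hj).2)
      (mem_Ico.1 hj).1
  rw [sum_const, card_range, nsmul_eq_mul] at hhead
  rw [sum_const, Nat.card_Ico, nsmul_eq_mul] at htail
  rw [Nat.cast_sub hCN.le] at htail
  rw [← sum_range_add_sum_Ico e hCN.le]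
  have hgap : 0 < (C : ℝ) * (N - C) * (e (C - 1) - e C) :=
    mul_pos (mul_pos (Nat.cast_pos.2 (by omega)) (sub_pos.2 (Nat.cast_lt.2 hCN))) (sub_pos.2 hlt)
  linarith [mul_le_mul_of_nonneg_left htail (Nat.cast_nonneg C : (0 : ℝ) ≤ C),
    mul_le_mul_of_nonneg_left hhead (sub_pos.2 (Nat.cast_lt.2 hCN) : (0 : ℝ) < N - C).le]

theorem uniform_unique_minimizer_general (N C : ℕ) (hC1 : 1 ≤ C) (hCN : C < N)
    (p : Fin N → ℝ) (hppos : ∀ i, 0 < p i) (hpsum : ∑ i, p i = 1)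
    (hpu : p ≠ fun _ => (N : ℝ)⁻¹) :
    hitRate N C p > hitRate N C (fun _ => (N : ℝ)⁻¹) ∧
      hitRate N C (fun _ => (N : ℝ)⁻¹) = (C : ℝ) / N ∧
      1 - hitRate N C p < 1 - hitRate N C (fun _ => (N : ℝ)⁻¹) := by
  obtain ⟨a, b, hab⟩ : ∃ a b, p a ≠ p b := by
    by_contra! hconst
    exact hpu (by simpa using eq_inv_card_of_forall_eq hconst hpsum)
  have hanti : AntitoneOn (stackMean p) (Set.Iio N) :=
    antitoneOn_of_add_one_le Set.ordConnected_Iio fun j _ _ hj =>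
      stackMean_succ_le hppos (by simpa using hj)
  have hstrict : stackMean p C < stackMean p (C - 1) := by
    obtain ⟨k, rfl⟩ : ∃ k, C = k + 1 := ⟨C - 1, by omega⟩
    exact stackMean_succ_lt hppos (by simpa using hCN) hab
  have htotal : ∑ j ∈ range N, stackMean p j = 1 := by
    simpa [hpsum] using sum_range_stackMean fun i => (hppos i).ne'
  have hmean := mul_sum_range_lt_mul_sum_range hC1 hCN hanti hstrict
  rw [htotal, mul_one, ← hitRate_eq_sum_range_stackMean hCN] at hmean
  have hlt : (C : ℝ) / N < hitRate N C p := by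
    rw [div_lt_iff₀ (Nat.cast_pos.2 (by omega))]
    linarith
  have hu := hitRate_uniform (C := C) hCN
  exact ⟨hu ▸ hlt, hu, by linarith⟩

/-- Uniform popularity is the unique worst case: for every nonuniform
`p ∈ Δ_N°` one has `H_C(p) > H_C(u) = C/N`; hence the uniform vector `u`
is the unique global minimizer of the hit rate on `Δ_N°`, and the miss
rate `1 - H_C(p)` is uniquely maximized at `u`. -/
theorem uniform_unique_minimizer (N C : ℕ) (hN : 2 ≤ N) (hC1 : 1 ≤ C) (hCN : C < N)
    (p : Fin N → ℝ) (hppos : ∀ i, 0 < p i) (hpsum : ∑ i, p i = 1)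
    (hpu : p ≠ fun _ => (N : ℝ)⁻¹) :
    hitRate N C p > hitRate N C (fun _ => (N : ℝ)⁻¹) ∧
      hitRate N C (fun _ => (N : ℝ)⁻¹) = (C : ℝ) / N ∧
      1 - hitRate N C p < 1 - hitRate N C (fun _ => (N : ℝ)⁻¹) :=
  uniform_unique_minimizer_general N C hC1 hCN p hppos hpsum hpu
end

section
/- Let N ≥ 2 and 1 ≤ C < N, and set L = N − C + 1. For every p ∈ Δ_N° and every pair of indices 1 ≤ a < b ≤ N, the pair kernel K_{ab}^{(C)}(p) = N · Σ_{R ⊆ {1,…,N}, {a,b} ⊆ R, |R| ≥ L} (−1)^{|R|−L} binom(|R|−2, |R|−L) · ( 1/(|R| · p_R) + 1/(N · p_R²) ) is strictly positive. -/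
open Finset

section PairKernelAux
open Real MeasureTheory Set

private lemma keyA {ι : Type*} [DecidableEq ι] (x : ι → ℝ) (s : Finset ι) (k : ℕ) :
    ∑ U ∈ s.powerset, (-1:ℝ)^(U.card - k) * (U.card.choose k : ℝ) * ∏ i ∈ U, x i
    = ∑ T ∈ s.powerset,
        (if T.card = k then (∏ i ∈ T, x i) * ∏ i ∈ s \ T, (1 - x i) else 0) := by
  induction s using Finset.induction generalizing k with
  | empty => cases k <;> simp
  | @insert a s ha ih =>
      rw [sum_powerset_insert ha, sum_powerset_insert ha]
      have hnm : ∀ U ∈ s.powerset, a ∉ U := fun U hU h => ha (mem_powerset.mp hU h)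
      have hns : ∀ U ∈ s.powerset, a ∉ s \ U := fun U _ h => ha (mem_sdiff.mp h).1
      have hsd : ∀ U ∈ s.powerset, insert a s \ U = insert a (s \ U) := by
        intro U hU
        exact insert_sdiff_of_notMem _ (hnm U hU)
      have hsd2 : ∀ U ∈ s.powerset, insert a s \ insert a U = s \ U := by
        intro U hU
        ext i
        simp only [Finset.mem_sdiff, Finset.mem_insert]
        constructor
        · rintro ⟨h1 | h1, h2⟩
          · exact absurd (Or.inl h1) h2
          · exact ⟨h1, fun h => h2 (Or.inr h)⟩
        · rintro ⟨h1, h2⟩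
          exact ⟨Or.inr h1, fun h => by
            rcases h with h | h
            · exact ha (h ▸ h1)
            · exact h2 h⟩
      cases k with
      | zero =>
          have hL : ∑ U ∈ s.powerset,
              (-1:ℝ)^((insert a U).card - 0) * (((insert a U).card.choose 0 : ℕ) : ℝ) *
                ∏ i ∈ insert a U, x i
              = -(x a) * ∑ U ∈ s.powerset,
                  (-1:ℝ)^(U.card - 0) * ((U.card.choose 0 : ℕ) : ℝ) * ∏ i ∈ U, x i := by
            rw [mul_sum]
            refine sum_congr rfl fun U hU => ?_
            rw [card_insert_of_notMem (hnm U hU), prod_insert (hnm U hU)]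
            simp [pow_succ]
            ring
          have hR1 : ∑ T ∈ s.powerset,
              (if T.card = 0 then (∏ i ∈ T, x i) * ∏ i ∈ insert a s \ T, (1 - x i) else 0)
              = (1 - x a) * ∑ T ∈ s.powerset,
                  (if T.card = 0 then (∏ i ∈ T, x i) * ∏ i ∈ s \ T, (1 - x i) else 0) := by
            rw [mul_sum]
            refine sum_congr rfl fun T hT => ?_
            rw [hsd T hT, prod_insert (hns T hT)]
            split <;> ring
          have hR2 : ∑ T ∈ s.powerset,
              (if (insert a T).card = 0 then
                (∏ i ∈ insert a T, x i) * ∏ i ∈ insert a s \ insert a T, (1 - x i) else 0)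
              = 0 := by
            refine sum_eq_zero fun T hT => ?_
            rw [card_insert_of_notMem (hnm T hT)]
            simp
          rw [hL, hR1, hR2, ih 0]
          ring
      | succ k' =>
          have hL : ∑ U ∈ s.powerset,
              (-1:ℝ)^((insert a U).card - (k'+1)) * (((insert a U).card.choose (k'+1) : ℕ) : ℝ) *
                ∏ i ∈ insert a U, x i
              = -(x a) * (∑ U ∈ s.powerset,
                    (-1:ℝ)^(U.card - (k'+1)) * ((U.card.choose (k'+1) : ℕ) : ℝ) * ∏ i ∈ U, x i)
                + x a * (∑ U ∈ s.powerset,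
                    (-1:ℝ)^(U.card - k') * ((U.card.choose k' : ℕ) : ℝ) * ∏ i ∈ U, x i) := by
            rw [mul_sum, mul_sum, ← sum_add_distrib]
            refine sum_congr rfl fun U hU => ?_
            rw [card_insert_of_notMem (hnm U hU), prod_insert (hnm U hU)]
            rcases le_or_gt (k'+1) U.card with h | h
            · have e1 : U.card + 1 - (k'+1) = (U.card - (k'+1)) + 1 := by omega
              have e2 : U.card - k' = (U.card - (k'+1)) + 1 := by omega
              rw [e1, e2, Nat.choose_succ_succ' U.card k']
              push_cast
              ring
            · have e0 : U.card.choose (k'+1) = 0 := Nat.choose_eq_zero_of_lt h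
              have e0' : (U.card + 1).choose (k'+1) = U.card.choose k' := by
                rw [Nat.choose_succ_succ' U.card k', e0]; omega
              have e1 : U.card + 1 - (k'+1) = U.card - k' := by omega
              rw [e0, e0', e1]
              push_cast
              ring
          have hR1 : ∑ T ∈ s.powerset,
              (if T.card = k'+1 then (∏ i ∈ T, x i) * ∏ i ∈ insert a s \ T, (1 - x i) else 0)
              = (1 - x a) * ∑ T ∈ s.powerset,
                  (if T.card = k'+1 then (∏ i ∈ T, x i) * ∏ i ∈ s \ T, (1 - x i) else 0) := by
            rw [mul_sum]
            refine sum_congr rfl fun T hT => ?_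
            rw [hsd T hT, prod_insert (hns T hT)]
            split <;> ring
          have hR2 : ∑ T ∈ s.powerset,
              (if (insert a T).card = k'+1 then
                (∏ i ∈ insert a T, x i) * ∏ i ∈ insert a s \ insert a T, (1 - x i) else 0)
              = x a * ∑ T ∈ s.powerset,
                  (if T.card = k' then (∏ i ∈ T, x i) * ∏ i ∈ s \ T, (1 - x i) else 0) := by
            rw [mul_sum]
            refine sum_congr rfl fun T hT => ?_
            rw [card_insert_of_notMem (hnm T hT), prod_insert (hnm T hT), hsd2 T hT]
            by_cases h : T.card = k'
            · simp [h]
              ring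
            · have : ¬ (T.card + 1 = k' + 1) := by omega
              simp [h, this]
          rw [hL, hR1, hR2, ih k', ih (k'+1)]
          ring

private lemma keyB_nonneg {ι : Type*} [DecidableEq ι] (x : ι → ℝ) (s : Finset ι) (k : ℕ)
    (h0 : ∀ i ∈ s, 0 ≤ x i) (h1 : ∀ i ∈ s, x i ≤ 1) :
    0 ≤ ∑ T ∈ s.powerset,
        (if T.card = k then (∏ i ∈ T, x i) * ∏ i ∈ s \ T, (1 - x i) else 0) := by
  refine sum_nonneg fun T hT => ?_
  split
  · refine mul_nonneg (prod_nonneg fun i hi => h0 i (mem_powerset.mp hT hi))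
      (prod_nonneg fun i hi => by
        have := h1 i (mem_sdiff.mp hi).1
        linarith)
  · exact le_refl 0

private lemma keyB_pos {ι : Type*} [DecidableEq ι] (x : ι → ℝ) (s : Finset ι) (k : ℕ)
    (hk : k ≤ s.card) (h0 : ∀ i ∈ s, 0 < x i) (h1 : ∀ i ∈ s, x i < 1) :
    0 < ∑ T ∈ s.powerset,
        (if T.card = k then (∏ i ∈ T, x i) * ∏ i ∈ s \ T, (1 - x i) else 0) := by
  obtain ⟨T₀, hT₀s, hT₀c⟩ := Finset.exists_subset_card_eq hk
  refine sum_pos' (fun T hT => ?_) ⟨T₀, mem_powerset.mpr hT₀s, ?_⟩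
  · split
    · exact mul_nonneg (prod_nonneg fun i hi => (h0 i (mem_powerset.mp hT hi)).le)
        (prod_nonneg fun i hi => by have := h1 i (mem_sdiff.mp hi).1; linarith)
    · exact le_refl 0
  · rw [if_pos hT₀c]
    refine mul_pos (prod_pos fun i hi => h0 i (hT₀s hi))
      (prod_pos fun i hi => by have := h1 i (mem_sdiff.mp hi).1; linarith)

private lemma int_exp {c : ℝ} (hc : 0 < c) :
    ∫ t in Ioi (0:ℝ), Real.exp (-(c * t)) = 1 / c := by
  have h := Real.integral_rpow_mul_exp_neg_mul_Ioi (a := 1) one_pos hc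
  rw [Real.Gamma_one, mul_one, Real.rpow_one] at h
  rw [← h]
  refine setIntegral_congr_fun measurableSet_Ioi fun t ht => ?_
  rw [sub_self, Real.rpow_zero, one_mul]

private lemma int_texp {c : ℝ} (hc : 0 < c) :
    ∫ t in Ioi (0:ℝ), t * Real.exp (-(c * t)) = 1 / c ^ 2 := by
  have h := Real.integral_rpow_mul_exp_neg_mul_Ioi (a := 2) two_pos hc
  rw [Real.Gamma_two, mul_one] at h
  have h2 : ((1:ℝ)/c) ^ (2:ℝ) = 1 / c ^ 2 := by
    rw [show (2:ℝ) = ((2:ℕ):ℝ) by norm_num, Real.rpow_natCast, one_div, one_div, inv_pow]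
  rw [← h2, ← h]
  refine setIntegral_congr_fun measurableSet_Ioi fun t ht => ?_
  norm_num

private lemma integ_exp {c : ℝ} (hc : 0 < c) :
    IntegrableOn (fun t : ℝ => Real.exp (-(c * t))) (Ioi (0:ℝ)) := by
  simpa [neg_mul] using exp_neg_integrableOn_Ioi 0 hc

private lemma integ_texp {c : ℝ} (hc : 0 < c) :
    IntegrableOn (fun t : ℝ => t * Real.exp (-(c * t))) (Ioi (0:ℝ)) := by
  refine integrable_of_isBigO_exp_neg (half_pos hc) ?_ ?_
  · fun_prop
  · have h1 : Filter.Tendsto (fun u : ℝ => u ^ 1 * Real.exp (-u)) Filter.atTop (nhds 0) :=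
      tendsto_pow_mul_exp_neg_atTop_nhds_zero 1
    have h2 : Filter.Tendsto (fun t : ℝ => (c/2) * t) Filter.atTop Filter.atTop :=
      Filter.tendsto_id.const_mul_atTop (half_pos hc)
    have h3 : Filter.Tendsto (fun t : ℝ => (2/c) * (((c/2)*t) ^ 1 * Real.exp (-((c/2)*t))))
        Filter.atTop (nhds 0) := by
      simpa using ((h1.comp h2).const_mul (2/c))
    have h4 : (fun t : ℝ => (2/c) * (((c/2)*t) ^ 1 * Real.exp (-((c/2)*t))))
        = fun t : ℝ => t * Real.exp (-((c/2)*t)) := by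
      funext t
      field_simp
    rw [h4] at h3
    have h5 : (fun t : ℝ => t * Real.exp (-(c * t))) =
        fun t : ℝ => (t * Real.exp (-((c/2)*t))) * Real.exp (-(c/2) * t) := by
      funext t
      rw [mul_assoc, ← Real.exp_add]
      ring_nf
    rw [h5]
    simpa using (h3.isBigO_one ℝ).mul
      (Asymptotics.isBigO_refl (fun t : ℝ => Real.exp (-(c/2) * t)) Filter.atTop)

private lemma exp_q_split {ι : Type*} (U : Finset ι) (r : ι → ℝ) (c t : ℝ) :
    Real.exp (-((c + ∑ i ∈ U, r i) * t))
      = Real.exp (-(c * t)) * ∏ i ∈ U, Real.exp (-(r i * t)) := by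
  rw [← Real.exp_sum, ← Real.exp_add]
  congr 1
  have : ∑ i ∈ U, -(r i * t) = -((∑ i ∈ U, r i) * t) := by
    rw [sum_mul, ← sum_neg_distrib]
  rw [this]
  ring

lemma partB_pos {ι : Type*} [DecidableEq ι] (G : Finset ι) (k : ℕ) (hk : k ≤ G.card)
    (r : ι → ℝ) (hr : ∀ i ∈ G, 0 < r i) (c : ℝ) (hc : 0 < c) :
    0 < ∑ U ∈ G.powerset, (-1:ℝ)^(U.card - k) * (U.card.choose k : ℝ) *
        (1 / (c + ∑ i ∈ U, r i) ^ 2) := by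
  have hq : ∀ U ∈ G.powerset, 0 < c + ∑ i ∈ U, r i := fun U hU =>
    add_pos_of_pos_of_nonneg hc
      (sum_nonneg fun i hi => (hr i (mem_powerset.mp hU hi)).le)
  have hrw : ∑ U ∈ G.powerset, (-1:ℝ)^(U.card - k) * (U.card.choose k : ℝ) *
        (1 / (c + ∑ i ∈ U, r i) ^ 2)
      = ∫ t in Ioi (0:ℝ), ∑ U ∈ G.powerset, (-1:ℝ)^(U.card - k) * (U.card.choose k : ℝ) *
          (t * Real.exp (-((c + ∑ i ∈ U, r i) * t))) := by
    rw [integral_finset_sum _ (fun U hU =>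
      ((integ_texp (hq U hU)).const_mul ((-1:ℝ)^(U.card - k) * (U.card.choose k : ℝ))))]
    refine sum_congr rfl fun U hU => ?_
    rw [MeasureTheory.integral_const_mul, int_texp (hq U hU)]
  have hpos : ∀ t ∈ Ioi (0:ℝ),
      0 < ∑ U ∈ G.powerset, (-1:ℝ)^(U.card - k) * (U.card.choose k : ℝ) *
          (t * Real.exp (-((c + ∑ i ∈ U, r i) * t))) := by
    intro t ht
    rw [Set.mem_Ioi] at ht
    have e1 : ∀ U ∈ G.powerset, (-1:ℝ)^(U.card - k) * (U.card.choose k : ℝ) *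
          (t * Real.exp (-((c + ∑ i ∈ U, r i) * t)))
        = (t * Real.exp (-(c * t))) * ((-1:ℝ)^(U.card - k) * (U.card.choose k : ℝ) *
            ∏ i ∈ U, Real.exp (-(r i * t))) := by
      intro U hU
      rw [exp_q_split]
      ring
    rw [sum_congr rfl e1, ← mul_sum, keyA]
    refine mul_pos (mul_pos ht (Real.exp_pos _)) (keyB_pos _ _ _ hk ?_ ?_)
    · exact fun i _ => Real.exp_pos _
    · intro i hi
      rw [Real.exp_lt_one_iff]
      have := hr i hi
      nlinarith
  rw [hrw]
  rw [setIntegral_pos_iff_support_of_nonneg_ae]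
  · have hsupp : (Function.support fun t => ∑ U ∈ G.powerset,
        (-1:ℝ)^(U.card - k) * (U.card.choose k : ℝ) *
          (t * Real.exp (-((c + ∑ i ∈ U, r i) * t)))) ∩ Set.Ioi (0:ℝ) = Set.Ioi (0:ℝ) := by
      rw [Set.inter_eq_right]
      exact fun t ht => (hpos t ht).ne'
    rw [hsupp, Real.volume_Ioi]
    simp
  · refine Filter.eventually_of_mem (self_mem_ae_restrict measurableSet_Ioi) ?_
    exact fun t ht => (hpos t ht).le
  · exact integrable_finset_sum _ (fun U hU =>
      ((integ_texp (hq U hU)).const_mul _))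

private lemma partA_nonneg {ι : Type*} [DecidableEq ι] (G : Finset ι) (k : ℕ)
    (r : ι → ℝ) (hr : ∀ i ∈ G, 0 < r i) (c : ℝ) (hc : 0 < c) :
    0 ≤ ∑ U ∈ G.powerset, (-1:ℝ)^(U.card - k) * (U.card.choose k : ℝ) *
        (1 / (((U.card : ℝ) + 2) * (c + ∑ i ∈ U, r i))) := by
  have hq : ∀ U ∈ G.powerset, 0 < c + ∑ i ∈ U, r i := fun U hU =>
    add_pos_of_pos_of_nonneg hc
      (sum_nonneg fun i hi => (hr i (mem_powerset.mp hU hi)).le)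
  have hu2 : ∀ U : Finset ι, (0:ℝ) < (U.card : ℝ) + 2 := by
    intro U; positivity
  -- Step 1: represent the sum as an integral over t ∈ (0, ∞)
  have hrw : ∑ U ∈ G.powerset, (-1:ℝ)^(U.card - k) * (U.card.choose k : ℝ) *
        (1 / (((U.card : ℝ) + 2) * (c + ∑ i ∈ U, r i)))
      = ∫ t in Ioi (0:ℝ), ∑ U ∈ G.powerset,
          ((-1:ℝ)^(U.card - k) * (U.card.choose k : ℝ) / ((U.card : ℝ) + 2)) *
            Real.exp (-((c + ∑ i ∈ U, r i) * t)) := by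
    rw [integral_finset_sum _ (fun U hU => ((integ_exp (hq U hU)).const_mul _))]
    refine sum_congr rfl fun U hU => ?_
    rw [MeasureTheory.integral_const_mul, int_exp (hq U hU)]
    have := (hq U hU).ne'
    have := (hu2 U).ne'
    field_simp
  rw [hrw]
  refine setIntegral_nonneg measurableSet_Ioi fun t ht => ?_
  rw [Set.mem_Ioi] at ht
  -- Step 2: represent the t-integrand as an interval integral over v ∈ [0,1]
  have hiv : ∑ U ∈ G.powerset,
        ((-1:ℝ)^(U.card - k) * (U.card.choose k : ℝ) / ((U.card : ℝ) + 2)) *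
          Real.exp (-((c + ∑ i ∈ U, r i) * t))
      = ∫ v in (0:ℝ)..1, ∑ U ∈ G.powerset,
          (-1:ℝ)^(U.card - k) * (U.card.choose k : ℝ) *
            Real.exp (-((c + ∑ i ∈ U, r i) * t)) * v ^ (U.card + 1) := by
    rw [intervalIntegral.integral_finset_sum (fun U hU =>
      (Continuous.intervalIntegrable (by continuity) _ _))]
    refine sum_congr rfl fun U hU => ?_
    have : ∫ v in (0:ℝ)..1,
        (-1:ℝ)^(U.card - k) * (U.card.choose k : ℝ) *
          Real.exp (-((c + ∑ i ∈ U, r i) * t)) * v ^ (U.card + 1)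
        = (-1:ℝ)^(U.card - k) * (U.card.choose k : ℝ) *
          Real.exp (-((c + ∑ i ∈ U, r i) * t)) * ∫ v in (0:ℝ)..1, v ^ (U.card + 1) := by
      rw [← intervalIntegral.integral_const_mul]
    rw [this, integral_pow, one_pow, zero_pow (by omega), sub_zero]
    push_cast
    ring
  rw [hiv]
  refine intervalIntegral.integral_nonneg (by norm_num) fun v hv => ?_
  obtain ⟨hv0, hv1⟩ := hv
  -- Step 3: pointwise nonnegativity of the v-integrand via the key identity
  have e1 : ∀ U ∈ G.powerset,
      (-1:ℝ)^(U.card - k) * (U.card.choose k : ℝ) *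
          Real.exp (-((c + ∑ i ∈ U, r i) * t)) * v ^ (U.card + 1)
      = (Real.exp (-(c * t)) * v) * ((-1:ℝ)^(U.card - k) * (U.card.choose k : ℝ) *
          ∏ i ∈ U, (v * Real.exp (-(r i * t)))) := by
    intro U hU
    rw [exp_q_split, prod_mul_distrib, prod_const, pow_succ]
    ring
  rw [sum_congr rfl e1, ← mul_sum, keyA]
  refine mul_nonneg (mul_nonneg (Real.exp_pos _).le hv0)
    (keyB_nonneg _ _ _ (fun i _ => mul_nonneg hv0 (Real.exp_pos _).le) fun i hi => ?_)
  have h1 : Real.exp (-(r i * t)) ≤ 1 := by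
    rw [Real.exp_le_one_iff]
    have := hr i hi
    nlinarith
  calc v * Real.exp (-(r i * t)) ≤ 1 * 1 := by
        apply mul_le_mul hv1 h1 (Real.exp_pos _).le zero_le_one
    _ = 1 := by norm_num

end PairKernelAux

/-- The pair kernel
`K_{ab}^{(C)}(p) = N Σ_{R ⊇ {a,b}, |R| ≥ L} (-1)^{|R|-L} binom(|R|-2,|R|-L)
  (1/(|R| p_R) + 1/(N p_R²))` with `L = N - C + 1`. -/
noncomputable def pairKernel (N C : ℕ) (a b : Fin N) (p : Fin N → ℝ) : ℝ :=
  (N : ℝ) *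
    ∑ R ∈ (Finset.univ : Finset (Fin N)).powerset.filter
        (fun R => a ∈ R ∧ b ∈ R ∧ N - C + 1 ≤ R.card),
      (-1 : ℝ) ^ (R.card - (N - C + 1)) *
        ((R.card - 2).choose (R.card - (N - C + 1)) : ℝ) *
        (1 / ((R.card : ℝ) * ∑ i ∈ R, p i) + 1 / ((N : ℝ) * (∑ i ∈ R, p i) ^ 2))

/-- Strict positivity of the pair kernels: for every `p ∈ Δ_N°` and every
pair of indices `a < b`, `K_{ab}^{(C)}(p) > 0`. -/
theorem pairKernel_pos (N C : ℕ) (hN : 2 ≤ N) (hC1 : 1 ≤ C) (hCN : C < N)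
    (p : Fin N → ℝ) (hppos : ∀ i, 0 < p i) (hpsum : ∑ i, p i = 1)
    (a b : Fin N) (hab : a < b) :
    0 < pairKernel N C a b p := by
  have hab' : a ≠ b := ne_of_lt hab
  set k := N - C - 1 with hk
  have hL : N - C + 1 = k + 2 := by omega
  set G : Finset (Fin N) := ({a, b} : Finset (Fin N))ᶜ with hG
  have hGcard : G.card = N - 2 := by
    rw [hG, card_compl, card_pair hab', Fintype.card_fin]
  have hkG : k ≤ G.card := by omega
  have hcpos : 0 < p a + p b := by have := hppos a; have := hppos b; linarith
  have hrG : ∀ i ∈ G, 0 < p i := fun i _ => hppos i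
  -- reindex the sum over R to a sum over U = R \ {a, b}
  have h1 : ∑ R ∈ (Finset.univ : Finset (Fin N)).powerset.filter
        (fun R => a ∈ R ∧ b ∈ R ∧ N - C + 1 ≤ R.card),
      (-1 : ℝ) ^ (R.card - (N - C + 1)) *
        ((R.card - 2).choose (R.card - (N - C + 1)) : ℝ) *
        (1 / ((R.card : ℝ) * ∑ i ∈ R, p i) + 1 / ((N : ℝ) * (∑ i ∈ R, p i) ^ 2))
      = ∑ U ∈ G.powerset.filter (fun U => k ≤ U.card),
          (-1 : ℝ) ^ (U.card - k) * (U.card.choose k : ℝ) *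
            (1 / (((U.card : ℝ) + 2) * ((p a + p b) + ∑ i ∈ U, p i))
              + 1 / ((N : ℝ) * ((p a + p b) + ∑ i ∈ U, p i) ^ 2)) := by
    refine sum_nbij' (fun R => R \ {a, b}) (fun U => U ∪ {a, b}) ?_ ?_ ?_ ?_ ?_
    · intro R hR
      rw [mem_filter] at hR
      obtain ⟨-, haR, hbR, hcR⟩ := hR
      have hsub : ({a, b} : Finset (Fin N)) ⊆ R := by
        intro i hi
        rcases mem_insert.mp hi with h | h
        · exact h ▸ haR
        · exact (mem_singleton.mp h) ▸ hbR
      rw [mem_filter, Finset.mem_powerset]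
      constructor
      · intro i hi
        rw [hG, mem_compl]
        exact (mem_sdiff.mp hi).2
      · rw [card_sdiff_of_subset hsub, card_pair hab']
        omega
    · intro U hU
      rw [mem_filter, Finset.mem_powerset] at hU
      obtain ⟨hUG, hUc⟩ := hU
      have hdisj : Disjoint U ({a, b} : Finset (Fin N)) := by
        rw [disjoint_left]
        intro i hiU hiab
        have := hUG hiU
        rw [hG, mem_compl] at this
        exact this hiab
      rw [mem_filter, Finset.mem_powerset]
      refine ⟨subset_univ _, ?_, ?_, ?_⟩
      · exact mem_union_right _ (mem_insert_self a {b})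
      · exact mem_union_right _ (mem_insert_of_mem (mem_singleton_self b))
      · rw [card_union_of_disjoint hdisj, card_pair hab']
        omega
    · intro R hR
      rw [mem_filter] at hR
      obtain ⟨-, haR, hbR, -⟩ := hR
      have hsub : ({a, b} : Finset (Fin N)) ⊆ R := by
        intro i hi
        rcases mem_insert.mp hi with h | h
        · exact h ▸ haR
        · exact (mem_singleton.mp h) ▸ hbR
      exact sdiff_union_of_subset hsub
    · intro U hU
      rw [mem_filter, Finset.mem_powerset] at hU
      ext i
      simp only [mem_sdiff, mem_union, mem_insert, mem_singleton]
      constructor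
      · rintro ⟨h1 | h1, h2⟩
        · exact h1
        · exact absurd h1 h2
      · intro hi
        have := hU.1 hi
        rw [hG, mem_compl, mem_insert, mem_singleton] at this
        push_neg at this
        exact ⟨Or.inl hi, fun h => by
          rcases h with h | h
          · exact this.1 h
          · exact this.2 h⟩
    · intro R hR
      rw [mem_filter] at hR
      obtain ⟨-, haR, hbR, hcR⟩ := hR
      have hsub : ({a, b} : Finset (Fin N)) ⊆ R := by
        intro i hi
        rcases mem_insert.mp hi with h | h
        · exact h ▸ haR
        · exact (mem_singleton.mp h) ▸ hbR
      have hcu : (R \ {a, b}).card = R.card - 2 := by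
        rw [card_sdiff_of_subset hsub, card_pair hab']
      have hR2 : k + 2 ≤ R.card := by omega
      have hsum : ∑ i ∈ R, p i = (p a + p b) + ∑ i ∈ R \ {a, b}, p i := by
        rw [← Finset.sum_sdiff hsub, Finset.sum_pair hab']
        ring
      have he : R.card - (N - C + 1) = (R \ {a, b}).card - k := by omega
      have hch : (R.card - 2).choose (R.card - (N - C + 1))
          = (R \ {a, b}).card.choose k := by
        rw [he, hcu, Nat.choose_symm (by omega)]
      have hcc : (R.card : ℝ) = ((R \ {a, b}).card : ℝ) + 2 := by
        rw [hcu]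
        have : 2 ≤ R.card := by omega
        push_cast [Nat.cast_sub this]
        ring
      rw [hch, he, hsum, hcc]
  -- drop the filter
  have h2 : ∑ U ∈ G.powerset.filter (fun U => k ≤ U.card),
          (-1 : ℝ) ^ (U.card - k) * (U.card.choose k : ℝ) *
            (1 / (((U.card : ℝ) + 2) * ((p a + p b) + ∑ i ∈ U, p i))
              + 1 / ((N : ℝ) * ((p a + p b) + ∑ i ∈ U, p i) ^ 2))
      = ∑ U ∈ G.powerset,
          (-1 : ℝ) ^ (U.card - k) * (U.card.choose k : ℝ) *
            (1 / (((U.card : ℝ) + 2) * ((p a + p b) + ∑ i ∈ U, p i))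
              + 1 / ((N : ℝ) * ((p a + p b) + ∑ i ∈ U, p i) ^ 2)) := by
    rw [sum_filter]
    refine sum_congr rfl fun U hU => ?_
    split
    · rfl
    · rename_i h
      have : U.card.choose k = 0 := Nat.choose_eq_zero_of_lt (by omega)
      simp [this]
  -- split into the two parts
  have h3 : ∑ U ∈ G.powerset,
          (-1 : ℝ) ^ (U.card - k) * (U.card.choose k : ℝ) *
            (1 / (((U.card : ℝ) + 2) * ((p a + p b) + ∑ i ∈ U, p i))
              + 1 / ((N : ℝ) * ((p a + p b) + ∑ i ∈ U, p i) ^ 2))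
      = (∑ U ∈ G.powerset, (-1 : ℝ) ^ (U.card - k) * (U.card.choose k : ℝ) *
            (1 / (((U.card : ℝ) + 2) * ((p a + p b) + ∑ i ∈ U, p i))))
        + ∑ U ∈ G.powerset, (-1 : ℝ) ^ (U.card - k) * (U.card.choose k : ℝ) *
            (1 / ((N : ℝ) * ((p a + p b) + ∑ i ∈ U, p i) ^ 2)) := by
    rw [← sum_add_distrib]
    exact sum_congr rfl fun U _ => by ring
  have hN0 : (0:ℝ) < (N:ℝ) := by positivity
  have hBmain : (N : ℝ) * ∑ U ∈ G.powerset,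
        (-1 : ℝ) ^ (U.card - k) * (U.card.choose k : ℝ) *
          (1 / ((N : ℝ) * ((p a + p b) + ∑ i ∈ U, p i) ^ 2))
      = ∑ U ∈ G.powerset, (-1 : ℝ) ^ (U.card - k) * (U.card.choose k : ℝ) *
          (1 / (((p a + p b) + ∑ i ∈ U, p i)) ^ 2) := by
    rw [mul_sum]
    refine sum_congr rfl fun U hU => ?_
    have hq : 0 < (p a + p b) + ∑ i ∈ U, p i :=
      add_pos_of_pos_of_nonneg hcpos (sum_nonneg fun i _ => (hppos i).le)
    field_simp
  rw [pairKernel, h1, h2, h3, mul_add]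
  have hA : 0 ≤ (N : ℝ) * ∑ U ∈ G.powerset,
      (-1 : ℝ) ^ (U.card - k) * (U.card.choose k : ℝ) *
        (1 / (((U.card : ℝ) + 2) * ((p a + p b) + ∑ i ∈ U, p i))) :=
    mul_nonneg hN0.le (partA_nonneg G k p hrG _ hcpos)
  have hB : 0 < (N : ℝ) * ∑ U ∈ G.powerset,
      (-1 : ℝ) ^ (U.card - k) * (U.card.choose k : ℝ) *
        (1 / ((N : ℝ) * ((p a + p b) + ∑ i ∈ U, p i) ^ 2)) := by
    rw [hBmain]
    exact partB_pos G k hkG p hrG _ hcpos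
  linarith
end

section
/- Let N ≥ 2, 1 ≤ C < N, L = N − C + 1, and let q ∈ Δ_N°. Define p(θ) = u + θ(q − u). Then for every θ with 0 < θ ≤ 1, (d/dθ) H_C(p(θ)) = (1/(Nθ)) · Σ_{1 ≤ a < b ≤ N} (p_a(θ) − p_b(θ))² · K_{ab}^{(C)}(p(θ)), where K_{ab}^{(C)}(p) = N · Σ_{R ⊆ {1,…,N}, {a,b} ⊆ R, |R| ≥ L} (−1)^{|R|−L} binom(|R|−2, |R|−L) · ( 1/(|R| p_R) + 1/(N p_R²) ). -/
/-!
Along the radial path `p(θ) = u + θ (q - u)` we have `p'(θ) = (p(θ) - u) / θ`, so the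
derivative of each ratio `Q_R / S_R` (with `Q_R = ∑_{i ∈ R} p_i²`, `S_R = p_R`) is
`θ⁻¹ (|R| Q_R - S_R²) (1 / (|R| S_R) + 1 / (N S_R²))` plus `∑_{i ∈ R} (q_i - 1/N) / |R|`;
the latter sums to zero over all `R` of a given size because `∑ (q_i - 1/N) = 0`.
Lagrange's identity `|R| Q_R - S_R² = ∑_{a < b ∈ R} (p_a - p_b)²` and an exchange of the sums
over pairs and over subsets then produce the pair kernel.
-/

open Finset

namespace Finset
variable {ι : Type*}

theorem sum_product_filter_lt_sub_sq [LinearOrder ι] {R : Type*} [CommRing R]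
    [NoZeroDivisors R] [CharZero R] (s : Finset ι) (f : ι → R) :
    ∑ x ∈ s ×ˢ s with x.1 < x.2, (f x.1 - f x.2) ^ 2 =
      #s * ∑ i ∈ s, f i ^ 2 - (∑ i ∈ s, f i) ^ 2 := by
  set w : ι × ι → R := fun x => (f x.1 - f x.2) ^ 2
  have hfull : ∑ x ∈ s ×ˢ s, w x = 2 * (#s * ∑ i ∈ s, f i ^ 2 - (∑ i ∈ s, f i) ^ 2) := by
    simp only [w, sum_product, sub_sq, sum_add_distrib, sum_sub_distrib, sum_const,
      nsmul_eq_mul, ← mul_sum, ← sum_mul]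
    ring
  have hgt : ∑ x ∈ s ×ˢ s with ¬ x.1 < x.2, w x = ∑ x ∈ s ×ˢ s with x.2 < x.1, w x := by
    refine (sum_subset (fun x => by simp +contextual [le_of_lt]) fun x hx hx' => ?_).symm
    simp only [mem_filter, not_lt] at hx hx'
    have hdiag : x.1 = x.2 := le_antisymm (not_lt.1 fun h => hx' ⟨hx.1, h⟩) hx.2
    simp [w, hdiag]
  have hswap : ∑ x ∈ s ×ˢ s with x.2 < x.1, w x = ∑ x ∈ s ×ˢ s with x.1 < x.2, w x :=
    sum_equiv (Equiv.prodComm ι ι) (by simp [and_comm]) fun x _ => by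
      simp only [w, Equiv.prodComm_apply, Prod.fst_swap, Prod.snd_swap]; ring
  have := sum_filter_add_sum_filter_not (s ×ˢ s) (fun x => x.1 < x.2) w
  rw [hgt, hswap, hfull] at this
  exact mul_left_cancel₀ two_ne_zero (by rw [← this, two_mul])

theorem sum_powersetCard_sum_eq_zero [DecidableEq ι] {M : Type*} [AddCommMonoid M]
    {s : Finset ι} {f : ι → M} (hf : ∑ i ∈ s, f i = 0) (m : ℕ) :
    ∑ t ∈ s.powersetCard m, ∑ i ∈ t, f i = 0 := by
  rcases Nat.eq_zero_or_pos m with rfl | hm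
  · simp
  calc ∑ t ∈ s.powersetCard m, ∑ i ∈ t, f i
      = ∑ i ∈ s, ∑ t ∈ s.powersetCard m with {i} ⊆ t, f i :=
        sum_comm' fun t i => by
          simp only [mem_filter, mem_powersetCard, singleton_subset_iff]
          exact ⟨fun h => ⟨h, h.1.1 h.2⟩, And.left⟩
    _ = ∑ i ∈ s, (#s - 1).choose (m - 1) • f i := sum_congr rfl fun i hi => by
        rw [sum_const, card_filter_powersetCard_subset _ _ _ (singleton_subset_iff.2 hi)
          (by rwa [card_singleton]), card_singleton]
    _ = 0 := by rw [← smul_sum, hf, smul_zero]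

theorem sum_powerset_filter_le_card {M : Type*} [AddCommMonoid M] (s : Finset ι) (L : ℕ)
    (f : Finset ι → M) :
    ∑ t ∈ s.powerset with L ≤ #t, f t = ∑ j ∈ Icc L #s, ∑ t ∈ s.powersetCard j, f t := by
  have hIcc : Icc L #s = {j ∈ range (#s + 1) | L ≤ j} := by ext; simp; omega
  rw [sum_filter, sum_powerset, hIcc, sum_filter]
  refine sum_congr rfl fun j _ => ?_
  split_ifs with hj
  · exact sum_congr rfl fun t ht => by rw [if_pos ((mem_powersetCard.1 ht).2 ▸ hj)]
  · exact sum_eq_zero fun t ht => by rw [if_neg ((mem_powersetCard.1 ht).2 ▸ hj)]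

theorem sum_filter_lt_mul_sum_powerset_filter [Fintype ι] [LinearOrder ι] {R : Type*}
    [CommSemiring R] (w : ι × ι → R) (g : Finset ι → R) (P : Finset ι → Prop)
    [DecidablePred P] :
    ∑ x ∈ univ with x.1 < x.2, w x * ∑ t ∈ univ.powerset with x.1 ∈ t ∧ x.2 ∈ t ∧ P t, g t =
      ∑ t ∈ univ.powerset with P t, g t * ∑ x ∈ t ×ˢ t with x.1 < x.2, w x := by
  calc _ = ∑ x ∈ univ with x.1 < x.2, ∑ t ∈ univ.powerset with x.1 ∈ t ∧ x.2 ∈ t ∧ P t,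
        w x * g t := by simp only [mul_sum]
    _ = ∑ t ∈ univ.powerset with P t, ∑ x ∈ t ×ˢ t with x.1 < x.2, w x * g t :=
        sum_comm' fun x t => by
          simp only [mem_filter, mem_univ, mem_powerset, subset_univ, true_and, mem_product]
          tauto
    _ = _ := by simp only [mul_sum, mul_comm]

end Finset

noncomputable def lruCoeff (N C m : ℕ) : ℝ :=
  (-1 : ℝ) ^ (m - (N - C + 1)) * ((m - 2).choose (m - (N - C + 1)) : ℝ)

noncomputable def kernelWeight (N : ℕ) (R : Finset (Fin N)) (p : Fin N → ℝ) : ℝ :=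
  1 / (#R * ∑ i ∈ R, p i) + 1 / (N * (∑ i ∈ R, p i) ^ 2)

theorem sum_sq_sub_mul_pairKernel (N C : ℕ) (p : Fin N → ℝ) :
    ∑ x ∈ (univ : Finset (Fin N × Fin N)) with x.1 < x.2,
        (p x.1 - p x.2) ^ 2 * pairKernel N C x.1 x.2 p =
      N * ∑ m ∈ Icc (N - C + 1) N, lruCoeff N C m * ∑ R ∈ univ.powersetCard m,
        (#R * ∑ i ∈ R, p i ^ 2 - (∑ i ∈ R, p i) ^ 2) * kernelWeight N R p := by
  calc _ = N * ∑ x ∈ (univ : Finset (Fin N × Fin N)) with x.1 < x.2, (p x.1 - p x.2) ^ 2 *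
        ∑ R ∈ univ.powerset with x.1 ∈ R ∧ x.2 ∈ R ∧ N - C + 1 ≤ #R,
          lruCoeff N C #R * kernelWeight N R p := by
        rw [mul_sum]
        refine sum_congr rfl fun x _ => ?_
        rw [pairKernel, mul_left_comm]
        rfl
    _ = N * ∑ R ∈ univ.powerset with N - C + 1 ≤ #R, lruCoeff N C #R * kernelWeight N R p *
          ∑ x ∈ R ×ˢ R with x.1 < x.2, (p x.1 - p x.2) ^ 2 := by
        rw [sum_filter_lt_mul_sum_powerset_filter]
    _ = _ := by
        rw [sum_powerset_filter_le_card, card_univ, Fintype.card_fin]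
        congr 1
        refine sum_congr rfl fun m _ => ?_
        rw [mul_sum]
        refine sum_congr rfl fun R hR => ?_
        rw [sum_product_filter_lt_sub_sq, (mem_powersetCard.1 hR).2]
        ring

noncomputable def radialPath (N : ℕ) (q : Fin N → ℝ) (θ : ℝ) (i : Fin N) : ℝ :=
  (N : ℝ)⁻¹ + θ * (q i - (N : ℝ)⁻¹)

section radialPath

variable {N : ℕ} {q : Fin N → ℝ} {θ : ℝ}

theorem radialPath_pos (hq : ∀ i, 0 < q i) (hθ : θ ∈ Set.Ioc (0 : ℝ) 1) (i : Fin N) :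
    0 < radialPath N q θ i := by
  obtain ⟨hθ0, hθ1⟩ := hθ
  have hqi := hq i
  rw [show radialPath N q θ i = (1 - θ) * (N : ℝ)⁻¹ + θ * q i by unfold radialPath; ring]
  positivity

theorem hasDerivAt_radialPath (i : Fin N) :
    HasDerivAt (fun t => radialPath N q t i) (q i - (N : ℝ)⁻¹) θ := by
  unfold radialPath
  simpa using (hasDerivAt_mul_const (q i - (N : ℝ)⁻¹)).const_add (N : ℝ)⁻¹

theorem hasDerivAt_sum_sq_div_sum_radialPath (R : Finset (Fin N)) (hθ : θ ≠ 0)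
    (hS : ∑ i ∈ R, radialPath N q θ i ≠ 0) :
    HasDerivAt (fun t => (∑ i ∈ R, radialPath N q t i ^ 2) / ∑ i ∈ R, radialPath N q t i)
      (θ⁻¹ * ((#R * ∑ i ∈ R, radialPath N q θ i ^ 2 - (∑ i ∈ R, radialPath N q θ i) ^ 2) *
          kernelWeight N R (radialPath N q θ)) + (∑ i ∈ R, (q i - (N : ℝ)⁻¹)) / #R) θ := by
  have hR : R.Nonempty := nonempty_of_sum_ne_zero hS
  have hN : (N : ℝ) ≠ 0 := by
    obtain ⟨i, -⟩ := hR
    exact Nat.cast_ne_zero.2 (Fin.pos i).ne'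
  have hcard : (#R : ℝ) ≠ 0 := Nat.cast_ne_zero.2 hR.card_pos.ne'
  have hpath (i : Fin N) : θ * (q i - (N : ℝ)⁻¹) = radialPath N q θ i - (N : ℝ)⁻¹ := by
    unfold radialPath; ring
  set S := ∑ i ∈ R, radialPath N q θ i with hSdef
  set Q := ∑ i ∈ R, radialPath N q θ i ^ 2 with hQdef
  have hnum : HasDerivAt (fun t => ∑ i ∈ R, radialPath N q t i ^ 2)
      (2 * (Q - (N : ℝ)⁻¹ * S) / θ) θ := by
    refine (HasDerivAt.fun_sum fun i _ => (hasDerivAt_radialPath i).fun_pow 2).congr_deriv ?_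
    rw [eq_div_iff hθ, sum_mul, mul_sub, mul_sum, mul_sum, mul_sum, ← sum_sub_distrib]
    refine sum_congr rfl fun i _ => ?_
    linear_combination (2 * radialPath N q θ i) * hpath i
  have hden := HasDerivAt.fun_sum fun i (_ : i ∈ R) => hasDerivAt_radialPath (q := q) (θ := θ) i
  have hV : ∑ i ∈ R, (q i - (N : ℝ)⁻¹) = (S - #R * (N : ℝ)⁻¹) / θ := by
    rw [eq_div_iff hθ, sum_mul, ← nsmul_eq_mul, ← sum_const, ← sum_sub_distrib]
    exact sum_congr rfl fun i _ => by linear_combination hpath i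
  refine (hnum.fun_div hden hS).congr_deriv ?_
  rw [kernelWeight, hV, ← hSdef, ← hQdef]
  field_simp
  ring

theorem hasDerivAt_hitRate_radialPath (C : ℕ) (hq : ∀ i, 0 < q i) (hqsum : ∑ i, q i = 1)
    (hθ : θ ∈ Set.Ioc (0 : ℝ) 1) :
    HasDerivAt (fun t => hitRate N C (radialPath N q t))
      (θ⁻¹ * ∑ m ∈ Icc (N - C + 1) N, lruCoeff N C m * ∑ R ∈ univ.powersetCard m,
        (#R * ∑ i ∈ R, radialPath N q θ i ^ 2 - (∑ i ∈ R, radialPath N q θ i) ^ 2) *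
          kernelWeight N R (radialPath N q θ)) θ := by
  have hS (m : ℕ) (hm : m ∈ Icc (N - C + 1) N) (R : Finset (Fin N))
      (hR : R ∈ univ.powersetCard m) : ∑ i ∈ R, radialPath N q θ i ≠ 0 := by
    have hRne : R.Nonempty := card_pos.1 <| by
      rw [(mem_powersetCard.1 hR).2]; exact lt_of_lt_of_le (Nat.succ_pos _) (mem_Icc.1 hm).1
    exact (sum_pos (fun i _ => radialPath_pos hq hθ i) hRne).ne'
  have hqu : ∑ i, (q i - (N : ℝ)⁻¹) = 0 := by
    have hN : (N : ℝ) ≠ 0 := Nat.cast_ne_zero.2 (by rintro rfl; simp at hqsum)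
    rw [sum_sub_distrib, hqsum, sum_const, card_univ, Fintype.card_fin, nsmul_eq_mul,
      mul_inv_cancel₀ hN, sub_self]
  have hV (m : ℕ) :
      ∑ R ∈ univ.powersetCard m, (∑ i ∈ R, (q i - (N : ℝ)⁻¹)) / #R = 0 := by
    rw [sum_congr rfl fun R hR => by rw [(mem_powersetCard.1 hR).2], ← sum_div,
      sum_powersetCard_sum_eq_zero hqu, zero_div]
  refine (HasDerivAt.fun_sum fun m hm => (HasDerivAt.fun_sum fun R hR =>
    hasDerivAt_sum_sq_div_sum_radialPath R hθ.1.ne' (hS m hm R hR)).const_mul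
      (lruCoeff N C m)).congr_deriv ?_
  rw [mul_sum]
  refine sum_congr rfl fun m _ => ?_
  rw [sum_add_distrib, hV, add_zero, ← mul_sum, mul_left_comm]

end radialPath

theorem radial_derivative_formula_general (N C : ℕ)
    (q : Fin N → ℝ) (hqpos : ∀ i, 0 < q i) (hqsum : ∑ i, q i = 1)
    (θ : ℝ) (hθ : θ ∈ Set.Ioc (0 : ℝ) 1) :
    deriv (fun θ : ℝ => hitRate N C (fun i => (N : ℝ)⁻¹ + θ * (q i - (N : ℝ)⁻¹))) θ =
      (1 / ((N : ℝ) * θ)) *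
        ∑ ab ∈ (Finset.univ : Finset (Fin N × Fin N)).filter (fun ab => ab.1 < ab.2),
          (((N : ℝ)⁻¹ + θ * (q ab.1 - (N : ℝ)⁻¹)) - ((N : ℝ)⁻¹ + θ * (q ab.2 - (N : ℝ)⁻¹))) ^ 2 *
            pairKernel N C ab.1 ab.2 (fun i => (N : ℝ)⁻¹ + θ * (q i - (N : ℝ)⁻¹)) := by
  have hN : (N : ℝ) ≠ 0 := Nat.cast_ne_zero.2 (by rintro rfl; simp at hqsum)
  change deriv (fun t => hitRate N C (radialPath N q t)) θ = 1 / (N * θ) *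
    ∑ x ∈ (univ : Finset (Fin N × Fin N)) with x.1 < x.2,
      (radialPath N q θ x.1 - radialPath N q θ x.2) ^ 2 * pairKernel N C x.1 x.2 (radialPath N q θ)
  rw [(hasDerivAt_hitRate_radialPath C hqpos hqsum hθ).deriv, sum_sq_sub_mul_pairKernel]
  field_simp

/-- Positive pair-kernel derivative formula: along the radial path
`p(θ) = u + θ(q - u)`, for `0 < θ ≤ 1`,
`(d/dθ) H_C(p(θ)) = (1/(Nθ)) Σ_{a<b} (p_a(θ) - p_b(θ))² K_{ab}^{(C)}(p(θ))`. -/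
theorem radial_derivative_formula (N C : ℕ) (hN : 2 ≤ N) (hC1 : 1 ≤ C) (hCN : C < N)
    (q : Fin N → ℝ) (hqpos : ∀ i, 0 < q i) (hqsum : ∑ i, q i = 1)
    (θ : ℝ) (hθ : θ ∈ Set.Ioc (0 : ℝ) 1) :
    deriv (fun θ : ℝ => hitRate N C (fun i => (N : ℝ)⁻¹ + θ * (q i - (N : ℝ)⁻¹))) θ =
      (1 / ((N : ℝ) * θ)) *
        ∑ ab ∈ (Finset.univ : Finset (Fin N × Fin N)).filter (fun ab => ab.1 < ab.2),
          (((N : ℝ)⁻¹ + θ * (q ab.1 - (N : ℝ)⁻¹)) - ((N : ℝ)⁻¹ + θ * (q ab.2 - (N : ℝ)⁻¹))) ^ 2 *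
            pairKernel N C ab.1 ab.2 (fun i => (N : ℝ)⁻¹ + θ * (q i - (N : ℝ)⁻¹)) :=
  radial_derivative_formula_general N C q hqpos hqsum θ hθ
end

section
/- Let N ≥ 2, 1 ≤ C < N, and p ∈ Δ_N°. Let A_1,…,A_N be independent random variables with A_i exponentially distributed with rate p_i, and let S_C denote the (almost surely well-defined) set of the C indices with the smallest values among A_1,…,A_N. Then E[ Σ_{i ∈ S_C} p_i ] = Σ_{m=L}^{N} (−1)^{m−L} binom(m−2, m−L) Σ_{R ⊆ {1,…,N}, |R| = m} (Σ_{i∈R} p_i²)/p_R, where L = N − C + 1. -/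
/-!
Index `i` is among the `C` smallest ages iff at least `N - C` of the other ages exceed `A i`.
Jordan's formula expresses the indicator of "at least `K` of the events `{A i < A j}` occur" as
`∑ r, (-1)^r C(K-1+r, r) ∑_{|T| = K+r} 1[A i < A j for all j ∈ T]`, and for independent
exponentials `P(A i < min_{j ∈ T} A j) = p i / (p i + p_T)`, the minimum being exponential with
rate `p_T`. Weighting by `p i` and regrouping the pairs `(i, T)` as `R = insert i T` turns
`p i * p i / (p i + p_T)` into the residual-subset sums `(∑_{i ∈ R} p i ^ 2) / p_R`.
-/

open Finset MeasureTheory ProbabilityTheory Real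

lemma sum_range_neg_one_pow_mul_choose {j L : ℕ} (hjL : j < L) :
    ∑ r ∈ range L, (-1 : ℝ) ^ r * j.choose r = if j = 0 then 1 else 0 := by
  have htail : ∑ r ∈ Ico (j + 1) L, (-1 : ℝ) ^ r * j.choose r = 0 :=
    sum_eq_zero fun r hr => by rw [Nat.choose_eq_zero_of_lt (mem_Ico.1 hr).1]; simp
  rw [← sum_range_add_sum_Ico _ hjL, htail, add_zero]
  exact_mod_cast Int.alternating_sum_range_choose

/-- Jordan's formula for the indicator that at least `k + 1` of `s` events occur. -/
lemma ite_lt_eq_sum_range_neg_one_pow_mul_choose {k L s : ℕ} (hs : s ≤ k + L) :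
    (if k < s then (1 : ℝ) else 0) =
      ∑ r ∈ range L, (-1 : ℝ) ^ r * (k + r).choose r * s.choose (k + r + 1) := by
  induction s with
  | zero => simp
  | succ s ih =>
    have hincrement : ∑ r ∈ range L, (-1 : ℝ) ^ r * (k + r).choose r * s.choose (k + r) =
        if s = k then 1 else 0 := by
      rcases lt_or_ge s k with h | h
      · simp [Nat.choose_eq_zero_of_lt (h.trans_le (k.le_add_right _)), h.ne]
      obtain ⟨d, rfl⟩ := Nat.exists_eq_add_of_le h
      calc ∑ r ∈ range L, (-1 : ℝ) ^ r * (k + r).choose r * (k + d).choose (k + r)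
          = (k + d).choose k * ∑ r ∈ range L, (-1 : ℝ) ^ r * d.choose r := by
            rw [mul_sum]
            refine sum_congr rfl fun r _ => ?_
            have h := Nat.choose_mul (n := k + d) (k := k + r) (s := k) (by omega)
            rw [Nat.choose_symm_add, mul_comm] at h
            simp only [Nat.add_sub_cancel_left] at h
            have h' : ((k + r).choose r : ℝ) * (k + d).choose (k + r) =
                (k + d).choose k * d.choose r := by exact_mod_cast h
            linear_combination (-1 : ℝ) ^ r * h'
        _ = if k + d = k then 1 else 0 := by
            rw [sum_range_neg_one_pow_mul_choose (by omega)]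
            rcases eq_or_ne d 0 with rfl | hd <;> simp [*]
    simp_rw [Nat.choose_succ_succ', Nat.cast_add, mul_add, sum_add_distrib, hincrement,
      ← ih (by omega)]
    rcases lt_trichotomy k s with h | rfl | h
    · simp [h, h.trans (Nat.lt_succ_self s), h.ne']
    · simp
    · simp [h.not_gt, h.ne, show ¬ k < s + 1 by omega]

lemma sum_powersetCard_ite_forall_mem {α : Type*} (U : Finset α) (P : α → Prop)
    [DecidablePred P] (m : ℕ) :
    ∑ T ∈ U.powersetCard m, (if ∀ j ∈ T, P j then (1 : ℝ) else 0) =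
      (#(U.filter P)).choose m := by
  rw [sum_boole, ← card_powersetCard]
  congr 2
  ext T
  simp only [mem_filter, mem_powersetCard, subset_iff]
  grind

lemma sum_powersetCard_erase_insert {α M : Type*} [DecidableEq α] [AddCommMonoid M]
    (s : Finset α) (m : ℕ) (F : α → Finset α → M) :
    ∑ i ∈ s, ∑ T ∈ (s.erase i).powersetCard m, F i (insert i T) =
      ∑ R ∈ s.powersetCard (m + 1), ∑ i ∈ R, F i R := by
  rw [sum_comm' (t' := s) (s' := fun i => (s.powersetCard (m + 1)).filter (i ∈ ·))
    (fun R i => by simp only [mem_filter, mem_powersetCard]; grind)]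
  refine sum_congr rfl fun i hi => sum_nbij' (insert i) (fun R => R.erase i)
    ?_ ?_ ?_ ?_ fun _ _ => rfl
  all_goals simp only [mem_filter, mem_powersetCard]
  · rintro T ⟨hTs, rfl⟩
    have hiT : i ∉ T := fun h => (mem_erase.1 (hTs h)).1 rfl
    exact ⟨⟨insert_subset hi (hTs.trans (erase_subset _ _)), card_insert_of_notMem hiT⟩,
      mem_insert_self _ _⟩
  · rintro R ⟨⟨hRs, hcard⟩, hiR⟩
    exact ⟨erase_subset_erase _ hRs, by rw [card_erase_of_mem hiR, hcard, Nat.add_sub_cancel]⟩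
  · rintro T ⟨hTs, -⟩
    exact erase_insert fun h => (mem_erase.1 (hTs h)).1 rfl
  · rintro R ⟨-, hiR⟩
    exact insert_erase hiR

lemma ite_card_lt_eq_sum_powersetCard {ι α : Type*} [Fintype ι] [DecidableEq ι]
    [LinearOrder α] {k C : ℕ} (hcard : Fintype.card ι = k + 1 + C) (x : ι → α) (i : ι)
    (hx : ∀ j ≠ i, x j ≠ x i) :
    (if #(univ.filter fun j => x j < x i) < C then (1 : ℝ) else 0) =
      ∑ r ∈ range C, (-1 : ℝ) ^ r * (k + r).choose r *
        ∑ T ∈ (univ.erase i).powersetCard (k + r + 1), if ∀ j ∈ T, x i < x j then 1 else 0 := by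
  have hless : (univ.filter fun j => x j < x i) = (univ.erase i).filter fun j => x j < x i := by
    ext j
    simp only [mem_filter, mem_univ, mem_erase, true_and, and_true, iff_and_self]
    exact fun h => ne_of_apply_ne x h.ne
  have hgreater : ((univ.erase i).filter fun j => ¬ x j < x i) =
      (univ.erase i).filter fun j => x i < x j :=
    filter_congr fun j hj => not_lt.trans (hx j (ne_of_mem_erase hj)).symm.le_iff_lt
  have hsplit : #(univ.filter fun j => x j < x i) +
      #((univ.erase i).filter fun j => x i < x j) = k + C := by
    rw [hless, ← hgreater, card_filter_add_card_filter_not, card_erase_of_mem (mem_univ i),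
      card_univ, hcard, Nat.add_right_comm, Nat.add_sub_cancel]
  have hcount : ∀ m, ∑ T ∈ (univ.erase i).powersetCard m,
      (if ∀ j ∈ T, x i < x j then (1 : ℝ) else 0) =
        (#((univ.erase i).filter (x i < x ·))).choose m :=
    fun m => by convert sum_powersetCard_ite_forall_mem (univ.erase i) (x i < x ·) m
  simp_rw [hcount]
  rw [← ite_lt_eq_sum_range_neg_one_pow_mul_choose (by omega)]
  exact if_congr (by omega) rfl rfl

lemma sum_mul_sum_powersetCard_erase_div {α 𝕜 : Type*} [DecidableEq α] [Field 𝕜]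
    (s : Finset α) (p : α → 𝕜) (m : ℕ) :
    ∑ i ∈ s, p i * ∑ T ∈ (s.erase i).powersetCard m, p i / (p i + ∑ j ∈ T, p j) =
      ∑ R ∈ s.powersetCard (m + 1), (∑ i ∈ R, p i ^ 2) / ∑ i ∈ R, p i := by
  simp_rw [Finset.sum_div]
  rw [← sum_powersetCard_erase_insert s m fun i R => p i ^ 2 / ∑ j ∈ R, p j]
  simp_rw [mul_sum]
  refine sum_congr rfl fun i _ => sum_congr rfl fun T hT => ?_
  rw [sum_insert fun h => (mem_erase.1 ((mem_powersetCard.1 hT).1 h)).1 rfl]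
  ring

lemma expMeasure_Ioi {r : ℝ} (hr : 0 < r) (t : ℝ) :
    expMeasure r (Set.Ioi t) = ENNReal.ofReal (rexp (-(r * max t 0))) := by
  have := isProbabilityMeasure_expMeasure hr
  rw [← Set.compl_Iic, prob_compl_eq_one_sub measurableSet_Iic, ← ofReal_cdf,
    cdf_expMeasure_eq hr, ← ENNReal.ofReal_one]
  split_ifs with ht
  · rw [← ENNReal.ofReal_sub _ (sub_nonneg.2 (exp_le_one_iff.2 (by nlinarith))), max_eq_left ht,
      sub_sub_cancel]
  · simp [max_eq_right (not_le.1 ht).le]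

lemma lintegral_expMeasure_exp_neg_mul {r s : ℝ} (hr : 0 < r) (hs : 0 ≤ s) :
    ∫⁻ t, ENNReal.ofReal (rexp (-(s * max t 0))) ∂expMeasure r =
      ENNReal.ofReal (r / (r + s)) := by
  have hdensity : ∀ t, exponentialPDF r t * ENNReal.ofReal (rexp (-(s * max t 0))) =
      ENNReal.ofReal (r / (r + s)) * exponentialPDF (r + s) t := by
    intro t
    rcases le_or_gt 0 t with ht | ht
    · rw [exponentialPDF_of_nonneg ht, exponentialPDF_of_nonneg ht, max_eq_left ht,
        ← ENNReal.ofReal_mul (by positivity), ← ENNReal.ofReal_mul (by positivity)]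
      congr 1
      field_simp
      rw [← exp_add]
      ring_nf
    · rw [exponentialPDF_of_neg ht, exponentialPDF_of_neg ht, zero_mul, mul_zero]
  have hpdf (a : ℝ) : Measurable (exponentialPDF a) :=
    (measurable_exponentialPDFReal a).ennreal_ofReal
  change ∫⁻ t, _ ∂volume.withDensity (exponentialPDF r) = _
  rw [lintegral_withDensity_eq_lintegral_mul _ (hpdf r) (by fun_prop)]
  simp_rw [Pi.mul_apply, hdensity]
  rw [lintegral_const_mul _ (hpdf _),
    lintegral_exponentialPDF_eq_one (by linarith), mul_one]

lemma ProbabilityTheory.IndepFun.measure_preimage_prodMk {Ω α β : Type*}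
    {mΩ : MeasurableSpace Ω} [MeasurableSpace α] [MeasurableSpace β]
    {μ : Measure Ω} [IsFiniteMeasure μ] {X : Ω → α} {Y : Ω → β} (hXY : IndepFun X Y μ)
    (hX : Measurable X) (hY : Measurable Y)
    {E : Set (α × β)} (hE : MeasurableSet E) :
    μ ((fun ω => (X ω, Y ω)) ⁻¹' E) = ∫⁻ x, μ.map Y (Prod.mk x ⁻¹' E) ∂μ.map X := by
  rw [← Measure.map_apply (hX.prodMk hY) hE,
    (indepFun_iff_map_prod_eq_prod_map_map hX.aemeasurable hY.aemeasurable).1 hXY,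
    Measure.prod_apply hE]

lemma ProbabilityTheory.IndepFun.measure_setOf_eq_eq_zero {Ω β : Type*} {mΩ : MeasurableSpace Ω}
    [MeasurableSpace β] [MeasurableEq β] {μ : Measure Ω} [IsFiniteMeasure μ]
    {X Y : Ω → β} (hXY : IndepFun X Y μ) (hX : Measurable X) (hY : Measurable Y)
    [NullSingletonClass (μ.map Y)] :
    μ {ω | X ω = Y ω} = 0 := by
  have hslice : ∀ x : β, Prod.mk x ⁻¹' Set.diagonal β = {x} := fun x => by ext; simp [eq_comm]
  change μ ((fun ω => (X ω, Y ω)) ⁻¹' Set.diagonal β) = 0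
  simp [hXY.measure_preimage_prodMk hX hY measurableSet_diagonal, hslice]

lemma measurable_card_filter {Ω ι : Type*} [Fintype ι] {mΩ : MeasurableSpace Ω}
    {P : ι → Ω → Prop} [∀ ω, DecidablePred (P · ω)] (hP : ∀ i, MeasurableSet {ω | P i ω}) :
    Measurable fun ω => #(univ.filter (P · ω)) := by
  simp_rw [card_filter]
  exact Finset.measurable_sum _ fun i _ => Measurable.ite (hP i) measurable_const measurable_const

lemma integral_sum_filter {Ω ι : Type*} [Fintype ι] {mΩ : MeasurableSpace Ω} {μ : Measure Ω}
    [IsFiniteMeasure μ] {P : ι → Ω → Prop} [∀ ω, DecidablePred (P · ω)]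
    (hP : ∀ i, MeasurableSet {ω | P i ω}) (w : ι → ℝ) :
    ∫ ω, ∑ i ∈ univ.filter (P · ω), w i ∂μ = ∑ i, w i * μ.real {ω | P i ω} := by
  have hind (i : ι) :
      (fun ω => if P i ω then w i else 0) = {ω | P i ω}.indicator fun _ => w i := by
    ext ω; simp [Set.indicator_apply]
  simp_rw [sum_filter]
  rw [integral_finsetSum _ fun i _ => hind i ▸ (integrable_const _).indicator (hP i)]
  simp_rw [hind, integral_indicator_const _ (hP _), smul_eq_mul, mul_comm]

section IndependentExponentials

variable {Ω ι : Type*} {mΩ : MeasurableSpace Ω} {μ : Measure Ω} {A : ι → Ω → ℝ} {p : ι → ℝ}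

lemma measure_forall_lt_eq_exp_sum (hA : ∀ i, Measurable (A i)) (hindep : iIndepFun A μ)
    (hp : ∀ i, 0 < p i) (hlaw : ∀ i, μ.map (A i) = expMeasure (p i)) (T : Finset ι) (t : ℝ) :
    μ {ω | ∀ j ∈ T, t < A j ω} = ENNReal.ofReal (rexp (-((∑ j ∈ T, p j) * max t 0))) := by
  have hinter : {ω | ∀ j ∈ T, t < A j ω} = ⋂ j ∈ T, A j ⁻¹' Set.Ioi t := by ext; simp
  have hmarg (j : ι) : μ (A j ⁻¹' Set.Ioi t) = ENNReal.ofReal (rexp (-(p j * max t 0))) := by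
    rw [← Measure.map_apply (hA j) measurableSet_Ioi, hlaw j, expMeasure_Ioi (hp j)]
  rw [hinter, hindep.meas_biInter fun j _ => ⟨Set.Ioi t, measurableSet_Ioi, rfl⟩]
  simp_rw [hmarg]
  rw [← ENNReal.ofReal_prod_of_nonneg fun j _ => (exp_pos _).le, ← exp_sum, sum_mul,
    ← sum_neg_distrib]

lemma measure_forall_lt_eq_div_sum (hA : ∀ i, Measurable (A i)) (hindep : iIndepFun A μ)
    (hp : ∀ i, 0 < p i) (hlaw : ∀ i, μ.map (A i) = expMeasure (p i)) {i : ι} {T : Finset ι}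
    (hiT : i ∉ T) :
    μ {ω | ∀ j ∈ T, A i ω < A j ω} = ENNReal.ofReal (p i / (p i + ∑ j ∈ T, p j)) := by
  have := hindep.isProbabilityMeasure
  let W : Ω → T → ℝ := fun ω j => A j ω
  have hW : Measurable W := measurable_pi_lambda _ fun j => hA j
  have hiW : IndepFun (A i) W μ :=
    (hindep.indepFun_finset {i} T (disjoint_singleton_left.2 hiT) hA).comp
      (measurable_pi_apply (⟨i, mem_singleton_self i⟩ : ({i} : Finset ι))) measurable_id
  let E : Set (ℝ × (T → ℝ)) := {q | ∀ j, q.1 < q.2 j}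
  have hE : MeasurableSet E := by
    simp only [E, Set.ofPred_forall]
    exact .iInter fun j =>
      measurableSet_lt measurable_fst ((measurable_pi_apply j).comp measurable_snd)
  have hslice (t : ℝ) :
      μ.map W (Prod.mk t ⁻¹' E) = ENNReal.ofReal (rexp (-((∑ j ∈ T, p j) * max t 0))) := by
    rw [Measure.map_apply hW (measurable_prodMk_left hE),
      ← measure_forall_lt_eq_exp_sum hA hindep hp hlaw]
    congr 1; ext ω; simp [W, E]
  have hpre : {ω | ∀ j ∈ T, A i ω < A j ω} = (fun ω => (A i ω, W ω)) ⁻¹' E := by ext; simp [W, E]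
  rw [hpre, hiW.measure_preimage_prodMk (hA i) hW hE, hlaw i]
  simp_rw [hslice]
  exact lintegral_expMeasure_exp_neg_mul (hp i) (sum_nonneg fun j _ => (hp j).le)

lemma ae_ne_of_iIndepFun_expMeasure (hA : ∀ i, Measurable (A i)) (hindep : iIndepFun A μ)
    (hlaw : ∀ i, μ.map (A i) = expMeasure (p i)) {i j : ι} (hji : j ≠ i) :
    ∀ᵐ ω ∂μ, A j ω ≠ A i ω := by
  have := hindep.isProbabilityMeasure
  have : NullSingletonClass (μ.map (A i)) := by
    rw [hlaw i, expMeasure, gammaMeasure]; infer_instance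
  exact measure_eq_zero_iff_ae_notMem.1
    ((hindep.indepFun hji).measure_setOf_eq_eq_zero (hA j) (hA i))

lemma measureReal_card_lt_eq_sum [Fintype ι] [DecidableEq ι] (hA : ∀ i, Measurable (A i))
    (hindep : iIndepFun A μ) (hp : ∀ i, 0 < p i) (hlaw : ∀ i, μ.map (A i) = expMeasure (p i))
    {k C : ℕ} (hcard : Fintype.card ι = k + 1 + C) (i : ι) :
    μ.real {ω | #(univ.filter fun j => A j ω < A i ω) < C} =
      ∑ r ∈ range C, (-1 : ℝ) ^ r * (k + r).choose r *
        ∑ T ∈ (univ.erase i).powersetCard (k + r + 1), p i / (p i + ∑ j ∈ T, p j) := by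
  have := hindep.isProbabilityMeasure
  have hS : MeasurableSet {ω | #(univ.filter fun j => A j ω < A i ω) < C} :=
    measurableSet_lt (measurable_card_filter fun j => measurableSet_lt (hA j) (hA i))
      measurable_const
  have hE (T : Finset ι) : MeasurableSet {ω | ∀ j ∈ T, A i ω < A j ω} := by
    measurability
  have hties : ∀ᵐ ω ∂μ, ∀ j ≠ i, A j ω ≠ A i ω := by
    refine ae_all_iff.2 fun j => ?_
    rcases eq_or_ne j i with rfl | hji
    · exact .of_forall fun _ h => (h rfl).elim
    · exact (ae_ne_of_iIndepFun_expMeasure hA hindep hlaw hji).mono fun _ h _ => h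
  have hexpand : {ω | #(univ.filter fun j => A j ω < A i ω) < C}.indicator (1 : Ω → ℝ) =ᵐ[μ]
      fun ω => ∑ r ∈ range C, (-1 : ℝ) ^ r * (k + r).choose r *
        ∑ T ∈ (univ.erase i).powersetCard (k + r + 1),
          {ω | ∀ j ∈ T, A i ω < A j ω}.indicator 1 ω := by
    filter_upwards [hties] with ω hω
    simpa only [Set.indicator_apply, Set.mem_ofPred_eq, Pi.one_apply] using
      ite_card_lt_eq_sum_powersetCard hcard (A · ω) i hω
  have hint (T : Finset ι) :
      Integrable ({ω | ∀ j ∈ T, A i ω < A j ω}.indicator (1 : Ω → ℝ)) μ :=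
    (integrable_const (1 : ℝ)).indicator (hE T)
  rw [← integral_indicator_one hS, integral_congr_ae hexpand,
    integral_finsetSum _ fun r _ => (integrable_finsetSum _ fun T _ => hint T).const_mul _]
  refine sum_congr rfl fun r _ => ?_
  rw [integral_const_mul, integral_finsetSum _ fun T _ => hint T]
  congr 1
  refine sum_congr rfl fun T hT => ?_
  have hiT : i ∉ T := fun h => (mem_erase.1 ((mem_powersetCard.1 hT).1 h)).1 rfl
  have hpos : 0 ≤ p i / (p i + ∑ j ∈ T, p j) :=
    div_nonneg (hp i).le (add_nonneg (hp i).le (sum_nonneg fun j _ => (hp j).le))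
  rw [integral_indicator_one (hE T), measureReal_def,
    measure_forall_lt_eq_div_sum hA hindep hp hlaw hiT, ENNReal.toReal_ofReal hpos]

end IndependentExponentials

theorem hitRate_residual_formula_general
    {Ω : Type*} [MeasureSpace Ω]
    (N C : ℕ) (hCN : C < N)
    (p : Fin N → ℝ) (hppos : ∀ i, 0 < p i)
    (A : Fin N → Ω → ℝ) (hA : ∀ i, Measurable (A i))
    (hindep : iIndepFun A ℙ)
    (hlaw : ∀ i, Measure.map (A i) ℙ = expMeasure (p i)) :
    (∫ ω, (∑ i ∈ Finset.univ.filter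
        (fun i => ((Finset.univ.filter fun j => A j ω < A i ω).card < C)), p i) ∂ℙ) =
      ∑ m ∈ Finset.Icc (N - C + 1) N,
        (-1 : ℝ) ^ (m - (N - C + 1)) * ((m - 2).choose (m - (N - C + 1)) : ℝ) *
          ∑ R ∈ (Finset.univ : Finset (Fin N)).powersetCard m,
            (∑ i ∈ R, p i ^ 2) / (∑ i ∈ R, p i) := by
  have := hindep.isProbabilityMeasure
  obtain ⟨k, rfl⟩ : ∃ k, N = k + 1 + C := ⟨N - C - 1, by omega⟩
  rw [integral_sum_filter fun i => measurableSet_lt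
      (measurable_card_filter fun j => measurableSet_lt (hA j) (hA i)) measurable_const]
  simp_rw [measureReal_card_lt_eq_sum hA hindep hppos hlaw (Fintype.card_fin _), mul_sum,
    mul_left_comm (p _)]
  rw [sum_comm]
  simp_rw [← mul_sum, sum_mul_sum_powersetCard_erase_div]
  rw [show k + 1 + C - C + 1 = k + 2 by omega, ← Ico_add_one_right_eq_Icc,
    sum_Ico_eq_sum_range, show k + 1 + C + 1 - (k + 2) = C by omega]
  refine sum_congr rfl fun r _ => ?_
  rw [show k + 2 + r - 2 = k + r by omega, Nat.add_sub_cancel_left,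
    show k + 2 + r = k + r + 1 + 1 by omega]

/-- Residual-subset expansion of the exact stationary LRU hit rate: if
`A_1,…,A_N` are independent exponential random variables with rates
`p_1,…,p_N` and `S_C` is the (a.s. well-defined) set of the `C` indices with
smallest values — i.e. `i ∈ S_C` iff fewer than `C` of the `A_j` are smaller
than `A_i` — then `E[Σ_{i∈S_C} p_i]` equals
`Σ_{m=L}^N (-1)^{m-L} binom(m-2,m-L) Σ_{|R|=m} (Σ_{i∈R} p_i²)/p_R`
with `L = N - C + 1`. -/
theorem hitRate_residual_formula
    {Ω : Type*} [MeasureSpace Ω] [IsProbabilityMeasure (ℙ : Measure Ω)]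
    (N C : ℕ) (hN : 2 ≤ N) (hC1 : 1 ≤ C) (hCN : C < N)
    (p : Fin N → ℝ) (hppos : ∀ i, 0 < p i) (hpsum : ∑ i, p i = 1)
    (A : Fin N → Ω → ℝ) (hA : ∀ i, Measurable (A i))
    (hindep : iIndepFun A ℙ)
    (hlaw : ∀ i, Measure.map (A i) ℙ = expMeasure (p i)) :
    (∫ ω, (∑ i ∈ Finset.univ.filter
        (fun i => ((Finset.univ.filter fun j => A j ω < A i ω).card < C)), p i) ∂ℙ) =
      ∑ m ∈ Finset.Icc (N - C + 1) N,
        (-1 : ℝ) ^ (m - (N - C + 1)) * ((m - 2).choose (m - (N - C + 1)) : ℝ) *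
          ∑ R ∈ (Finset.univ : Finset (Fin N)).powersetCard m,
            (∑ i ∈ R, p i ^ 2) / (∑ i ∈ R, p i) :=
  hitRate_residual_formula_general N C hCN p hppos A hA hindep hlaw
end

section
/- Let N ≥ 2, 1 ≤ C < N, and L = N − C + 1. For every p ∈ Δ_N°, H_C(p) = C/N + Σ_{1 ≤ a < b ≤ N} (p_a − p_b)² · J_{ab}^{(C)}(p), where J_{ab}^{(C)}(p) = Σ_{R ⊆ {1,…,N}, {a,b} ⊆ R, |R| ≥ L} (−1)^{|R|−L} binom(|R|−2, |R|−L) / (|R| · p_R). -/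
open Finset

/-- The pair coefficient
`J_{ab}^{(C)}(p) = Σ_{R ⊇ {a,b}, |R| ≥ L} (-1)^{|R|-L} binom(|R|-2,|R|-L) / (|R| p_R)`
with `L = N - C + 1`. -/
noncomputable def Jkernel (N C : ℕ) (a b : Fin N) (p : Fin N → ℝ) : ℝ :=
  ∑ R ∈ (Finset.univ : Finset (Fin N)).powerset.filter
      (fun R => a ∈ R ∧ b ∈ R ∧ N - C + 1 ≤ R.card),
    (-1 : ℝ) ^ (R.card - (N - C + 1)) *
      ((R.card - 2).choose (R.card - (N - C + 1)) : ℝ) /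
      ((R.card : ℝ) * ∑ i ∈ R, p i)

/-! For `|R| = m`, Lagrange's identity `m Σ_R p_i² = p_R² + Σ_{a<b in R} (p_a - p_b)²` splits
`(Σ_R p_i²) / p_R` into `p_R / m` plus a pair part. Summed over the `m`-subsets, the first piece
gives `binom(N-1, m-1) / m = binom(N, m) / N` because `Σ p_i = 1`, and `Σ_m α_m binom(N, m) = C` is
Chu–Vandermonde with the negative upper index `-(L-1)`. Exchanging the sums over `R` and over
the pairs turns the pair parts into the kernels `J_ab`. -/

section Lagrange

variable {ι R : Type*} [LinearOrder ι] [CommRing R]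

def sumPairSqDiff (s : Finset ι) (f : ι → R) : R :=
  ∑ x ∈ (s ×ˢ s).filter (fun x => x.1 < x.2), (f x.1 - f x.2) ^ 2

theorem card_mul_sum_sq_eq_sq_sum_add_sumPairSqDiff (s : Finset ι) (f : ι → R) :
    (#s : R) * ∑ i ∈ s, f i ^ 2 = (∑ i ∈ s, f i) ^ 2 + sumPairSqDiff s f := by
  unfold sumPairSqDiff
  induction s using Finset.induction_on_max with
  | empty => simp
  | insert a s ha ih =>
    have has : a ∉ s := fun h => lt_irrefl a (ha a h)
    have hpairs : ((insert a s) ×ˢ (insert a s)).filter (fun x => x.1 < x.2) =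
        (s ×ˢ s).filter (fun x => x.1 < x.2) ∪ s ×ˢ {a} := by
      ext ⟨i, j⟩
      simp only [mem_filter, mem_product, mem_insert, mem_union, mem_singleton]
      constructor
      · rintro ⟨⟨rfl | hi, rfl | hj⟩, hij⟩
        · exact absurd hij (lt_irrefl _)
        · exact absurd (ha j hj) (not_lt_of_gt hij)
        · exact Or.inr ⟨hi, rfl⟩
        · exact Or.inl ⟨⟨hi, hj⟩, hij⟩
      · rintro (⟨⟨hi, hj⟩, hij⟩ | ⟨hi, rfl⟩)
        · exact ⟨⟨Or.inr hi, Or.inr hj⟩, hij⟩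
        · exact ⟨⟨Or.inr hi, Or.inl rfl⟩, ha i hi⟩
    have hdisj : Disjoint ((s ×ˢ s).filter (fun x => x.1 < x.2)) (s ×ˢ {a}) :=
      disjoint_left.mpr fun x hx hx' =>
        has ((mem_singleton.mp (mem_product.mp hx').2) ▸ (mem_product.mp (mem_filter.mp hx).1).2)
    have hnew : ∑ i ∈ s, (f i - f a) ^ 2 =
        ∑ i ∈ s, f i ^ 2 - 2 * f a * ∑ i ∈ s, f i + #s * f a ^ 2 := by
      rw [sum_congr rfl fun i _ => show (f i - f a) ^ 2 = f i ^ 2 - 2 * f a * f i + f a ^ 2 by ring]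
      simp only [sum_add_distrib, sum_sub_distrib, ← mul_sum, sum_const, nsmul_eq_mul]
    rw [hpairs, sum_union hdisj, sum_product, sum_congr rfl fun i _ => sum_singleton _ _,
      sum_insert has, sum_insert has, card_insert_of_notMem has, hnew]
    push_cast
    linear_combination ih

end Lagrange

theorem sum_sq_div_sum_eq {ι K : Type*} [LinearOrder ι] [Field K] [CharZero K] {s : Finset ι}
    (hs : s.Nonempty) (f : ι → K) :
    (∑ i ∈ s, f i ^ 2) / ∑ i ∈ s, f i =
      (∑ i ∈ s, f i) / #s + sumPairSqDiff s f / (#s * ∑ i ∈ s, f i) := by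
  have hcard : (#s : K) ≠ 0 := Nat.cast_ne_zero.mpr hs.card_pos.ne'
  rw [← mul_div_mul_left _ _ hcard, card_mul_sum_sq_eq_sq_sum_add_sumPairSqDiff, add_div]
  rcases eq_or_ne (∑ i ∈ s, f i) 0 with h | h
  · simp [h]
  · rw [sq, mul_div_mul_right _ _ h]

theorem sum_powersetCard_sum {α M : Type*} [DecidableEq α] [AddCommMonoid M] (s : Finset α)
    {m : ℕ} (hm : 1 ≤ m) (f : α → M) :
    ∑ R ∈ s.powersetCard m, ∑ i ∈ R, f i = (#s - 1).choose (m - 1) • ∑ i ∈ s, f i := by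
  rw [sum_comm' (t' := s) (s' := fun i => (s.powersetCard m).filter ({i} ⊆ ·))]
  · rw [smul_sum]
    refine sum_congr rfl fun i hi => ?_
    rw [sum_const, card_filter_powersetCard_subset _ _ _ (singleton_subset_iff.mpr hi)
      (by simpa using hm), card_singleton]
  · intro R i
    simp only [mem_powersetCard, mem_filter, singleton_subset_iff]
    exact ⟨fun ⟨hR, hi⟩ => ⟨⟨hR, hi⟩, hR.1 hi⟩, fun ⟨hR, hi⟩ => ⟨hR.1, hR.2⟩⟩

theorem cast_choose_sub_one_div {K : Type*} [Field K] [CharZero K] {n m : ℕ} (hn : 1 ≤ n)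
    (hm : 1 ≤ m) : ((n - 1).choose (m - 1) : K) / m = n.choose m / n := by
  obtain ⟨n, rfl⟩ : ∃ k, n = k + 1 := ⟨n - 1, by omega⟩
  obtain ⟨m, rfl⟩ : ∃ k, m = k + 1 := ⟨m - 1, by omega⟩
  rw [Nat.add_sub_cancel, Nat.add_sub_cancel,
    div_eq_div_iff (Nat.cast_ne_zero.mpr m.succ_ne_zero) (Nat.cast_ne_zero.mpr n.succ_ne_zero),
    mul_comm]
  exact_mod_cast Nat.add_one_mul_choose_eq n m

theorem sum_powersetCard_sum_sq_div_sum {ι K : Type*} [Fintype ι] [LinearOrder ι] [Field K]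
    [CharZero K] (p : ι → K) (hp : ∑ i, p i = 1) {m : ℕ} (hm : 1 ≤ m) :
    ∑ R ∈ powersetCard m univ, (∑ i ∈ R, p i ^ 2) / ∑ i ∈ R, p i =
      (Fintype.card ι).choose m / Fintype.card ι +
        ∑ R ∈ powersetCard m univ, sumPairSqDiff R p / (#R * ∑ i ∈ R, p i) := by
  have hι : 1 ≤ Fintype.card ι := Fintype.card_pos_iff.mpr <| by
    by_contra h
    simp [not_nonempty_iff.mp h] at hp
  rw [sum_congr rfl fun R hR => sum_sq_div_sum_eq
    (card_pos.mp ((mem_powersetCard.mp hR).2 ▸ hm)) p, sum_add_distrib]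
  congr 1
  rw [sum_congr rfl fun R hR => by rw [(mem_powersetCard.mp hR).2], ← sum_div,
    sum_powersetCard_sum _ hm, hp, card_univ, nsmul_one]
  exact cast_choose_sub_one_div hι hm

theorem sum_Icc_sum_powersetCard {α M : Type*} [AddCommMonoid M] (s : Finset α) (L : ℕ)
    (g : ℕ → Finset α → M) :
    ∑ m ∈ Icc L #s, ∑ R ∈ s.powersetCard m, g m R =
      ∑ R ∈ s.powerset.filter (fun R => L ≤ #R), g #R R := by
  rw [← sum_fiberwise_of_maps_to (g := card) (t := Icc L #s)]
  · refine sum_congr rfl fun m hm => ?_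
    refine sum_congr ?_ fun R hR => by rw [(mem_filter.mp hR).2]
    ext R
    simp only [mem_powersetCard, mem_filter, mem_powerset]
    constructor
    · rintro ⟨hR, rfl⟩
      exact ⟨⟨hR, (mem_Icc.mp hm).1⟩, rfl⟩
    · rintro ⟨⟨hR, -⟩, rfl⟩
      exact ⟨hR, rfl⟩
  · intro R hR
    simp only [mem_filter, mem_powerset] at hR
    exact mem_Icc.mpr ⟨hR.2, card_le_card hR.1⟩

theorem sum_powerset_filter_mul_sum_pairs {ι R : Type*} [Fintype ι] [DecidableEq ι]
    [CommSemiring R] (P : ι × ι → Prop) [DecidablePred P] (Q : Finset ι → Prop)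
    [DecidablePred Q] (w : Finset ι → R) (g : ι × ι → R) :
    ∑ S ∈ univ.powerset.filter Q, w S * ∑ x ∈ (S ×ˢ S).filter P, g x =
      ∑ x ∈ univ.filter P,
        g x * ∑ S ∈ univ.powerset.filter (fun S => x.1 ∈ S ∧ x.2 ∈ S ∧ Q S), w S := by
  simp_rw [mul_sum]
  rw [sum_comm']
  · exact sum_congr rfl fun _ _ => sum_congr rfl fun _ _ => mul_comm _ _
  · intro S x
    simp only [mem_filter, mem_powerset, mem_product, subset_univ, mem_univ, true_and]
    tauto

-- `(-1)^k binom(M+k, k) = binom(-(M+1), k)`, so this is Chu–Vandermonde for `-(M+1) + n`.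
theorem sum_range_neg_one_pow_mul_choose_mul_choose (n M r : ℕ) :
    ∑ k ∈ range (r + 1), (-1 : ℤ) ^ k * (M + k).choose k * n.choose (r - k) =
      Ring.choose ((n : ℤ) - M - 1) r := by
  rw [show (n : ℤ) - M - 1 = -((M : ℤ) + 1) + n by ring,
    Ring.add_choose_eq r (Commute.all _ _), Nat.sum_antidiagonal_eq_sum_range_succ_mk]
  refine sum_congr rfl fun k _ => ?_
  rw [Ring.choose_neg, Ring.choose_natCast,
    show (M : ℤ) + 1 + k - 1 = ((M + k : ℕ) : ℤ) by push_cast; ring, Ring.choose_natCast,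
    Int.negOnePow_def]
  simp [Units.smul_def]

-- `α_m` of the residual-subset formula, for `L = N - C + 1`.
noncomputable def residualCoeff (L m : ℕ) : ℝ :=
  (-1) ^ (m - L) * ((m - 2).choose (m - L) : ℝ)

theorem sum_Icc_residualCoeff_mul_choose {N C : ℕ} (hC1 : 1 ≤ C) (hCN : C < N) :
    ∑ m ∈ Icc (N - C + 1) N, residualCoeff (N - C + 1) m * N.choose m = C := by
  have key := sum_range_neg_one_pow_mul_choose_mul_choose N (N - C - 1) (C - 1)
  rw [Nat.sub_add_cancel hC1, show (N : ℤ) - (N - C - 1 : ℕ) - 1 = C by omega,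
    Ring.choose_natCast, Nat.choose_symm hC1, Nat.choose_one_right] at key
  rw [← Ico_add_one_right_eq_Icc, sum_Ico_eq_sum_range, show N + 1 - (N - C + 1) = C by omega]
  rw [← Int.cast_natCast, ← key, Int.cast_sum]
  refine sum_congr rfl fun k hk => ?_
  have hk : k < C := mem_range.mp hk
  rw [residualCoeff, Nat.add_sub_cancel_left, show N - C + 1 + k - 2 = N - C - 1 + k by omega,
    ← Nat.choose_symm (by omega : N - C + 1 + k ≤ N), show N - (N - C + 1 + k) = C - 1 - k by omega]
  push_cast
  ring

theorem pair_square_expansion_general (N C : ℕ) (hC1 : 1 ≤ C) (hCN : C < N)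
    (p : Fin N → ℝ) (hpsum : ∑ i, p i = 1) :
    hitRate N C p =
      (C : ℝ) / N +
        ∑ ab ∈ (Finset.univ : Finset (Fin N × Fin N)).filter (fun ab => ab.1 < ab.2),
          (p ab.1 - p ab.2) ^ 2 * Jkernel N C ab.1 ab.2 p := by
  set L := N - C + 1
  have hconst : ∑ m ∈ Icc L N, residualCoeff L m * (N.choose m / N) = C / N := by
    simp_rw [← mul_div_assoc]
    rw [← sum_div, sum_Icc_residualCoeff_mul_choose hC1 hCN]
  have hregroup := sum_Icc_sum_powersetCard (univ : Finset (Fin N)) L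
    fun m R => residualCoeff L m / (#R * ∑ i ∈ R, p i) * sumPairSqDiff R p
  rw [card_fin] at hregroup
  calc hitRate N C p
      = ∑ m ∈ Icc L N, residualCoeff L m * (N.choose m / N +
          ∑ R ∈ powersetCard m univ, sumPairSqDiff R p / (#R * ∑ i ∈ R, p i)) :=
        sum_congr rfl fun m hm => by
          rw [sum_powersetCard_sum_sq_div_sum p hpsum (le_trans (by omega) (mem_Icc.mp hm).1),
            Fintype.card_fin]
          rfl
    _ = C / N + ∑ R ∈ univ.powerset.filter (fun R => L ≤ #R),
          residualCoeff L #R / (#R * ∑ i ∈ R, p i) * sumPairSqDiff R p := by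
        rw [← hconst, ← hregroup, ← sum_add_distrib]
        refine sum_congr rfl fun m _ => ?_
        rw [mul_add, mul_sum]
        exact congrArg _ (sum_congr rfl fun R _ => by ring)
    _ = _ := congrArg ((C : ℝ) / N + ·) (sum_powerset_filter_mul_sum_pairs _ _ _ _)

/-- Pair-square expansion of the LRU hit rate:
`H_C(p) = C/N + Σ_{a<b} (p_a - p_b)² J_{ab}^{(C)}(p)` for every `p ∈ Δ_N°`. -/
theorem pair_square_expansion (N C : ℕ) (hN : 2 ≤ N) (hC1 : 1 ≤ C) (hCN : C < N)
    (p : Fin N → ℝ) (hppos : ∀ i, 0 < p i) (hpsum : ∑ i, p i = 1) :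
    hitRate N C p =
      (C : ℝ) / N +
        ∑ ab ∈ (Finset.univ : Finset (Fin N × Fin N)).filter (fun ab => ab.1 < ab.2),
          (p ab.1 - p ab.2) ^ 2 * Jkernel N C ab.1 ab.2 p :=
  pair_square_expansion_general N C hC1 hCN p hpsum
end

section
/- Let T be a finite set, let (p_j)_{j∈T} be strictly positive reals, let s > 0, and let r be an integer with 0 ≤ r ≤ |T|. Then Φ_r := Σ_{U ⊆ T} (−1)^{|U|−r} binom(|U|, r) / ((|U|+2)(s + p_U)) > 0, where p_U = Σ_{j∈U} p_j and binom(|U|, r) = 0 when |U| < r. -/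
/-!
Counting the `r`-subsets `S` of each `U` splits `Φ_r` as
`∑_{|S| = r} ∑_{V ⊆ T \ S} (-1)^|V| / ((a + |V|) (c + p_V))` with `a = r + 2`, `c = s + p_S`.
Each inner sum is positive: writing `1 / (a + |V|) = ∫₀¹ x^(a + |V| - 1) dx` and
`1 / (c + p_V) = ∫₀¹ t^(c + p_V - 1) dt`, it becomes
`∫₀¹ ∫₀¹ x^(a - 1) t^(c - 1) ∏_{j ∈ T \ S} (1 - x t^p_j) dx dt`, whose integrand is positive
on the open unit square.
-/

open Finset MeasureTheory intervalIntegral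

theorem Finset.sum_div_pos_of_sum_mul_rpow_pos {κ : Type*} (s : Finset κ) (a b : κ → ℝ)
    (hb : ∀ i ∈ s, 0 < b i) (h : ∀ t ∈ Set.Ioo (0 : ℝ) 1, 0 < ∑ i ∈ s, a i * t ^ (b i - 1)) :
    0 < ∑ i ∈ s, a i / b i := by
  have hint : ∀ i ∈ s, IntervalIntegrable (fun t : ℝ ↦ a i * t ^ (b i - 1)) volume 0 1 :=
    fun i hi ↦ (intervalIntegrable_rpow' (by linarith [hb i hi])).const_mul _
  have hval : ∀ i ∈ s, ∫ t in (0 : ℝ)..1, a i * t ^ (b i - 1) = a i / b i := by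
    intro i hi
    rw [intervalIntegral.integral_const_mul, integral_rpow (Or.inl (by linarith [hb i hi])),
      sub_add_cancel, Real.one_rpow, Real.zero_rpow (hb i hi).ne', sub_zero, mul_one_div]
  calc 0 < ∫ t in (0 : ℝ)..1, ∑ i ∈ s, a i * t ^ (b i - 1) :=
        intervalIntegral_pos_of_pos_on
          (by simpa only [sum_fn] using IntervalIntegrable.sum s hint) h one_pos
    _ = ∑ i ∈ s, a i / b i := by rw [integral_finsetSum hint]; exact sum_congr rfl hval

theorem Finset.prod_one_sub_eq_sum_powerset {ι R : Type*} [CommRing R] (s : Finset ι)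
    (f : ι → R) : ∏ i ∈ s, (1 - f i) = ∑ t ∈ s.powerset, (-1) ^ #t * ∏ i ∈ t, f i := by
  simp_rw [sub_eq_add_neg, prod_one_add, prod_neg]

theorem Finset.sum_powerset_choose_smul {ι M : Type*} [DecidableEq ι] [AddCommMonoid M]
    (T : Finset ι) (r : ℕ) (f : Finset ι → M) :
    ∑ U ∈ T.powerset, (#U).choose r • f U =
      ∑ S ∈ T.powersetCard r, ∑ V ∈ (T \ S).powerset, f (S ∪ V) := by
  calc ∑ U ∈ T.powerset, (#U).choose r • f U
        = ∑ U ∈ T.powerset, ∑ _S ∈ U.powersetCard r, f U := by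
          simp only [sum_const, card_powersetCard]
    _ = ∑ S ∈ T.powersetCard r, ∑ U ∈ Icc S T, f U :=
          sum_comm' fun U S ↦ by
            simp only [mem_powerset, mem_powersetCard, mem_Icc]
            exact ⟨fun ⟨hUT, hSU, hS⟩ ↦ ⟨⟨hSU, hUT⟩, hSU.trans hUT, hS⟩,
              fun ⟨⟨hSU, hUT⟩, _, hS⟩ ↦ ⟨hUT, hSU, hS⟩⟩
    _ = ∑ S ∈ T.powersetCard r, ∑ V ∈ (T \ S).powerset, f (S ∪ V) := by
          refine sum_congr rfl fun S hS ↦ ?_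
          rw [Icc_eq_image_powerset (mem_powersetCard.1 hS).1, sum_image]
          intro V₁ hV₁ V₂ hV₂ h
          have hdisj : ∀ V ∈ (T \ S).powerset, Disjoint S V :=
            fun V hV ↦ disjoint_of_subset_right (mem_powerset.1 hV) disjoint_sdiff
          rw [← union_sdiff_cancel_left (hdisj V₁ hV₁), ← union_sdiff_cancel_left (hdisj V₂ hV₂)]
          exact congrArg (· \ S) h

section PowersetSums

variable {ι : Type*} (W : Finset ι) {p : ι → ℝ} (hp : ∀ j ∈ W, 0 < p j)
include hp

theorem sum_powerset_neg_one_pow_mul_rpow_div_pos {a t : ℝ} (ha : 0 < a)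
    (ht : t ∈ Set.Ioo (0 : ℝ) 1) :
    0 < ∑ V ∈ W.powerset, (-1) ^ #V * t ^ (∑ j ∈ V, p j) / (a + #V) := by
  refine sum_div_pos_of_sum_mul_rpow_pos _ _ _ (fun V _ ↦ by positivity) fun x hx ↦ ?_
  have hfactor : ∀ j ∈ W, 0 < 1 - x * t ^ p j := fun j hj ↦ by
    have := Real.rpow_lt_one ht.1.le ht.2 (hp j hj)
    nlinarith [hx.2, Real.rpow_nonneg ht.1.le (p j)]
  calc 0 < x ^ (a - 1) * ∏ j ∈ W, (1 - x * t ^ p j) :=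
        mul_pos (Real.rpow_pos_of_pos hx.1 _) (prod_pos hfactor)
    _ = ∑ V ∈ W.powerset, (-1) ^ #V * t ^ (∑ j ∈ V, p j) * x ^ (a + #V - 1) := by
        rw [prod_one_sub_eq_sum_powerset, mul_sum]
        refine sum_congr rfl fun V _ ↦ ?_
        rw [prod_mul_distrib, prod_const, ← Real.rpow_sum_of_pos ht.1, add_sub_right_comm,
          Real.rpow_add hx.1, Real.rpow_natCast]
        ring

theorem sum_powerset_neg_one_pow_div_mul_pos {a c : ℝ} (ha : 0 < a) (hc : 0 < c) :
    0 < ∑ V ∈ W.powerset, (-1) ^ #V / ((a + #V) * (c + ∑ j ∈ V, p j)) := by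
  simp_rw [← div_div]
  refine sum_div_pos_of_sum_mul_rpow_pos _ _ _ (fun V hV ↦ ?_) fun t ht ↦ ?_
  · have := sum_nonneg fun j hj ↦ (hp j (mem_powerset.1 hV hj)).le
    linarith
  calc 0 < t ^ (c - 1) * ∑ V ∈ W.powerset, (-1) ^ #V * t ^ (∑ j ∈ V, p j) / (a + #V) :=
        mul_pos (Real.rpow_pos_of_pos ht.1 _)
          (sum_powerset_neg_one_pow_mul_rpow_div_pos W hp ha ht)
    _ = ∑ V ∈ W.powerset, (-1) ^ #V / (a + #V) * t ^ (c + ∑ j ∈ V, p j - 1) := by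
        rw [mul_sum]
        refine sum_congr rfl fun V _ ↦ ?_
        rw [add_sub_right_comm, Real.rpow_add ht.1]
        ring

end PowersetSums

theorem Phi_pos_general {ι : Type*} (T : Finset ι)
    (p : ι → ℝ) (hp : ∀ j ∈ T, 0 < p j) (s : ℝ) (hs : 0 < s)
    (r : ℕ) (hr : r ≤ T.card) :
    0 < ∑ U ∈ T.powerset,
        (-1 : ℝ) ^ (U.card - r) * (U.card.choose r : ℝ) /
          (((U.card : ℝ) + 2) * (s + ∑ j ∈ U, p j)) := by
  classical
  simp_rw [mul_comm _ ((Nat.choose _ r : ℝ)), mul_div_assoc, ← nsmul_eq_mul,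
    sum_powerset_choose_smul]
  refine sum_pos (fun S hS ↦ ?_) (powersetCard_nonempty.2 hr)
  obtain ⟨hST, rfl⟩ := mem_powersetCard.1 hS
  have hpS : 0 < s + ∑ j ∈ S, p j := by
    have := sum_nonneg fun j hj ↦ (hp j (hST hj)).le
    linarith
  refine (sum_powerset_neg_one_pow_div_mul_pos (T \ S) (fun j hj ↦ hp j (sdiff_subset hj))
    (a := #S + 2) (by positivity) hpS).trans_eq (sum_congr rfl fun V hV ↦ ?_)
  have hdisj : Disjoint S V := disjoint_of_subset_right (mem_powerset.1 hV) disjoint_sdiff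
  rw [card_union_of_disjoint hdisj, sum_union hdisj, Nat.add_sub_cancel_left]
  push_cast
  ring

/-- Strict positivity of `Φ_r`: for a finite set `T` with strictly positive
weights `p_j`, `s > 0` and `0 ≤ r ≤ |T|`,
`Φ_r = Σ_{U⊆T} (-1)^{|U|-r} binom(|U|,r) / ((|U|+2)(s+p_U)) > 0`
(with `binom(|U|,r) = 0` for `|U| < r` and `p_U = Σ_{j∈U} p_j`). -/
theorem Phi_pos {ι : Type*} [DecidableEq ι] (T : Finset ι)
    (p : ι → ℝ) (hp : ∀ j ∈ T, 0 < p j) (s : ℝ) (hs : 0 < s)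
    (r : ℕ) (hr : r ≤ T.card) :
    0 < ∑ U ∈ T.powerset,
        (-1 : ℝ) ^ (U.card - r) * (U.card.choose r : ℝ) /
          (((U.card : ℝ) + 2) * (s + ∑ j ∈ U, p j)) :=
  Phi_pos_general T p hp s hs r hr
end

section
/- Let T be a finite set, let (p_j)_{j∈T} be strictly positive reals, let s > 0, and let r be an integer with 0 ≤ r ≤ |T|. Then Ψ_r := Σ_{U ⊆ T} (−1)^{|U|−r} binom(|U|, r) / (s + p_U)² > 0, where p_U = Σ_{j∈U} p_j and binom(|U|, r) = 0 when |U| < r. -/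
/-!
Since `1 / c ^ 2 = ∫₀^∞ t e^{-ct} dt`, the sum equals `∫₀^∞ t e^{-st} P(t) dt`, where `P(t)` is
the same alternating sum with `1 / (s + p_U) ^ 2` replaced by `∏_{j ∈ U} y_j`,
`y_j = e^{-p_j t} ∈ (0, 1)`. By inclusion–exclusion
`P(t) = ∑_{|V| = r} ∏_{j ∈ V} y_j ∏_{j ∈ T \ V} (1 - y_j)`, the probability that exactly `r` of
independent events with probabilities `y_j` occur, which is positive.
-/

open Finset MeasureTheory Real

section Combinatorics

variable {ι R : Type*}

theorem sum_powerset_neg_one_pow_mul_choose_mul_prod [DecidableEq ι] [CommRing R]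
    (T : Finset ι) (r : ℕ) (y : ι → R) :
    ∑ U ∈ T.powerset, (-1) ^ (#U - r) * ((#U).choose r : R) * ∏ j ∈ U, y j =
      ∑ V ∈ T.powersetCard r, (∏ j ∈ V, y j) * ∏ j ∈ T \ V, (1 - y j) := calc
  _ = ∑ U ∈ T.powerset, ∑ V ∈ U.powersetCard r, (-1) ^ #(U \ V) * ∏ j ∈ U, y j := by
    refine sum_congr rfl fun U _ => ?_
    have card_sdiff_eq : ∀ V ∈ U.powersetCard r, #(U \ V) = #U - r := fun V hV => by
      rw [mem_powersetCard] at hV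
      rw [card_sdiff_of_subset hV.1, hV.2]
    rw [sum_congr rfl fun V hV => by rw [card_sdiff_eq V hV], sum_const, card_powersetCard,
      nsmul_eq_mul]
    ring
  _ = ∑ V ∈ T.powersetCard r, ∑ U ∈ Icc V T, (-1) ^ #(U \ V) * ∏ j ∈ U, y j := by
    refine sum_comm' fun U V => ?_
    simp only [mem_powerset, mem_powersetCard, mem_Icc]
    exact ⟨fun ⟨hUT, hVU, hV⟩ => ⟨⟨hVU, hUT⟩, hVU.trans hUT, hV⟩,
      fun ⟨⟨hVU, hUT⟩, _, hV⟩ => ⟨hUT, hVU, hV⟩⟩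
  _ = ∑ V ∈ T.powersetCard r,
        (∏ j ∈ V, y j) * ∑ W ∈ (T \ V).powerset, (-1) ^ #W * ∏ j ∈ W, y j := by
    refine sum_congr rfl fun V hV => ?_
    have disjoint_of_mem {W} (hW : W ∈ (T \ V).powerset) : Disjoint V W :=
      disjoint_of_subset_right (mem_powerset.1 hW) disjoint_sdiff
    rw [Icc_eq_image_powerset (mem_powersetCard.1 hV).1, sum_image fun W₁ h₁ W₂ h₂ h => by
      rw [← union_sdiff_cancel_left (disjoint_of_mem h₁), h,
        union_sdiff_cancel_left (disjoint_of_mem h₂)], mul_sum]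
    refine sum_congr rfl fun W hW => ?_
    rw [union_sdiff_cancel_left (disjoint_of_mem hW), prod_union (disjoint_of_mem hW)]
    ring
  _ = _ := by simp [prod_sub]

theorem sum_powerset_neg_one_pow_mul_choose_mul_prod_pos [CommRing R] [PartialOrder R]
    [IsStrictOrderedRing R] {T : Finset ι} {r : ℕ} (hr : r ≤ #T) {y : ι → R}
    (hy₀ : ∀ j ∈ T, 0 < y j) (hy₁ : ∀ j ∈ T, y j < 1) :
    0 < ∑ U ∈ T.powerset, (-1) ^ (#U - r) * ((#U).choose r : R) * ∏ j ∈ U, y j := by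
  classical
  rw [sum_powerset_neg_one_pow_mul_choose_mul_prod]
  refine sum_pos (fun V hV => mul_pos (prod_pos fun j hj => ?_) (prod_pos fun j hj => ?_))
    (powersetCard_nonempty.2 hr)
  · exact hy₀ j ((mem_powersetCard.1 hV).1 hj)
  · exact sub_pos.2 (hy₁ j (mem_sdiff.1 hj).1)

end Combinatorics

theorem integral_mul_exp_neg_mul_Ioi {c : ℝ} (hc : 0 < c) :
    ∫ t in Set.Ioi (0 : ℝ), t * exp (-(c * t)) = (c ^ 2)⁻¹ := by
  simpa [Gamma_two, show (2 : ℝ) - 1 = 1 by norm_num] using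
    integral_rpow_mul_exp_neg_mul_Ioi two_pos hc

theorem integrableOn_mul_exp_neg_mul_Ioi {c : ℝ} (hc : 0 < c) :
    IntegrableOn (fun t : ℝ => t * exp (-(c * t))) (Set.Ioi 0) := by
  simpa using integrableOn_rpow_mul_exp_neg_mul_rpow (s := 1) (p := 1) (by norm_num) one_pos hc

theorem setIntegral_pos_of_forall_pos {X : Type*} [MeasurableSpace X] {μ : Measure X}
    {s : Set X} {f : X → ℝ} (hs : MeasurableSet s) (hμs : μ s ≠ 0) (hfi : IntegrableOn f s μ)
    (hf : ∀ x ∈ s, 0 < f x) : 0 < ∫ x in s, f x ∂μ := by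
  have support_inter : Function.support f ∩ s = s :=
    Set.inter_eq_right.2 fun x hx => (hf x hx).ne'
  rw [setIntegral_pos_iff_support_of_nonneg_ae
    ((ae_restrict_iff' hs).2 (ae_of_all _ fun x hx => (hf x hx).le)) hfi, support_inter]
  exact pos_iff_ne_zero.2 hμs

theorem Psi_pos_general {ι : Type*} (T : Finset ι)
    (p : ι → ℝ) (hp : ∀ j ∈ T, 0 < p j) (s : ℝ) (hs : 0 < s)
    (r : ℕ) (hr : r ≤ T.card) :
    0 < ∑ U ∈ T.powerset,
        (-1 : ℝ) ^ (U.card - r) * (U.card.choose r : ℝ) /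
          (s + ∑ j ∈ U, p j) ^ 2 := by
  set a : Finset ι → ℝ := fun U => (-1) ^ (#U - r) * ((#U).choose r : ℝ)
  have denom_pos : ∀ U ∈ T.powerset, 0 < s + ∑ j ∈ U, p j := fun U hU =>
    add_pos_of_pos_of_nonneg hs (sum_nonneg fun j hj => (hp j (mem_powerset.1 hU hj)).le)
  have term_eq : ∀ U ∈ T.powerset, a U / (s + ∑ j ∈ U, p j) ^ 2 =
      ∫ t in Set.Ioi 0, a U * (t * exp (-((s + ∑ j ∈ U, p j) * t))) := fun U hU => by
    rw [integral_const_mul, integral_mul_exp_neg_mul_Ioi (denom_pos U hU), div_eq_mul_inv]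
  have integrand_eq : ∀ t U, a U * (t * exp (-((s + ∑ j ∈ U, p j) * t))) =
      t * exp (-(s * t)) * (a U * ∏ j ∈ U, exp (-(p j * t))) := fun t U => by
    rw [← exp_sum, sum_neg_distrib, ← sum_mul, add_mul, neg_add, exp_add]
    ring
  have integrable_term := fun U hU =>
    (integrableOn_mul_exp_neg_mul_Ioi (denom_pos U hU)).const_mul (a U)
  rw [sum_congr rfl term_eq, ← integral_finsetSum _ integrable_term]
  refine setIntegral_pos_of_forall_pos measurableSet_Ioi (by simp)
    (integrable_finsetSum _ integrable_term) fun t (ht : 0 < t) => ?_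
  simp only [integrand_eq, ← mul_sum]
  exact mul_pos (mul_pos ht (exp_pos _)) <| sum_powerset_neg_one_pow_mul_choose_mul_prod_pos hr
    (fun j _ => exp_pos _) fun j hj => exp_lt_one_iff.2 (neg_neg_of_pos (mul_pos (hp j hj) ht))

/-- Strict positivity of `Ψ_r`: for a finite set `T` with strictly positive
weights `p_j`, `s > 0` and `0 ≤ r ≤ |T|`,
`Ψ_r = Σ_{U⊆T} (-1)^{|U|-r} binom(|U|,r) / (s+p_U)² > 0`
(with `binom(|U|,r) = 0` for `|U| < r` and `p_U = Σ_{j∈U} p_j`). -/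
theorem Psi_pos {ι : Type*} [DecidableEq ι] (T : Finset ι)
    (p : ι → ℝ) (hp : ∀ j ∈ T, 0 < p j) (s : ℝ) (hs : 0 < s)
    (r : ℕ) (hr : r ≤ T.card) :
    0 < ∑ U ∈ T.powerset,
        (-1 : ℝ) ^ (U.card - r) * (U.card.choose r : ℝ) /
          (s + ∑ j ∈ U, p j) ^ 2 :=
  Psi_pos_general T p hp s hs r hr
end

section
/- Let T be a finite set, let (p_j)_{j∈T} be strictly positive reals, and let r be an integer with 0 ≤ r ≤ |T|. Then for all t ≥ 0 and 0 ≤ y ≤ 1, B_r(y,t) := Σ_{U ⊆ T} (−1)^{|U|−r} binom(|U|, r) y^{|U|} e^{−p_U t} = y^r · Σ_{W ⊆ T, |W| = r} e^{−p_W t} · Π_{j ∈ T \ W} (1 − y e^{−p_j t}), where p_U = Σ_{j∈U} p_j and binom(|U|, r) = 0 when |U| < r. -/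
open Finset Real

lemma B_aux {ι : Type*} [DecidableEq ι] (T : Finset ι) (x : ι → ℝ) (r : ℕ) :
    ∑ U ∈ T.powerset, (-1 : ℝ) ^ (U.card - r) * (U.card.choose r : ℝ) * ∏ j ∈ U, x j
      = ∑ W ∈ T.powersetCard r, (∏ j ∈ W, x j) * ∏ j ∈ T \ W, (1 - x j) := by
  have hL : ∀ U ∈ T.powerset,
      (-1 : ℝ) ^ (U.card - r) * (U.card.choose r : ℝ) * ∏ j ∈ U, x j
        = ∑ W ∈ U.powersetCard r, (-1 : ℝ) ^ (U.card - r) * ∏ j ∈ U, x j := by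
    intro U _
    rw [Finset.sum_const, Finset.card_powersetCard, nsmul_eq_mul]
    ring
  have hR : ∀ W ∈ T.powersetCard r,
      (∏ j ∈ W, x j) * ∏ j ∈ T \ W, (1 - x j)
        = ∑ V ∈ (T \ W).powerset,
            (∏ j ∈ W, x j) * ((-1 : ℝ) ^ V.card * ∏ j ∈ V, x j) := by
    intro W _
    have h1 : ∀ j ∈ T \ W, (1 : ℝ) - x j = -x j + 1 := fun j _ => by ring
    rw [Finset.prod_congr rfl h1, Finset.prod_add, Finset.mul_sum]
    refine Finset.sum_congr rfl fun V hV => ?_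
    have : ∏ j ∈ V, (-x j) = (-1 : ℝ) ^ V.card * ∏ j ∈ V, x j := by
      rw [← Finset.prod_const (-1 : ℝ), ← Finset.prod_mul_distrib]
      simp
    simp [this]
  rw [Finset.sum_congr rfl hL, Finset.sum_congr rfl hR, Finset.sum_sigma',
    Finset.sum_sigma']
  refine Finset.sum_bij' (fun a _ => (⟨a.2, a.1 \ a.2⟩ : Σ _ : Finset ι, Finset ι))
    (fun b _ => (⟨b.1 ∪ b.2, b.1⟩ : Σ _ : Finset ι, Finset ι)) ?_ ?_ ?_ ?_ ?_
  · rintro ⟨U, W⟩ h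
    simp only [Finset.mem_sigma, Finset.mem_powerset, Finset.mem_powersetCard] at h ⊢
    obtain ⟨hUT, hWU, hWr⟩ := h
    exact ⟨⟨hWU.trans hUT, hWr⟩, Finset.sdiff_subset_sdiff hUT le_rfl⟩
  · rintro ⟨W, V⟩ h
    simp only [Finset.mem_sigma, Finset.mem_powerset, Finset.mem_powersetCard] at h ⊢
    obtain ⟨⟨hWT, hWr⟩, hV⟩ := h
    exact ⟨Finset.union_subset hWT (hV.trans (Finset.sdiff_subset)),
      Finset.subset_union_left, hWr⟩
  · rintro ⟨U, W⟩ h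
    simp only [Finset.mem_sigma, Finset.mem_powerset, Finset.mem_powersetCard] at h
    obtain ⟨hUT, hWU, hWr⟩ := h
    simp [Finset.union_sdiff_of_subset hWU]
  · rintro ⟨W, V⟩ h
    simp only [Finset.mem_sigma, Finset.mem_powerset, Finset.mem_powersetCard] at h
    obtain ⟨⟨hWT, hWr⟩, hV⟩ := h
    have hd : Disjoint W V :=
      Finset.disjoint_of_subset_right hV (Finset.disjoint_sdiff)
    simp [Finset.union_sdiff_cancel_left hd]
  · rintro ⟨U, W⟩ h
    simp only [Finset.mem_sigma, Finset.mem_powerset, Finset.mem_powersetCard] at h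
    obtain ⟨hUT, hWU, hWr⟩ := h
    have hcard : (U \ W).card = U.card - r := by
      rw [Finset.card_sdiff_of_subset hWU, hWr]
    have hprod : (∏ j ∈ U \ W, x j) * ∏ j ∈ W, x j = ∏ j ∈ U, x j :=
      Finset.prod_sdiff hWU
    rw [hcard, ← hprod]
    ring

/-- Positive product form of the alternating subset sum `B_r(y,t)`: for a
finite set `T` with strictly positive weights `p_j`, `0 ≤ r ≤ |T|`, `t ≥ 0`
and `0 ≤ y ≤ 1`,
`Σ_{U⊆T} (-1)^{|U|-r} binom(|U|,r) y^{|U|} e^{-p_U t}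
  = y^r Σ_{W⊆T, |W|=r} e^{-p_W t} Π_{j∈T\W} (1 - y e^{-p_j t})`. -/
theorem B_positive_form {ι : Type*} [DecidableEq ι] (T : Finset ι)
    (p : ι → ℝ) (hp : ∀ j ∈ T, 0 < p j) (r : ℕ) (hr : r ≤ T.card)
    (t : ℝ) (ht : 0 ≤ t) (y : ℝ) (hy0 : 0 ≤ y) (hy1 : y ≤ 1) :
    ∑ U ∈ T.powerset,
        (-1 : ℝ) ^ (U.card - r) * (U.card.choose r : ℝ) * y ^ U.card *
          Real.exp (-(∑ j ∈ U, p j) * t) =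
      y ^ r *
        ∑ W ∈ T.powersetCard r,
          Real.exp (-(∑ j ∈ W, p j) * t) *
            ∏ j ∈ T \ W, (1 - y * Real.exp (-(p j) * t)) := by
  set x : ι → ℝ := fun j => y * Real.exp (-(p j) * t) with hx
  have hxprod : ∀ S : Finset ι, y ^ S.card * Real.exp (-(∑ j ∈ S, p j) * t)
      = ∏ j ∈ S, x j := by
    intro S
    have : Real.exp (-(∑ j ∈ S, p j) * t) = ∏ j ∈ S, Real.exp (-(p j) * t) := by
      rw [← Real.exp_sum]
      congr 1
      rw [← Finset.sum_mul, ← Finset.sum_neg_distrib]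
    rw [this, ← Finset.prod_const y, ← Finset.prod_mul_distrib]
  calc ∑ U ∈ T.powerset,
        (-1 : ℝ) ^ (U.card - r) * (U.card.choose r : ℝ) * y ^ U.card *
          Real.exp (-(∑ j ∈ U, p j) * t)
      = ∑ U ∈ T.powerset,
        (-1 : ℝ) ^ (U.card - r) * (U.card.choose r : ℝ) * ∏ j ∈ U, x j := by
        refine Finset.sum_congr rfl fun U _ => ?_
        rw [← hxprod U]; ring
    _ = ∑ W ∈ T.powersetCard r, (∏ j ∈ W, x j) * ∏ j ∈ T \ W, (1 - x j) :=
        B_aux T x r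
    _ = y ^ r * ∑ W ∈ T.powersetCard r,
          Real.exp (-(∑ j ∈ W, p j) * t) *
            ∏ j ∈ T \ W, (1 - y * Real.exp (-(p j) * t)) := by
        rw [Finset.mul_sum]
        refine Finset.sum_congr rfl fun W hW => ?_
        have hWr : W.card = r := (Finset.mem_powersetCard.mp hW).2
        have h2 : ∏ j ∈ W, x j = y ^ r * Real.exp (-(∑ j ∈ W, p j) * t) := by
          rw [← hxprod, hWr]
        rw [h2]
        simp only [hx]
        ring
end

section
/- Let T be a finite set, let (p_j)_{j∈T} be strictly positive reals, and let r be an integer with 0 ≤ r ≤ |T|. Then for every t > 0 and every y with 0 < y ≤ 1, B_r(y,t) = Σ_{U ⊆ T} (−1)^{|U|−r} binom(|U|, r) y^{|U|} e^{−p_U t} > 0. -/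
open Finset Real

private lemma sign_eq (n r : ℕ) :
    (-1:ℝ) ^ (n - r) * (n.choose r : ℝ) = (-1)^r * (-1)^n * (n.choose r : ℝ) := by
  rcases lt_or_ge n r with h | h
  · simp [Nat.choose_eq_zero_of_lt h]
  · congr 1
    have h2 : (-1:ℝ)^r * (-1)^r = 1 := by
      rw [← pow_add, ← two_mul, pow_mul]; norm_num
    calc (-1:ℝ)^(n-r) = (-1:ℝ)^(n-r) * ((-1)^r * (-1)^r) := by rw [h2, mul_one]
      _ = ((-1:ℝ)^(n-r) * (-1)^r) * (-1)^r := by ring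
      _ = (-1:ℝ)^r * (-1)^n := by rw [← pow_add, Nat.sub_add_cancel h]; ring

private lemma prod_neg' {ι : Type*} (V : Finset ι) (x : ι → ℝ) :
    ∏ j ∈ V, (-x j) = (-1:ℝ) ^ V.card * ∏ j ∈ V, x j := by
  calc ∏ j ∈ V, (-x j) = ∏ j ∈ V, ((-1) * x j) := by
        refine Finset.prod_congr rfl fun j _ => by ring
    _ = (∏ _j ∈ V, (-1:ℝ)) * ∏ j ∈ V, x j := Finset.prod_mul_distrib
    _ = (-1:ℝ) ^ V.card * ∏ j ∈ V, x j := by rw [Finset.prod_const]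

private lemma sum_neg_pow_prod {ι : Type*} [DecidableEq ι] (s : Finset ι) (x : ι → ℝ) :
    ∑ V ∈ s.powerset, (-1 : ℝ) ^ V.card * ∏ j ∈ V, x j = ∏ j ∈ s, (1 - x j) := by
  have h := Finset.prod_add (fun j => -x j) (fun _ => (1:ℝ)) s
  simp only [Finset.prod_const_one, mul_one] at h
  calc ∑ V ∈ s.powerset, (-1 : ℝ) ^ V.card * ∏ j ∈ V, x j
      = ∑ V ∈ s.powerset, ∏ j ∈ V, (-x j) := by
        refine Finset.sum_congr rfl fun V _ => (prod_neg' V x).symm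
    _ = ∏ j ∈ s, (-x j + 1) := h.symm
    _ = ∏ j ∈ s, (1 - x j) := Finset.prod_congr rfl fun j _ => by ring

private lemma key {ι : Type*} [DecidableEq ι] (T : Finset ι) (x : ι → ℝ) (r : ℕ) :
    ∑ U ∈ T.powerset, (-1:ℝ) ^ (U.card - r) * (U.card.choose r : ℝ) * ∏ j ∈ U, x j
      = ∑ S ∈ T.powersetCard r, (∏ j ∈ S, x j) * ∏ j ∈ T \ S, (1 - x j) := by
  calc ∑ U ∈ T.powerset, (-1:ℝ) ^ (U.card - r) * (U.card.choose r : ℝ) * ∏ j ∈ U, x j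
      = ∑ U ∈ T.powerset, ∑ S ∈ T.powersetCard r,
          if S ⊆ U then (-1:ℝ)^r * (-1)^U.card * ∏ j ∈ U, x j else 0 := by
        refine Finset.sum_congr rfl fun U hU => ?_
        rw [mem_powerset] at hU
        have hfil : (T.powersetCard r).filter (· ⊆ U) = U.powersetCard r := by
          ext S
          simp only [mem_filter, mem_powersetCard]
          exact ⟨fun ⟨⟨_, hc⟩, hSU⟩ => ⟨hSU, hc⟩, fun ⟨hSU, hc⟩ => ⟨⟨hSU.trans hU, hc⟩, hSU⟩⟩
        rw [← Finset.sum_filter, hfil, Finset.sum_const, Finset.card_powersetCard,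
          sign_eq, nsmul_eq_mul]
        ring
    _ = ∑ S ∈ T.powersetCard r, ∑ U ∈ T.powerset,
          if S ⊆ U then (-1:ℝ)^r * (-1)^U.card * ∏ j ∈ U, x j else 0 :=
        Finset.sum_comm
    _ = ∑ S ∈ T.powersetCard r, (∏ j ∈ S, x j) * ∏ j ∈ T \ S, (1 - x j) := by
        refine Finset.sum_congr rfl fun S hS => ?_
        rw [mem_powersetCard] at hS
        obtain ⟨hST, hcard⟩ := hS
        rw [← Finset.sum_filter]
        have hbij : ∑ U ∈ T.powerset with S ⊆ U, (-1:ℝ)^r * (-1)^U.card * ∏ j ∈ U, x j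
            = ∑ V ∈ (T \ S).powerset, (-1:ℝ)^r * (-1)^(S ∪ V).card * ∏ j ∈ S ∪ V, x j := by
          refine Finset.sum_nbij' (fun U => U \ S) (fun V => S ∪ V) ?_ ?_ ?_ ?_ ?_
          · intro U hU
            simp only [mem_filter, mem_powerset] at hU
            exact mem_powerset.2 (sdiff_subset_sdiff hU.1 le_rfl)
          · intro V hV
            simp only [mem_powerset] at hV
            refine mem_filter.2 ⟨mem_powerset.2 (union_subset hST (hV.trans sdiff_subset)), subset_union_left⟩
          · intro U hU
            simp only [mem_filter, mem_powerset] at hU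
            exact union_sdiff_of_subset hU.2
          · intro V hV
            simp only [mem_powerset] at hV
            have : Disjoint S V := disjoint_of_subset_right hV sdiff_disjoint.symm
            rw [union_sdiff_cancel_left this]
          · intro U hU
            simp only [mem_filter, mem_powerset] at hU
            rw [union_sdiff_of_subset hU.2]
        rw [hbij]
        have hdisj : ∀ V ∈ (T \ S).powerset, Disjoint S V := fun V hV =>
          disjoint_of_subset_right (mem_powerset.1 hV) sdiff_disjoint.symm
        calc ∑ V ∈ (T \ S).powerset, (-1:ℝ)^r * (-1)^(S ∪ V).card * ∏ j ∈ S ∪ V, x j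
            = ∑ V ∈ (T \ S).powerset, (∏ j ∈ S, x j) * ((-1)^V.card * ∏ j ∈ V, x j) := by
              refine Finset.sum_congr rfl fun V hV => ?_
              rw [Finset.card_union_of_disjoint (hdisj V hV),
                Finset.prod_union (hdisj V hV), hcard, pow_add]
              have h2 : (-1:ℝ)^r * (-1)^r = 1 := by
                rw [← pow_add, ← two_mul, pow_mul]; norm_num
              calc (-1:ℝ)^r * ((-1)^r * (-1)^V.card) * ((∏ j ∈ S, x j) * ∏ j ∈ V, x j)
                  = ((-1:ℝ)^r * (-1)^r) * ((-1)^V.card * ((∏ j ∈ S, x j) * ∏ j ∈ V, x j)) := by ring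
                _ = (∏ j ∈ S, x j) * ((-1)^V.card * ∏ j ∈ V, x j) := by rw [h2]; ring
          _ = (∏ j ∈ S, x j) * ∑ V ∈ (T \ S).powerset, (-1:ℝ)^V.card * ∏ j ∈ V, x j :=
              (Finset.mul_sum _ _ _).symm
          _ = (∏ j ∈ S, x j) * ∏ j ∈ T \ S, (1 - x j) := by rw [sum_neg_pow_prod]

/-- Strict positivity of `B_r(y,t)` for `t > 0` and `0 < y ≤ 1`:
`B_r(y,t) = Σ_{U⊆T} (-1)^{|U|-r} binom(|U|,r) y^{|U|} e^{-p_U t} > 0`,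
where `T` is a finite set with strictly positive weights `p_j`,
`0 ≤ r ≤ |T|`, and `p_U = Σ_{j∈U} p_j`. -/
theorem B_pos {ι : Type*} [DecidableEq ι] (T : Finset ι)
    (p : ι → ℝ) (hp : ∀ j ∈ T, 0 < p j) (r : ℕ) (hr : r ≤ T.card)
    (t : ℝ) (ht : 0 < t) (y : ℝ) (hy0 : 0 < y) (hy1 : y ≤ 1) :
    0 < ∑ U ∈ T.powerset,
        (-1 : ℝ) ^ (U.card - r) * (U.card.choose r : ℝ) * y ^ U.card *
          Real.exp (-(∑ j ∈ U, p j) * t) := by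
  set x : ι → ℝ := fun j => y * Real.exp (-(p j) * t) with hx
  have hrw : ∑ U ∈ T.powerset,
        (-1 : ℝ) ^ (U.card - r) * (U.card.choose r : ℝ) * y ^ U.card *
          Real.exp (-(∑ j ∈ U, p j) * t)
      = ∑ U ∈ T.powerset, (-1:ℝ) ^ (U.card - r) * (U.card.choose r : ℝ) * ∏ j ∈ U, x j := by
    refine Finset.sum_congr rfl fun U _ => ?_
    have : ∏ j ∈ U, x j = y ^ U.card * Real.exp (-(∑ j ∈ U, p j) * t) := by
      rw [hx]
      rw [Finset.prod_mul_distrib, Finset.prod_const, ← Real.exp_sum]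
      congr 1
      rw [neg_mul, ← neg_mul, ← Finset.sum_neg_distrib, Finset.sum_mul]
    rw [this]; ring
  rw [hrw, key]
  have hx01 : ∀ j ∈ T, 0 < x j ∧ x j < 1 := by
    intro j hj
    constructor
    · exact mul_pos hy0 (Real.exp_pos _)
    · have : Real.exp (-(p j) * t) < 1 := by
        rw [Real.exp_lt_one_iff]
        have := mul_pos (hp j hj) ht
        nlinarith
      calc y * Real.exp (-(p j) * t) ≤ 1 * Real.exp (-(p j) * t) := by
            exact mul_le_mul_of_nonneg_right hy1 (Real.exp_pos _).le
        _ < 1 := by simpa using this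
  refine Finset.sum_pos (fun S hS => ?_) ((Finset.powersetCard_nonempty).2 hr)
  rw [mem_powersetCard] at hS
  refine mul_pos (Finset.prod_pos fun j hj => (hx01 j (hS.1 hj)).1)
    (Finset.prod_pos fun j hj => ?_)
  have := hx01 j (mem_sdiff.1 hj).1
  linarith [this.2]
end

section
/- Let N ≥ 2 and let q ∈ Δ_N° be nonuniform; put p(θ) = u + θ(q − u). If 0 < θ_1 < θ_2 ≤ 1, then for every capacity 1 ≤ C < N one has H_C(p(θ_2)) > H_C(p(θ_1)); equivalently, 1 − H_C(p(θ_2)) < 1 − H_C(p(θ_1)). That is, the stationary move-to-front search cost under p(θ_2) is strictly smaller in the usual stochastic order than under p(θ_1). -/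
/-!
Along the ray `p(θ) = u + θ (q - u)` one has `θ p'(θ) = p(θ) - u`, so `N θ` times the derivative
of `H_C(p(θ))` is `∑_m α_m ∑_{|R| = m} (N S₂/S₁ + |R| S₂/S₁² - 2)`, where `S_k = ∑_{i ∈ R} p_i^k`.
By Lagrange's identity `|R| S₂ - S₁² = ½ ∑_{a,b ∈ R} (p_a - p_b)²` this is
`½ ∑_{a,b} (p_a - p_b)² K_{ab}` plus `∑_m α_m ∑_{|R| = m} (N S₁/|R| - 1)`, which vanishes because
`∑ p_i = 1`; here `K_{ab}` is the `α`-weighted sum of `N/(|R| S₁) + 1/S₁²` over the sets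
`R ⊇ {a, b}`. Since `|α_m| = C(m - 2, L - 2)` counts the ways to choose `B ⊆ R \ {a, b}` with
`|B| = L - 2`, writing `R = {a, b} ∪ B ∪ B'` turns `K_{ab}` into a sum over `B` of alternating sums
`∑_{B' ⊆ U} (-1)^|B'| / ((c + w(B')) (d + v(B')))` with positive weights. Such a sum equals
`∫∫ e^{-cs-dt} ∏_{a ∈ U} (1 - e^{-w_a s - v_a t}) ds dt > 0`; positivity follows by induction on
`U` from the recursion obtained by multiplying with `c`. Hence the derivative is positive whenever
`p(θ)` is nonuniform.
-/

open Finset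

namespace HitRate

section PowersetSums

variable {ι : Type*} [DecidableEq ι]

lemma sum_powerset_filter_superset {s S : Finset ι} (hS : S ⊆ s) (G : Finset ι → ℝ) :
    ∑ A ∈ s.powerset with S ⊆ A, G A = ∑ A ∈ (s \ S).powerset, G (S ∪ A) := by
  refine (sum_nbij' (S ∪ ·) (· \ S) ?_ ?_ ?_ ?_ fun _ _ => rfl).symm
  · intro A hA
    rw [mem_powerset] at hA
    exact mem_filter.2 ⟨mem_powerset.2 (union_subset hS (hA.trans sdiff_subset)),
      subset_union_left⟩
  · intro A hA
    rw [mem_filter, mem_powerset] at hA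
    exact mem_powerset.2 (sdiff_subset_sdiff hA.1 le_rfl)
  · intro A hA
    exact union_sdiff_cancel_left (disjoint_sdiff.mono_right (mem_powerset.1 hA))
  · intro A hA
    exact union_sdiff_of_subset (mem_filter.1 hA).2

lemma sum_powersetCard_filter_superset {s S : Finset ι} (hS : S ⊆ s) {m : ℕ} (hm : #S ≤ m)
    (G : Finset ι → ℝ) :
    ∑ R ∈ s.powersetCard m with S ⊆ R, G R = ∑ A ∈ (s \ S).powersetCard (m - #S), G (S ∪ A) := by
  rw [powersetCard_eq_filter, powersetCard_eq_filter, filter_comm, sum_filter,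
    sum_powerset_filter_superset hS, sum_filter]
  refine sum_congr rfl fun A hA => ?_
  rw [card_union_of_disjoint (disjoint_sdiff.mono_right (mem_powerset.1 hA))]
  simp only [show #S + #A = m ↔ #A = m - #S by omega]

lemma sum_powerset_neg_one_pow_mul_choose (T : Finset ι) (r : ℕ) (g : Finset ι → ℝ) :
    ∑ A ∈ T.powerset, (-1 : ℝ) ^ (#A - r) * (#A).choose r * g A =
      ∑ B ∈ T.powersetCard r, ∑ B' ∈ (T \ B).powerset, (-1 : ℝ) ^ #B' * g (B ∪ B') := by
  have hchoose (A : Finset ι) : ((#A).choose r : ℝ) = ∑ _B ∈ A.powersetCard r, 1 := by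
    simp [card_powersetCard]
  simp_rw [hchoose, mul_sum, mul_one, sum_mul]
  rw [sum_comm' (t' := T.powersetCard r) (s' := fun B => {A ∈ T.powerset | B ⊆ A})]
  · refine sum_congr rfl fun B hB => ?_
    rw [mem_powersetCard] at hB
    rw [sum_powerset_filter_superset hB.1]
    refine sum_congr rfl fun B' hB' => ?_
    rw [card_union_of_disjoint (disjoint_sdiff.mono_right (mem_powerset.1 hB')), hB.2,
      Nat.add_sub_cancel_left]
  · intro A B
    simp only [mem_powerset, mem_powersetCard, mem_filter]
    exact ⟨fun ⟨hA, hBA, hB⟩ => ⟨⟨hA, hBA⟩, hBA.trans hA, hB⟩,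
      fun ⟨⟨hA, hBA⟩, _, hB⟩ => ⟨hA, hBA, hB⟩⟩

lemma sum_mul_sum_powerset_erase_insert (U : Finset ι) (w : ι → ℝ) (F : Finset ι → ℝ) :
    ∑ a ∈ U, w a * ∑ B ∈ (U.erase a).powerset, F (insert a B) =
      ∑ B ∈ U.powerset, (∑ a ∈ B, w a) * F B := by
  have hinsert : ∀ a ∈ U, ∑ B ∈ (U.erase a).powerset, F (insert a B) =
      ∑ B ∈ U.powerset with {a} ⊆ B, F B := fun a ha => by
    rw [sum_powerset_filter_superset (singleton_subset_iff.2 ha), sdiff_singleton_eq_erase]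
    rfl
  rw [sum_congr rfl fun a ha => by rw [hinsert a ha]]
  simp_rw [mul_sum, sum_mul]
  refine sum_comm' fun a B => ?_
  simp only [mem_filter, mem_powerset, singleton_subset_iff]
  exact ⟨fun ⟨_, hB, ha⟩ => ⟨ha, hB⟩, fun ⟨ha, hB⟩ => ⟨hB ha, hB, ha⟩⟩

lemma sum_powerset_neg_one_pow_card_real (U : Finset ι) :
    ∑ B ∈ U.powerset, (-1 : ℝ) ^ #B = if U = ∅ then 1 else 0 := by
  exact_mod_cast sum_powerset_neg_one_pow_card

variable [Fintype ι]

lemma sum_powersetCard_sum {m : ℕ} (hm : 1 ≤ m) (f : ι → ℝ) :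
    ∑ R ∈ univ.powersetCard m, ∑ i ∈ R, f i =
      ((Fintype.card ι - 1).choose (m - 1) : ℝ) * ∑ i, f i := by
  rw [sum_comm' (t' := univ) (s' := fun i => {R ∈ univ.powersetCard m | {i} ⊆ R})]
  · rw [mul_sum]
    refine sum_congr rfl fun i _ => ?_
    rw [sum_const, nsmul_eq_mul, card_eq_sum_ones, Nat.cast_sum, Nat.cast_one,
      sum_powersetCard_filter_superset (subset_univ _) (by simpa using hm)]
    simp [card_powersetCard, card_univ_sdiff]
  · intro R i
    simp [singleton_subset_iff, and_comm]

lemma sum_sum_eq_sum_sum_ite_pair_subset (R : Finset ι) (F : ι → ι → ℝ) :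
    ∑ a ∈ R, ∑ b ∈ R, F a b = ∑ a, ∑ b, if {a, b} ⊆ R then F a b else 0 := by
  simp [insert_subset_iff, ite_and, sum_ite_mem]

end PowersetSums

lemma sum_sum_sub_sq {ι α : Type*} [CommRing α] (s : Finset ι) (f : ι → α) :
    ∑ a ∈ s, ∑ b ∈ s, (f a - f b) ^ 2 = 2 * (#s * ∑ a ∈ s, f a ^ 2 - (∑ a ∈ s, f a) ^ 2) := by
  simp only [sub_sq, sum_add_distrib, sum_sub_distrib, sum_const, nsmul_eq_mul, ← mul_sum,
    ← sum_mul]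
  ring

section AlternatingInverseSums

variable {ι : Type*} [DecidableEq ι] {w v : ι → ℝ} {c d : ℝ} {U : Finset ι}

noncomputable def altInvSum (w : ι → ℝ) (c : ℝ) (U : Finset ι) : ℝ :=
  ∑ B ∈ U.powerset, (-1) ^ #B / (c + ∑ a ∈ B, w a)

noncomputable def altInvMulSum (w v : ι → ℝ) (c d : ℝ) (U : Finset ι) : ℝ :=
  ∑ B ∈ U.powerset, (-1) ^ #B / ((c + ∑ a ∈ B, w a) * (d + ∑ a ∈ B, v a))

omit [DecidableEq ι] in
lemma add_sum_pos (hw : ∀ a ∈ U, 0 ≤ w a) (hc : 0 < c) {B : Finset ι} (hB : B ⊆ U) :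
    0 < c + ∑ a ∈ B, w a :=
  add_pos_of_pos_of_nonneg hc (sum_nonneg fun a ha => hw a (hB ha))

lemma altInvSum_add_erase (w : ι → ℝ) (c : ℝ) (U : Finset ι) (a : ι) :
    altInvSum w (c + w a) (U.erase a) =
      ∑ B ∈ (U.erase a).powerset, -((-1) ^ #(insert a B) / (c + ∑ x ∈ insert a B, w x)) := by
  refine sum_congr rfl fun B hB => ?_
  have ha : a ∉ B := fun h => notMem_erase a U (mem_powerset.1 hB h)
  rw [card_insert_of_notMem ha, sum_insert ha, pow_succ]
  ring

lemma altInvMulSum_add_erase (w v : ι → ℝ) (c d : ℝ) (U : Finset ι) (a : ι) :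
    altInvMulSum w v (c + w a) (d + v a) (U.erase a) =
      ∑ B ∈ (U.erase a).powerset, -((-1) ^ #(insert a B) /
        ((c + ∑ x ∈ insert a B, w x) * (d + ∑ x ∈ insert a B, v x))) := by
  refine sum_congr rfl fun B hB => ?_
  have ha : a ∉ B := fun h => notMem_erase a U (mem_powerset.1 hB h)
  rw [card_insert_of_notMem ha, sum_insert ha, sum_insert ha, pow_succ]
  ring

lemma mul_altInvSum (hw : ∀ a ∈ U, 0 ≤ w a) (hc : 0 < c) :
    c * altInvSum w c U =
      (if U = ∅ then 1 else 0) + ∑ a ∈ U, w a * altInvSum w (c + w a) (U.erase a) := by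
  simp_rw [altInvSum_add_erase]
  rw [sum_mul_sum_powerset_erase_insert U w fun B => -((-1) ^ #B / (c + ∑ x ∈ B, w x)),
    ← sum_powerset_neg_one_pow_card_real, altInvSum, mul_sum, ← sum_add_distrib]
  refine sum_congr rfl fun B hB => ?_
  have := (add_sum_pos hw hc (mem_powerset.1 hB)).ne'
  field_simp
  ring

lemma mul_altInvMulSum (hw : ∀ a ∈ U, 0 ≤ w a) (hv : ∀ a ∈ U, 0 ≤ v a) (hc : 0 < c)
    (hd : 0 < d) :
    c * altInvMulSum w v c d U =
      altInvSum v d U + ∑ a ∈ U, w a * altInvMulSum w v (c + w a) (d + v a) (U.erase a) := by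
  simp_rw [altInvMulSum_add_erase]
  rw [sum_mul_sum_powerset_erase_insert U w
      fun B => -((-1) ^ #B / ((c + ∑ x ∈ B, w x) * (d + ∑ x ∈ B, v x))),
    altInvSum, altInvMulSum, mul_sum, ← sum_add_distrib]
  refine sum_congr rfl fun B hB => ?_
  have := (add_sum_pos hw hc (mem_powerset.1 hB)).ne'
  have := (add_sum_pos hv hd (mem_powerset.1 hB)).ne'
  field_simp
  ring

lemma altInvSum_pos (hw : ∀ a ∈ U, 0 < w a) (hc : 0 < c) : 0 < altInvSum w c U := by
  induction U using Finset.strongInduction generalizing c with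
  | _ U ih =>
    have hrec := mul_altInvSum (fun a ha => (hw a ha).le) hc
    rcases U.eq_empty_or_nonempty with rfl | hU
    · simpa [altInvSum] using hc
    rw [if_neg hU.ne_empty, zero_add] at hrec
    refine pos_of_mul_pos_right (hrec ▸ sum_pos (fun a ha => mul_pos (hw a ha) ?_) hU) hc.le
    exact ih _ (erase_ssubset ha) (fun b hb => hw b (mem_of_mem_erase hb)) (by linarith [hw a ha])

lemma altInvMulSum_pos (hw : ∀ a ∈ U, 0 ≤ w a) (hv : ∀ a ∈ U, 0 < v a) (hc : 0 < c)
    (hd : 0 < d) : 0 < altInvMulSum w v c d U := by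
  induction U using Finset.strongInduction generalizing c d with
  | _ U ih =>
    have hrec := mul_altInvMulSum hw (fun a ha => (hv a ha).le) hc hd
    refine pos_of_mul_pos_right (hrec ▸ add_pos_of_pos_of_nonneg (altInvSum_pos hv hd)
      (sum_nonneg fun a ha => mul_nonneg (hw a ha) (ih _ (erase_ssubset ha) ?_ ?_ ?_ ?_).le)) hc.le
    · exact fun b hb => hw b (mem_of_mem_erase hb)
    · exact fun b hb => hv b (mem_of_mem_erase hb)
    · linarith [hw a ha]
    · linarith [hv a ha]

end AlternatingInverseSums

variable {N C : ℕ}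

/-- The coefficient `α_m` of the residual-subset formula, where `L = N - C + 1`. -/
def residualCoeff (L m : ℕ) : ℝ := (-1) ^ (m - L) * ((m - 2).choose (m - L) : ℝ)

noncomputable def residualSum (N C : ℕ) (f : Finset (Fin N) → ℝ) : ℝ :=
  ∑ m ∈ Icc (N - C + 1) N,
    residualCoeff (N - C + 1) m * ∑ R ∈ (univ : Finset (Fin N)).powersetCard m, f R

lemma hitRate_eq_residualSum (p : Fin N → ℝ) :
    hitRate N C p = residualSum N C fun R => (∑ i ∈ R, p i ^ 2) / ∑ i ∈ R, p i :=
  rfl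

lemma residualSum_congr {f g : Finset (Fin N) → ℝ} (h : ∀ R, R.Nonempty → f R = g R) :
    residualSum N C f = residualSum N C g := by
  refine sum_congr rfl fun m hm => congrArg _ (sum_congr rfl fun R hR => h R ?_)
  rw [← card_pos, (mem_powersetCard.1 hR).2]
  exact (Nat.succ_pos _).trans_le (mem_Icc.1 hm).1

lemma residualSum_add (f g : Finset (Fin N) → ℝ) :
    residualSum N C (fun R => f R + g R) = residualSum N C f + residualSum N C g := by
  simp only [residualSum, sum_add_distrib, mul_add]

lemma residualSum_const_mul (x : ℝ) (f : Finset (Fin N) → ℝ) :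
    residualSum N C (fun R => x * f R) = x * residualSum N C f := by
  simp only [residualSum, mul_sum]
  exact sum_congr rfl fun _ _ => sum_congr rfl fun _ _ => by ring

lemma residualSum_sum {κ : Type*} (s : Finset κ) (f : κ → Finset (Fin N) → ℝ) :
    residualSum N C (fun R => ∑ k ∈ s, f k R) = ∑ k ∈ s, residualSum N C (f k) := by
  simp only [residualSum, mul_sum]
  rw [sum_comm]
  exact sum_congr rfl fun _ _ => sum_comm

lemma _root_.HasDerivAt.residualSum {f : ℝ → Finset (Fin N) → ℝ} {f' : Finset (Fin N) → ℝ} {θ : ℝ}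
    (hf : ∀ R, R.Nonempty → HasDerivAt (fun t => f t R) (f' R) θ) :
    HasDerivAt (fun t => residualSum N C (f t)) (residualSum N C f') θ := by
  refine HasDerivAt.fun_sum fun m hm => (HasDerivAt.fun_sum fun R hR => hf R ?_).const_mul _
  rw [← card_pos, (mem_powersetCard.1 hR).2]
  exact (Nat.succ_pos _).trans_le (mem_Icc.1 hm).1

lemma residualSum_mul_sum_div_card_sub_one {p : Fin N → ℝ} (hp : ∑ i, p i = 1) :
    residualSum N C (fun R => N * (∑ i ∈ R, p i) / #R - 1) = 0 := by
  refine sum_eq_zero fun m hm' => mul_eq_zero_of_right _ ?_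
  have hm : 0 < m := (Nat.succ_pos _).trans_le (mem_Icc.1 hm').1
  have hN : 0 < N := hm.trans_le (mem_Icc.1 hm').2
  have hcount : (N : ℝ) * (N - 1).choose (m - 1) = N.choose m * m := by
    have := Nat.add_one_mul_choose_eq (N - 1) (m - 1)
    rw [Nat.sub_add_cancel hN, Nat.sub_add_cancel hm] at this
    exact_mod_cast this
  have hterm : ∀ R ∈ (univ : Finset (Fin N)).powersetCard m,
      N * (∑ i ∈ R, p i) / #R - 1 = N / m * ∑ i ∈ R, p i - 1 := fun R hR => by
    rw [(mem_powersetCard.1 hR).2, mul_div_right_comm]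
  rw [sum_congr rfl hterm, sum_sub_distrib, ← mul_sum, sum_powersetCard_sum hm, hp, sum_const,
    card_powersetCard]
  simp only [card_univ, Fintype.card_fin, nsmul_eq_mul, mul_one]
  field_simp
  linarith

lemma sum_Icc_residualCoeff_mul {L : ℕ} (hL : 2 ≤ L) (hLN : L ≤ N) (F : ℕ → ℝ) :
    ∑ m ∈ Icc L N, residualCoeff L m * F (m - 2) =
      ∑ j ∈ range (N - 1), (-1) ^ (j - (L - 2)) * (j.choose (L - 2) : ℝ) * F j := by
  have hlow : ∑ j ∈ Ico 0 (L - 2), (-1) ^ (j - (L - 2)) * (j.choose (L - 2) : ℝ) * F j = 0 :=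
    sum_eq_zero fun j hj => by simp [Nat.choose_eq_zero_of_lt (mem_Ico.1 hj).2]
  rw [range_eq_Ico, ← sum_Ico_consecutive _ (Nat.zero_le (L - 2)) (by omega : L - 2 ≤ N - 1),
    hlow, zero_add, ← Ico_add_one_right_eq_Icc, show L = L - 2 + 2 by omega,
    show N + 1 = N - 1 + 2 by omega, ← sum_Ico_add']
  refine sum_congr rfl fun j hj => ?_
  have hj : L - 2 ≤ j := (mem_Ico.1 hj).1
  rw [residualCoeff, Nat.add_sub_cancel, show j + 2 - (L - 2 + 2) = j - (L - 2) by omega,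
    Nat.choose_symm hj, Nat.add_sub_cancel]

lemma residualSum_ite_subset (hC1 : 1 ≤ C) (hCN : C < N) {S : Finset (Fin N)} (hS : #S = 2)
    (h : Finset (Fin N) → ℝ) :
    residualSum N C (fun R => if S ⊆ R then h R else 0) =
      ∑ B ∈ Sᶜ.powersetCard (N - C - 1), ∑ B' ∈ (Sᶜ \ B).powerset, (-1) ^ #B' * h (S ∪ B ∪ B') := by
  have hcompl : #Sᶜ = N - 2 := by rw [card_compl, Fintype.card_fin, hS]
  have hlevel : ∀ m ∈ Icc (N - C + 1) N,
      ∑ R ∈ (univ : Finset (Fin N)).powersetCard m, (if S ⊆ R then h R else 0) =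
        ∑ A ∈ Sᶜ.powersetCard (m - 2), h (S ∪ A) := fun m hm => by
    rw [← sum_filter, sum_powersetCard_filter_superset (subset_univ S) (by grind), hS,
      ← compl_eq_univ_sdiff]
  have hsubsets : ∑ A ∈ Sᶜ.powerset, (-1) ^ (#A - (N - C - 1)) * ((#A).choose (N - C - 1) : ℝ) *
        h (S ∪ A) = ∑ j ∈ range (N - 1), (-1) ^ (j - (N - C - 1)) *
          (j.choose (N - C - 1) : ℝ) * ∑ A ∈ Sᶜ.powersetCard j, h (S ∪ A) := by
    rw [sum_powerset, hcompl, show N - 2 + 1 = N - 1 by omega]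
    refine sum_congr rfl fun j _ => ?_
    rw [mul_sum]
    exact sum_congr rfl fun A hA => by rw [(mem_powersetCard.1 hA).2]
  rw [residualSum, sum_congr rfl fun m hm => by rw [hlevel m hm],
    sum_Icc_residualCoeff_mul (F := fun j => ∑ A ∈ Sᶜ.powersetCard j, h (S ∪ A)) (by omega)
      (by omega),
    show N - C + 1 - 2 = N - C - 1 by omega, ← hsubsets, sum_powerset_neg_one_pow_mul_choose]
  simp only [union_assoc]

noncomputable def pairWeight (N : ℕ) (p : Fin N → ℝ) (R : Finset (Fin N)) : ℝ :=
  N / (#R * ∑ i ∈ R, p i) + 1 / (∑ i ∈ R, p i) ^ 2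

lemma sum_powerset_neg_one_pow_mul_pairWeight (p : Fin N → ℝ) {X U : Finset (Fin N)}
    (hXU : Disjoint X U) :
    ∑ B ∈ U.powerset, (-1) ^ #B * pairWeight N p (X ∪ B) =
      N * altInvMulSum (fun _ => 1) p #X (∑ i ∈ X, p i) U +
        altInvMulSum p p (∑ i ∈ X, p i) (∑ i ∈ X, p i) U := by
  rw [altInvMulSum, altInvMulSum, mul_sum, ← sum_add_distrib]
  refine sum_congr rfl fun B hB => ?_
  have hXB : Disjoint X B := hXU.mono_right (mem_powerset.1 hB)
  rw [pairWeight, sum_union hXB, card_union_of_disjoint hXB]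
  simp only [sum_const, nsmul_eq_mul, mul_one, Nat.cast_add]
  ring

lemma residualSum_ite_pairWeight_pos (hC1 : 1 ≤ C) (hCN : C < N) {p : Fin N → ℝ}
    (hp : ∀ i, 0 < p i) {a b : Fin N} (hab : a ≠ b) :
    0 < residualSum N C (fun R => if {a, b} ⊆ R then pairWeight N p R else 0) := by
  have hS : #{a, b} = 2 := card_pair hab
  rw [residualSum_ite_subset hC1 hCN hS]
  refine sum_pos (fun B _ => ?_) (powersetCard_nonempty.2 (by rw [card_compl, hS]; simp; omega))
  have hdisj : Disjoint ({a, b} ∪ B) ({a, b}ᶜ \ B) :=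
    disjoint_union_left.2 ⟨disjoint_compl_right.mono_right sdiff_subset, disjoint_sdiff⟩
  have hX : 0 < ∑ i ∈ {a, b} ∪ B, p i := sum_pos (fun i _ => hp i) ⟨a, by simp⟩
  have hXcard : (0 : ℝ) < #({a, b} ∪ B) := by exact_mod_cast card_pos.2 ⟨a, by simp⟩
  rw [sum_powerset_neg_one_pow_mul_pairWeight p hdisj]
  have hN : (0 : ℝ) < N := by exact_mod_cast (by omega : 0 < N)
  exact add_pos
    (mul_pos hN (altInvMulSum_pos (fun _ _ => zero_le_one) (fun i _ => hp i) hXcard hX))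
    (altInvMulSum_pos (fun i _ => (hp i).le) (fun i _ => hp i) hX hX)

/-- `N θ` times the `θ`-derivative of the summand `S₂/S₁` of `hitRate` along
`p(θ) = u + θ (q - u)`, expressed through `p = p(θ)`. -/
noncomputable def radialDerivTerm (N : ℕ) (p : Fin N → ℝ) (R : Finset (Fin N)) : ℝ :=
  N * (∑ i ∈ R, p i ^ 2) / (∑ i ∈ R, p i) + #R * (∑ i ∈ R, p i ^ 2) / (∑ i ∈ R, p i) ^ 2 - 2

lemma radialDerivTerm_eq (p : Fin N → ℝ) {R : Finset (Fin N)} (hR : ∑ i ∈ R, p i ≠ 0) :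
    radialDerivTerm N p R =
      ∑ a, ∑ b, (p a - p b) ^ 2 / 2 * (if {a, b} ⊆ R then pairWeight N p R else 0) +
        (N * (∑ i ∈ R, p i) / #R - 1) := by
  have hcard : (#R : ℝ) ≠ 0 := by
    rintro h
    rw [Nat.cast_eq_zero, card_eq_zero] at h
    simp [h] at hR
  simp only [mul_ite, mul_zero]
  rw [← sum_sum_eq_sum_sum_ite_pair_subset R (fun a b => (p a - p b) ^ 2 / 2 * pairWeight N p R)]
  simp only [← sum_mul, ← sum_div, sum_sum_sub_sq, radialDerivTerm, pairWeight]
  field_simp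
  ring

theorem residualSum_radialDerivTerm_pos (hC1 : 1 ≤ C) (hCN : C < N) {p : Fin N → ℝ}
    (hp : ∀ i, 0 < p i) (hpsum : ∑ i, p i = 1) {i j : Fin N} (hij : p i ≠ p j) :
    0 < residualSum N C (radialDerivTerm N p) := by
  rw [residualSum_congr fun R hR => radialDerivTerm_eq p (sum_pos (fun i _ => hp i) hR).ne',
    residualSum_add, residualSum_mul_sum_div_card_sub_one hpsum, add_zero, residualSum_sum]
  simp_rw [residualSum_sum, residualSum_const_mul]
  have hterm : ∀ a b, 0 ≤ (p a - p b) ^ 2 / 2 *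
      residualSum N C (fun R => if {a, b} ⊆ R then pairWeight N p R else 0) := fun a b => by
    rcases eq_or_ne a b with rfl | hab
    · simp
    · exact mul_nonneg (by positivity) (residualSum_ite_pairWeight_pos hC1 hCN hp hab).le
  refine sum_pos' (fun a _ => sum_nonneg fun b _ => hterm a b) ⟨i, mem_univ i, ?_⟩
  refine sum_pos' (fun b _ => hterm i b) ⟨j, mem_univ j, ?_⟩
  have hsq : 0 < (p i - p j) ^ 2 / 2 := by have := sub_ne_zero.2 hij; positivity
  exact mul_pos hsq (residualSum_ite_pairWeight_pos hC1 hCN hp (ne_of_apply_ne p hij))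

variable {q : Fin N → ℝ} {θ : ℝ}

lemma radial_pos {i : Fin N} (hq : 0 < q i) (hθ : θ ∈ Set.Ioc 0 1) :
    0 < (N : ℝ)⁻¹ + θ * (q i - (N : ℝ)⁻¹) := by
  have : (N : ℝ)⁻¹ + θ * (q i - (N : ℝ)⁻¹) = (1 - θ) * (N : ℝ)⁻¹ + θ * q i := by ring
  rw [this]
  exact add_pos_of_nonneg_of_pos (mul_nonneg (sub_nonneg.2 hθ.2) (by positivity))
    (mul_pos hθ.1 hq)

lemma radial_sum (hN : N ≠ 0) (hq : ∑ i, q i = 1) (θ : ℝ) :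
    ∑ i, ((N : ℝ)⁻¹ + θ * (q i - (N : ℝ)⁻¹)) = 1 := by
  simp [sum_add_distrib, ← mul_sum, sum_sub_distrib, hq, hN]

lemma radial_ne (hθ : θ ≠ 0) {i j : Fin N} (h : q i ≠ q j) :
    (N : ℝ)⁻¹ + θ * (q i - (N : ℝ)⁻¹) ≠ (N : ℝ)⁻¹ + θ * (q j - (N : ℝ)⁻¹) := by
  intro h'
  exact h (by simpa [hθ] using h')

lemma exists_ne_of_ne_uniform (hq : ∑ i, q i = 1) (hqu : q ≠ fun _ => (N : ℝ)⁻¹) :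
    ∃ i j, q i ≠ q j := by
  by_contra! hconst
  refine hqu (funext fun i => ?_)
  have : (N : ℝ) * q i = 1 := by simpa [← hconst i] using hq
  exact eq_inv_of_mul_eq_one_right this

lemma hasDerivAt_radial_ratio (hN : N ≠ 0) (R : Finset (Fin N)) (hθ : θ ≠ 0)
    (hR : ∑ i ∈ R, ((N : ℝ)⁻¹ + θ * (q i - (N : ℝ)⁻¹)) ≠ 0) :
    HasDerivAt (fun t => (∑ i ∈ R, ((N : ℝ)⁻¹ + t * (q i - (N : ℝ)⁻¹)) ^ 2) /
        ∑ i ∈ R, ((N : ℝ)⁻¹ + t * (q i - (N : ℝ)⁻¹)))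
      ((N * θ)⁻¹ * radialDerivTerm N (fun i => (N : ℝ)⁻¹ + θ * (q i - (N : ℝ)⁻¹)) R) θ := by
  have hline (i : Fin N) : HasDerivAt (fun t => (N : ℝ)⁻¹ + t * (q i - (N : ℝ)⁻¹))
      (q i - (N : ℝ)⁻¹) θ := by
    simpa using ((hasDerivAt_id θ).mul_const (q i - (N : ℝ)⁻¹)).const_add (N : ℝ)⁻¹
  have hnum : HasDerivAt (fun t => ∑ i ∈ R, ((N : ℝ)⁻¹ + t * (q i - (N : ℝ)⁻¹)) ^ 2)
      (∑ i ∈ R, 2 * ((N : ℝ)⁻¹ + θ * (q i - (N : ℝ)⁻¹)) * (q i - (N : ℝ)⁻¹)) θ :=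
    HasDerivAt.fun_sum fun i _ => by simpa using (hline i).fun_pow 2
  refine (hnum.div (HasDerivAt.fun_sum fun i _ => hline i) hR).congr_deriv (Eq.symm ?_)
  set u := (N : ℝ)⁻¹
  set S := ∑ i ∈ R, (u + θ * (q i - u))
  set S₂ := ∑ i ∈ R, (u + θ * (q i - u)) ^ 2
  set D := ∑ i ∈ R, 2 * (u + θ * (q i - u)) * (q i - u)
  set X := ∑ i ∈ R, (q i - u)
  -- `θ (q - u) = p - u` turns the `θ`-derivatives of the sums into sums of `p`
  have hD : θ * D = 2 * S₂ - 2 * u * S := by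
    rw [mul_sum, sum_congr rfl fun i _ => (by ring : θ * (2 * (u + θ * (q i - u)) * (q i - u)) =
      2 * (u + θ * (q i - u)) ^ 2 - 2 * u * (u + θ * (q i - u))), sum_sub_distrib, ← mul_sum,
      ← mul_sum]
  have hX : θ * X = S - #R * u := by
    rw [mul_sum, sum_congr rfl fun i _ => (by ring : θ * (q i - u) = u + θ * (q i - u) - u),
      sum_sub_distrib, sum_const, nsmul_eq_mul]
  have hN' : (N : ℝ) ≠ 0 := Nat.cast_ne_zero.2 hN
  have hu : N * u = 1 := mul_inv_cancel₀ hN'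
  calc (N * θ)⁻¹ * (N * S₂ / S + #R * S₂ / S ^ 2 - 2)
      = (N * θ)⁻¹ * (N * ((θ * D) * S - S₂ * (θ * X)) / S ^ 2) := by
        rw [hD, hX]
        field_simp
        linear_combination (2 * S ^ 2 - #R * S₂) * hu
    _ = (D * S - S₂ * X) / S ^ 2 := by
        field_simp

lemma hasDerivAt_hitRate_radial (hN : N ≠ 0) (hq : ∀ i, 0 < q i) (hθ : θ ∈ Set.Ioc 0 1) :
    HasDerivAt (fun t => hitRate N C fun i => (N : ℝ)⁻¹ + t * (q i - (N : ℝ)⁻¹))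
      ((N * θ)⁻¹ * residualSum N C
        (radialDerivTerm N fun i => (N : ℝ)⁻¹ + θ * (q i - (N : ℝ)⁻¹))) θ := by
  simp only [hitRate_eq_residualSum]
  rw [← residualSum_const_mul]
  exact HasDerivAt.residualSum fun R hR => hasDerivAt_radial_ratio hN R hθ.1.ne'
    (sum_pos (fun i _ => radial_pos (hq i) hθ) hR).ne'

theorem strictMonoOn_hitRate_radial (hC1 : 1 ≤ C) (hCN : C < N) (hq : ∀ i, 0 < q i)
    (hqsum : ∑ i, q i = 1) (hqu : q ≠ fun _ => (N : ℝ)⁻¹) :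
    StrictMonoOn (fun θ => hitRate N C fun i => (N : ℝ)⁻¹ + θ * (q i - (N : ℝ)⁻¹))
      (Set.Ioc 0 1) := by
  have hN : N ≠ 0 := by omega
  obtain ⟨i, j, hij⟩ := exists_ne_of_ne_uniform hqsum hqu
  have hderiv := fun θ (hθ : θ ∈ Set.Ioc (0 : ℝ) 1) => hasDerivAt_hitRate_radial (C := C) hN hq hθ
  refine strictMonoOn_of_deriv_pos (convex_Ioc 0 1)
    (fun θ hθ => (hderiv θ hθ).continuousAt.continuousWithinAt) fun θ hθ => ?_
  rw [interior_Ioc] at hθ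
  rw [(hderiv θ (Set.Ioo_subset_Ioc_self hθ)).deriv]
  have hNθ : 0 < (N * θ : ℝ)⁻¹ := by have := hθ.1; positivity
  exact mul_pos hNθ (residualSum_radialDerivTerm_pos hC1 hCN
    (fun k => radial_pos (hq k) (Set.Ioo_subset_Ioc_self hθ)) (radial_sum hN hqsum θ)
    (radial_ne hθ.1.ne' hij))

end HitRate

theorem radial_stochastic_improvement_general (N : ℕ)
    (q : Fin N → ℝ) (hqpos : ∀ i, 0 < q i) (hqsum : ∑ i, q i = 1)
    (hqu : q ≠ fun _ => (N : ℝ)⁻¹)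
    (θ₁ θ₂ : ℝ) (hθ₁ : 0 < θ₁) (hθ₁₂ : θ₁ < θ₂) (hθ₂ : θ₂ ≤ 1)
    (C : ℕ) (hC1 : 1 ≤ C) (hCN : C < N) :
    hitRate N C (fun i => (N : ℝ)⁻¹ + θ₂ * (q i - (N : ℝ)⁻¹)) >
        hitRate N C (fun i => (N : ℝ)⁻¹ + θ₁ * (q i - (N : ℝ)⁻¹)) ∧
      1 - hitRate N C (fun i => (N : ℝ)⁻¹ + θ₂ * (q i - (N : ℝ)⁻¹)) <
        1 - hitRate N C (fun i => (N : ℝ)⁻¹ + θ₁ * (q i - (N : ℝ)⁻¹)) := by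
  have hlt := HitRate.strictMonoOn_hitRate_radial hC1 hCN hqpos hqsum hqu
    ⟨hθ₁, hθ₁₂.le.trans hθ₂⟩ ⟨hθ₁.trans hθ₁₂, hθ₂⟩ hθ₁₂
  exact ⟨hlt, sub_lt_sub_left hlt 1⟩

/-- Radial stochastic improvement for move-to-front search cost: for a
nonuniform `q ∈ Δ_N°` and `p(θ) = u + θ(q - u)`, if `0 < θ₁ < θ₂ ≤ 1` then
for every capacity `1 ≤ C < N` one has `H_C(p(θ₂)) > H_C(p(θ₁))`,
equivalently `1 - H_C(p(θ₂)) < 1 - H_C(p(θ₁))`; i.e. the search cost under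
`p(θ₂)` is strictly smaller in the usual stochastic order. -/
theorem radial_stochastic_improvement (N : ℕ) (hN : 2 ≤ N)
    (q : Fin N → ℝ) (hqpos : ∀ i, 0 < q i) (hqsum : ∑ i, q i = 1)
    (hqu : q ≠ fun _ => (N : ℝ)⁻¹)
    (θ₁ θ₂ : ℝ) (hθ₁ : 0 < θ₁) (hθ₁₂ : θ₁ < θ₂) (hθ₂ : θ₂ ≤ 1)
    (C : ℕ) (hC1 : 1 ≤ C) (hCN : C < N) :
    hitRate N C (fun i => (N : ℝ)⁻¹ + θ₂ * (q i - (N : ℝ)⁻¹)) >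
        hitRate N C (fun i => (N : ℝ)⁻¹ + θ₁ * (q i - (N : ℝ)⁻¹)) ∧
      1 - hitRate N C (fun i => (N : ℝ)⁻¹ + θ₂ * (q i - (N : ℝ)⁻¹)) <
        1 - hitRate N C (fun i => (N : ℝ)⁻¹ + θ₁ * (q i - (N : ℝ)⁻¹)) :=
  radial_stochastic_improvement_general N q hqpos hqsum hqu θ₁ θ₂ hθ₁ hθ₁₂ hθ₂ C hC1 hCN
end

section
/- Let N ≥ 2 and 1 ≤ C ≤ N. Let A_1,…,A_N be independent random variables with A_j exponentially distributed with rate λ_j > 0, and for each k define π_k(λ) = P(k ∈ S_C), where S_C is the (almost surely well-defined) set of the C indices with smallest values among A_1,…,A_N; equivalently π_k(λ) = P( #{ j ≠ k : A_j < A_k } ≤ C − 1 ). If λ_k ≥ λ_i, then π_k(λ) ≥ π_i(λ). Consequently, (λ_a − λ_b)(π_a(λ) − π_b(λ)) ≥ 0 for all indices a, b. -/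
open Finset MeasureTheory ProbabilityTheory

/-! If `λ_i ≤ λ_k` and `σ` swaps `i` and `k`, the map `x ↦ (λ_{σ j} / λ_j · x_{σ j})_j` preserves
the law of `(A_j)_j`: it exchanges the two coordinates and rescales each to the other's rate. For
nonnegative `x` its value at `k` is `(λ_i/λ_k) x_i ≤ x_i`, its value at `i` is `(λ_k/λ_i) x_k ≥ x_k`,
and the other coordinates are unchanged, so fewer coordinates of the image lie below its `k`-th one
than coordinates of `x` lie below `x_i`. Thus the event "`i` is cached" is almost surely contained
in the preimage of "`k` is cached", which has the same probability. -/

lemma expMeasure_Iic {r : ℝ} (hr : 0 < r) (t : ℝ) :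
    expMeasure r (Set.Iic t) = ENNReal.ofReal (if 0 ≤ t then 1 - Real.exp (-(r * t)) else 0) := by
  have := isProbabilityMeasure_expMeasure hr
  rw [← ofReal_cdf, cdf_expMeasure_eq hr]

lemma ae_pos_expMeasure {r : ℝ} (hr : 0 < r) : ∀ᵐ t ∂expMeasure r, 0 < t := by
  refine measure_mono_null (fun t ht => ?_) ((expMeasure_Iic hr 0).trans (by simp))
  simpa using ht

lemma measurePreserving_const_mul_expMeasure {r c : ℝ} (hr : 0 < r) (hc : 0 < c) :
    MeasurePreserving (c * ·) (expMeasure r) (expMeasure (r / c)) := by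
  have := isProbabilityMeasure_expMeasure hr
  have := isProbabilityMeasure_expMeasure (div_pos hr hc)
  have hm : Measurable (c * · : ℝ → ℝ) := measurable_const_mul c
  refine ⟨hm, Measure.ext_of_Iic _ _ fun t => ?_⟩
  have hpre : (c * ·) ⁻¹' Set.Iic t = Set.Iic (t / c) := by
    ext x; simp [le_div_iff₀ hc, mul_comm]
  rw [Measure.map_apply hm measurableSet_Iic, hpre, expMeasure_Iic hr,
    expMeasure_Iic (div_pos hr hc), show r * (t / c) = r / c * t by ring]
  simp only [le_div_iff₀ hc, zero_mul]

section

variable {ι : Type*}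

noncomputable def permRescale (lam : ι → ℝ) (σ : Equiv.Perm ι) (x : ι → ℝ) : ι → ℝ :=
  fun j => lam (σ j) / lam j * x (σ j)

variable [Fintype ι]

lemma measurePreserving_permRescale {lam : ι → ℝ} (hlam : ∀ j, 0 < lam j) (σ : Equiv.Perm ι) :
    MeasurePreserving (permRescale lam σ)
      (Measure.pi fun j => expMeasure (lam j)) (Measure.pi fun j => expMeasure (lam j)) := by
  have := fun j => isProbabilityMeasure_expMeasure (hlam j)
  have hperm : MeasurePreserving (fun (x : ι → ℝ) j => x (σ j))
      (Measure.pi fun j => expMeasure (lam j)) (Measure.pi fun j => expMeasure (lam (σ j))) :=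
    measurePreserving_arrowCongr' _ _ σ.symm (MeasurableEquiv.refl ℝ) fun j => by
      rw [Equiv.apply_symm_apply]; exact MeasurePreserving.id _
  have hscale : ∀ j, MeasurePreserving (lam (σ j) / lam j * ·)
      (expMeasure (lam (σ j))) (expMeasure (lam j)) := fun j => by
    convert measurePreserving_const_mul_expMeasure (hlam (σ j)) (div_pos (hlam (σ j)) (hlam j))
      using 2
    field_simp [(hlam (σ j)).ne', (hlam j).ne']
  exact (measurePreserving_pi _ _ hscale).comp hperm

variable [DecidableEq ι]

noncomputable def countBelow (x : ι → ℝ) (k : ι) : ℕ := #{j | j ≠ k ∧ x j < x k}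

lemma measurable_countBelow (k : ι) : Measurable fun x : ι → ℝ => countBelow x k := by
  simp only [countBelow, card_filter]
  refine Finset.measurable_sum _ fun j _ => Measurable.ite ?_ measurable_const measurable_const
  exact (MeasurableSet.const (j ≠ k)).inter
    (measurableSet_lt (measurable_pi_apply j) (measurable_pi_apply k))

lemma measurableSet_countBelow_le (k : ι) (m : ℕ) :
    MeasurableSet {x : ι → ℝ | countBelow x k ≤ m} :=
  measurable_countBelow k measurableSet_Iic

lemma countBelow_le_of_perm {x y : ι → ℝ} {i k : ι} (σ : Equiv.Perm ι) (hσ : σ i = k)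
    (h : ∀ j ≠ i, y (σ j) < y k → x j < x i) : countBelow y k ≤ countBelow x i := by
  refine card_le_card_of_injOn σ.symm (fun j hj => ?_) σ.symm.injective.injOn
  simp only [coe_filter, mem_univ, true_and, Set.mem_ofPred_eq] at hj ⊢
  have hji : σ.symm j ≠ i := fun h' => hj.1 (by rw [← hσ, ← h', Equiv.apply_symm_apply])
  exact ⟨hji, h _ hji (by rw [Equiv.apply_symm_apply]; exact hj.2)⟩

lemma countBelow_permRescale_swap_le {lam : ι → ℝ} (hlam : ∀ j, 0 < lam j) {i k : ι}
    (hik : lam i ≤ lam k) {x : ι → ℝ} (hi : 0 ≤ x i) (hk : 0 ≤ x k) :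
    countBelow (permRescale lam (Equiv.swap i k) x) k ≤ countBelow x i := by
  refine countBelow_le_of_perm (Equiv.swap i k) (Equiv.swap_apply_left i k) fun j hji hlt => ?_
  have hslow : lam i / lam k * x i ≤ x i :=
    mul_le_of_le_one_left hi ((div_le_one (hlam k)).2 hik)
  simp only [permRescale, Equiv.swap_apply_self, Equiv.swap_apply_right] at hlt
  by_cases hjk : j = k
  · subst hjk
    have hfast : x j ≤ lam j / lam i * x j :=
      le_mul_of_one_le_left hk ((one_le_div (hlam i)).2 hik)
    simp only [Equiv.swap_apply_right] at hlt
    linarith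
  · rw [Equiv.swap_apply_of_ne_of_ne hji hjk, div_self (hlam j).ne', one_mul] at hlt
    linarith

lemma pi_expMeasure_countBelow_le_mono {lam : ι → ℝ} (hlam : ∀ j, 0 < lam j) {i k : ι}
    (hik : lam i ≤ lam k) (m : ℕ) :
    Measure.pi (fun j => expMeasure (lam j)) {x | countBelow x i ≤ m}
      ≤ Measure.pi (fun j => expMeasure (lam j)) {x | countBelow x k ≤ m} := by
  have := fun j => isProbabilityMeasure_expMeasure (hlam j)
  have hpos : ∀ j, ∀ᵐ x ∂Measure.pi (fun j => expMeasure (lam j)), 0 ≤ x j := fun j =>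
    ((Measure.tendsto_eval_ae_ae (i := j)).eventually (ae_pos_expMeasure (hlam j))).mono
      fun _ h => h.le
  calc _ ≤ Measure.pi (fun j => expMeasure (lam j))
        (permRescale lam (Equiv.swap i k) ⁻¹' {x | countBelow x k ≤ m}) :=
        measure_mono_ae <| ((hpos i).and (hpos k)).mono fun x ⟨hi, hk⟩ hx =>
          (countBelow_permRescale_swap_le hlam hik hi hk).trans hx
    _ = _ := (measurePreserving_permRescale hlam _).measure_preimage
        (measurableSet_countBelow_le k m).nullMeasurableSet

end

theorem occupancy_monotonicity_general
    {Ω : Type*} [MeasureSpace Ω] [IsProbabilityMeasure (ℙ : Measure Ω)]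
    (N C : ℕ)
    (lam : Fin N → ℝ) (hlam : ∀ j, 0 < lam j)
    (A : Fin N → Ω → ℝ) (hA : ∀ j, Measurable (A j))
    (hindep : iIndepFun A ℙ)
    (hlaw : ∀ j, Measure.map (A j) ℙ = expMeasure (lam j))
    (pi : Fin N → ℝ)
    (hpi : ∀ k, pi k =
      (ℙ {ω | (Finset.univ.filter fun j => j ≠ k ∧ A j ω < A k ω).card ≤ C - 1}).toReal) :
    (∀ i k, lam i ≤ lam k → pi i ≤ pi k) ∧
      (∀ a b, 0 ≤ (lam a - lam b) * (pi a - pi b)) := by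
  have := fun j => isProbabilityMeasure_expMeasure (hlam j)
  have hlaw_pi : (ℙ : Measure Ω).map (fun ω j => A j ω) =
      Measure.pi fun j => expMeasure (lam j) := by
    rw [(iIndepFun_iff_map_fun_eq_pi_map fun j => (hA j).aemeasurable).1 hindep]
    simp_rw [hlaw]
  have hpi_pi : ∀ k, pi k =
      (Measure.pi (fun j => expMeasure (lam j)) {x | countBelow x k ≤ C - 1}).toReal := by
    intro k
    rw [hpi k, ← hlaw_pi, Measure.map_apply (measurable_pi_lambda _ hA)
      (measurableSet_countBelow_le k _)]
    rfl
  have hmono : ∀ i k, lam i ≤ lam k → pi i ≤ pi k := fun i k hik => by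
    rw [hpi_pi i, hpi_pi k]
    exact ENNReal.toReal_mono (measure_ne_top _ _) (pi_expMeasure_countBelow_le_mono hlam hik _)
  refine ⟨hmono, fun a b => ?_⟩
  rcases le_total (lam a) (lam b) with h | h
  · exact mul_nonneg_of_nonpos_of_nonpos (sub_nonpos.2 h) (sub_nonpos.2 (hmono a b h))
  · exact mul_nonneg (sub_nonneg.2 h) (sub_nonneg.2 (hmono b a h))

/-- Occupancy monotonicity: if `A_1,…,A_N` are independent exponential
random variables with rates `λ_j > 0` and
`π_k(λ) = P(#{j ≠ k : A_j < A_k} ≤ C - 1)` is the probability that item `k`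
belongs to the stationary LRU cache of capacity `C` (the set of the `C`
indices with smallest ages), then `λ_k ≥ λ_i` implies `π_k(λ) ≥ π_i(λ)`;
consequently `(λ_a - λ_b)(π_a(λ) - π_b(λ)) ≥ 0` for all `a, b`. -/
theorem occupancy_monotonicity
    {Ω : Type*} [MeasureSpace Ω] [IsProbabilityMeasure (ℙ : Measure Ω)]
    (N C : ℕ) (hN : 2 ≤ N) (hC1 : 1 ≤ C) (hCN : C ≤ N)
    (lam : Fin N → ℝ) (hlam : ∀ j, 0 < lam j)
    (A : Fin N → Ω → ℝ) (hA : ∀ j, Measurable (A j))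
    (hindep : iIndepFun A ℙ)
    (hlaw : ∀ j, Measure.map (A j) ℙ = expMeasure (lam j))
    (pi : Fin N → ℝ)
    (hpi : ∀ k, pi k =
      (ℙ {ω | (Finset.univ.filter fun j => j ≠ k ∧ A j ω < A k ω).card ≤ C - 1}).toReal) :
    (∀ i k, lam i ≤ lam k → pi i ≤ pi k) ∧
      (∀ a b, 0 ≤ (lam a - lam b) * (pi a - pi b)) :=
  occupancy_monotonicity_general N C lam hlam A hA hindep hlaw pi hpi
end
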